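/- arXiv:1212.5705 — 10 statements merged into one kernel-verified Lean document; each statement's English description precedes it below -/
import Mathlib

section
/- Let A_n denote the total area between all lattice paths from (0,0) to (n,n) using East and North steps that stay weakly below the line y=x, and the line y=x itself (summed over all such paths). Then A_n = 4^n/2 - (1/4)*binomial(2n+2, n+1). -/
/-!
Encode a path by the set `B` of positions of its North steps, so that its height above the
diagonal after `i` steps is `i - 2 #{j ∈ B | j < i}`, and generalise to ballot prefixes of length
`m = d + 2k` ending at height `d`. Splitting off the last step gives Pascal-type recurrences for
the number of such prefixes and for the sum of their heights; they are solved by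
`C(m,k) - C(m,k-1)` and `(d+1)(4 ∑_{i<k} C(m,i) + (d+k) C(m,k) - (k+3) C(m,k-1)) / 2`.
For `d = 0`, `m = 2n` the partial sum is half of `4^n - C(2n,n)`, and
`C(2n+2,n+1) = 2 C(2n,n) + 2 C(2n,n+1)` turns the second formula into the theorem.
-/

open Finset

namespace LatticePath

def IsBallotPrefix (m d : ℕ) (B : Finset ℕ) : Prop :=
  2 * #B + d = m ∧ ∀ i ≤ m, 2 * #{j ∈ B | j < i} ≤ i

instance (m d : ℕ) : DecidablePred (IsBallotPrefix m d) :=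
  fun _ => inferInstanceAs (Decidable (_ ∧ _))

def ballotPrefixes (m d : ℕ) : Finset (Finset ℕ) :=
  {B ∈ (range m).powerset | IsBallotPrefix m d B}

def height (B : Finset ℕ) (i : ℕ) : ℕ := i - 2 * #{j ∈ B | j < i}

def heightSum (m : ℕ) (B : Finset ℕ) : ℕ := ∑ i ∈ Icc 1 m, height B i

def totalHeightSum (m d : ℕ) : ℕ := ∑ B ∈ ballotPrefixes m d, heightSum m B

lemma filter_lt_insert_of_le {B : Finset ℕ} {m i : ℕ} (hi : i ≤ m) :
    {j ∈ insert m B | j < i} = {j ∈ B | j < i} := by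
  rw [filter_insert, if_neg (by omega)]

lemma filter_lt_eq_self {B : Finset ℕ} {m i : ℕ} (hB : B ⊆ range m) (hi : m ≤ i) :
    {j ∈ B | j < i} = B :=
  filter_true_of_mem fun _ hj => (mem_range.1 (hB hj)).trans_le hi

section LastStep

variable {m d : ℕ} {B : Finset ℕ}

lemma isBallotPrefix_succ_succ_iff (hB : B ⊆ range m) :
    IsBallotPrefix (m + 1) (d + 1) B ↔ IsBallotPrefix m d B := by
  refine ⟨fun ⟨hcard, hle⟩ => ⟨by omega, fun i hi => hle i (by omega)⟩,
    fun ⟨hcard, hle⟩ => ⟨by omega, fun i hi => ?_⟩⟩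
  rcases Nat.lt_or_ge i (m + 1) with hi' | hi'
  · exact hle i (by omega)
  · rw [filter_lt_eq_self hB (by omega)]; omega

lemma not_isBallotPrefix_succ_zero (hB : B ⊆ range m) : ¬ IsBallotPrefix (m + 1) 0 B := by
  rintro ⟨hcard, hle⟩
  have := hle m (by omega)
  rw [filter_lt_eq_self hB le_rfl] at this
  omega

lemma isBallotPrefix_insert_iff (hB : B ⊆ range m) :
    IsBallotPrefix (m + 1) d (insert m B) ↔ IsBallotPrefix m (d + 1) B := by
  have hcard : #(insert m B) = #B + 1 := card_insert_of_notMem fun h => by simpa using hB h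
  refine ⟨fun ⟨hc, hle⟩ => ⟨by omega, fun i hi => ?_⟩,
    fun ⟨hc, hle⟩ => ⟨by omega, fun i hi => ?_⟩⟩
  · rw [← filter_lt_insert_of_le hi]; exact hle i (by omega)
  rcases Nat.lt_or_ge i (m + 1) with hi' | hi'
  · rw [filter_lt_insert_of_le (by omega)]; exact hle i (by omega)
  · rw [filter_lt_eq_self (insert_subset (by simp) (hB.trans (range_subset_range.2 (by omega))))
      hi', hcard]
    omega

variable {β : Type*} [AddCommMonoid β]

lemma sum_ballotPrefixes_succ (w : Finset ℕ → β) :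
    ∑ B ∈ ballotPrefixes (m + 1) d, w B =
      ∑ B ∈ (range m).powerset with IsBallotPrefix (m + 1) d B, w B +
        ∑ B ∈ ballotPrefixes m (d + 1), w (insert m B) := by
  rw [ballotPrefixes, sum_filter, range_add_one, sum_powerset_insert notMem_range_self,
    ballotPrefixes, sum_filter, sum_filter]
  congr 1
  exact sum_congr rfl fun B hB => if_congr (isBallotPrefix_insert_iff (mem_powerset.1 hB)) rfl rfl

lemma sum_ballotPrefixes_succ_zero (w : Finset ℕ → β) :
    ∑ B ∈ ballotPrefixes (m + 1) 0, w B = ∑ B ∈ ballotPrefixes m 1, w (insert m B) := by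
  rw [sum_ballotPrefixes_succ, filter_false_of_mem
    fun B hB => not_isBallotPrefix_succ_zero (mem_powerset.1 hB), sum_empty, zero_add]

lemma sum_ballotPrefixes_succ_succ (w : Finset ℕ → β) :
    ∑ B ∈ ballotPrefixes (m + 1) (d + 1), w B =
      ∑ B ∈ ballotPrefixes m d, w B + ∑ B ∈ ballotPrefixes m (d + 2), w (insert m B) := by
  rw [sum_ballotPrefixes_succ, ballotPrefixes,
    filter_congr fun B hB => isBallotPrefix_succ_succ_iff (mem_powerset.1 hB)]
  rfl

end LastStep

section Heights

variable {m d : ℕ} {B : Finset ℕ}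

lemma mem_ballotPrefixes : B ∈ ballotPrefixes m d ↔ B ⊆ range m ∧ IsBallotPrefix m d B := by
  rw [ballotPrefixes, mem_filter, mem_powerset]

lemma ballotPrefixes_self (d : ℕ) : ballotPrefixes d d = {∅} := by
  ext B
  simp only [mem_ballotPrefixes, IsBallotPrefix, mem_singleton]
  constructor
  · rintro ⟨-, hcard, -⟩
    exact card_eq_zero.1 (by omega)
  · rintro rfl
    simp

lemma height_of_subset {i : ℕ} (hB : B ⊆ range i) : height B i = i - 2 * #B := by
  rw [height, filter_lt_eq_self hB le_rfl]

lemma heightSum_succ (m : ℕ) (B : Finset ℕ) :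
    heightSum (m + 1) B = heightSum m B + height B (m + 1) :=
  sum_Icc_succ_top (by omega) _

lemma heightSum_insert (m : ℕ) (B : Finset ℕ) : heightSum m (insert m B) = heightSum m B :=
  sum_congr rfl fun i hi => by rw [height, height, filter_lt_insert_of_le (mem_Icc.1 hi).2]

lemma two_mul_heightSum_empty (m : ℕ) : 2 * heightSum m ∅ = m * (m + 1) := by
  induction m with
  | zero => rfl
  | succ m ih =>
    rw [heightSum_succ, mul_add, ih, height, filter_empty, card_empty, mul_zero, Nat.sub_zero]
    ring

lemma heightSum_succ_of_mem (hB : B ∈ ballotPrefixes m d) :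
    heightSum (m + 1) B = heightSum m B + (d + 1) := by
  obtain ⟨hsub, hcard, -⟩ := mem_ballotPrefixes.1 hB
  rw [heightSum_succ, height_of_subset (hsub.trans (range_subset_range.2 (by omega)))]
  omega

lemma heightSum_succ_insert (hB : B ∈ ballotPrefixes m (d + 1)) :
    heightSum (m + 1) (insert m B) = heightSum m B + d := by
  obtain ⟨hsub, hcard, -⟩ := mem_ballotPrefixes.1 hB
  have hsub' : insert m B ⊆ range (m + 1) :=
    insert_subset (by simp) (hsub.trans (range_subset_range.2 (by omega)))
  rw [heightSum_succ, heightSum_insert, height_of_subset hsub',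
    card_insert_of_notMem fun h => by simpa using hsub h]
  omega

lemma heightSum_pred_of_mem (hB : B ∈ ballotPrefixes m 0) :
    heightSum (m - 1) B = heightSum m B := by
  obtain ⟨hsub, hcard, -⟩ := mem_ballotPrefixes.1 hB
  cases m with
  | zero => rfl
  | succ m =>
    rw [Nat.add_sub_cancel, heightSum_succ, height_of_subset hsub]
    omega

end Heights

section Recurrences

variable {m d : ℕ}

lemma card_ballotPrefixes_succ_zero : #(ballotPrefixes (m + 1) 0) = #(ballotPrefixes m 1) := by
  simp only [card_eq_sum_ones]
  exact sum_ballotPrefixes_succ_zero _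

lemma card_ballotPrefixes_succ_succ :
    #(ballotPrefixes (m + 1) (d + 1)) = #(ballotPrefixes m d) + #(ballotPrefixes m (d + 2)) := by
  simp only [card_eq_sum_ones]
  exact sum_ballotPrefixes_succ_succ _

lemma totalHeightSum_succ_zero : totalHeightSum (m + 1) 0 = totalHeightSum m 1 := by
  rw [totalHeightSum, sum_ballotPrefixes_succ_zero]
  exact sum_congr rfl fun B hB => heightSum_succ_insert hB

lemma totalHeightSum_succ_succ :
    totalHeightSum (m + 1) (d + 1) = totalHeightSum m d + totalHeightSum m (d + 2) +
      (d + 1) * (#(ballotPrefixes m d) + #(ballotPrefixes m (d + 2))) := by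
  rw [totalHeightSum, sum_ballotPrefixes_succ_succ,
    sum_congr rfl fun B hB => heightSum_succ_of_mem hB,
    sum_congr rfl fun B hB => heightSum_succ_insert hB]
  simp only [sum_add_distrib, sum_const, smul_eq_mul, totalHeightSum]
  ring

end Recurrences

lemma cast_choose_succ_succ (n k : ℕ) :
    ((n + 1).choose (k + 1) : ℤ) = n.choose k + n.choose (k + 1) := by
  exact_mod_cast Nat.choose_succ_succ' n k

lemma succ_mul_cast_choose_succ (n k : ℕ) :
    ((k : ℤ) + 1) * n.choose (k + 1) = ((n : ℤ) - k) * n.choose k := by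
  rcases le_or_gt k n with hk | hk
  · have := Nat.choose_succ_right_eq n k
    rw [← Nat.cast_sub hk]
    exact_mod_cast by linarith
  · rw [Nat.choose_eq_zero_of_lt hk, Nat.choose_eq_zero_of_lt (by omega)]
    simp

lemma cast_sum_range_succ_choose_succ (n j : ℕ) :
    ∑ i ∈ range (j + 1), ((n + 1).choose i : ℤ) =
      2 * ∑ i ∈ range j, (n.choose i : ℤ) + n.choose j := by
  induction j with
  | zero => simp
  | succ j ih => rw [sum_range_succ, ih, sum_range_succ, cast_choose_succ_succ]; ring

/- `m.choose (d + k + 1)` is `m.choose (k - 1)` by symmetry, written so that it also vanishes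
at `k = 0`. -/
theorem card_ballotPrefixes {m d k : ℕ} (hm : m = d + 2 * k) :
    (#(ballotPrefixes m d) : ℤ) = m.choose k - m.choose (d + k + 1) := by
  induction k generalizing m d with
  | zero =>
    subst hm
    simp [ballotPrefixes_self]
  | succ k ihk =>
    induction d generalizing m with
    | zero =>
      obtain rfl : m = (2 * k + 1) + 1 := by omega
      rw [card_ballotPrefixes_succ_zero, ihk (by ring)]
      linear_combination (norm := (push_cast; ring_nf))
        cast_choose_succ_succ (2 * k + 1) (k + 1) - cast_choose_succ_succ (2 * k + 1) k
    | succ d ihd =>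
      obtain ⟨M, rfl⟩ : ∃ M, m = M + 1 := ⟨m - 1, by omega⟩
      rw [card_ballotPrefixes_succ_succ, Nat.cast_add, ihd (by omega), ihk (by omega)]
      linear_combination (norm := (push_cast; ring_nf))
        cast_choose_succ_succ M (d + k + 2) - cast_choose_succ_succ M k

theorem two_mul_totalHeightSum {m d k : ℕ} (hm : m = d + 2 * k) :
    2 * (totalHeightSum m d : ℤ) = (d + 1) * (4 * ∑ i ∈ range k, (m.choose i : ℤ) +
      (d + k) * m.choose k - (k + 3) * m.choose (d + k + 1)) := by
  induction k generalizing m d with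
  | zero =>
    obtain rfl : m = d := hm
    rw [totalHeightSum, ballotPrefixes_self, sum_singleton]
    simp only [range_zero, sum_empty, Nat.choose_zero_right, Nat.choose_succ_self,
      CharP.cast_eq_zero, Nat.cast_one, add_zero, mul_zero, zero_add, mul_one, sub_zero]
    exact_mod_cast (two_mul_heightSum_empty m).trans (mul_comm _ _)
  | succ k ihk =>
    induction d generalizing m with
    | zero =>
      obtain rfl : m = (2 * k + 1) + 1 := by omega
      have hsym : ((2 * k + 1).choose (k + 1) : ℤ) = (2 * k + 1).choose k := by
        exact_mod_cast Nat.choose_symm_half k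
      rw [totalHeightSum_succ_zero, ihk (by ring)]
      linear_combination (norm := (push_cast; ring_nf))
        -4 * cast_sum_range_succ_choose_succ (2 * k + 1) k
        - ((k : ℤ) + 1) * cast_choose_succ_succ (2 * k + 1) k
        + ((k : ℤ) + 4) * cast_choose_succ_succ (2 * k + 1) (k + 1)
        + (3 - (k : ℤ)) * hsym - succ_mul_cast_choose_succ (2 * k + 1) (k + 1)
    | succ d ihd =>
      obtain rfl : m = d + 2 * k + 2 + 1 := by omega
      have hsym : ((d + 2 * k + 2).choose k : ℤ) = (d + 2 * k + 2).choose (d + k + 2) := by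
        exact_mod_cast Nat.choose_symm_of_eq_add (by ring)
      rw [totalHeightSum_succ_succ]
      linear_combination (norm := (push_cast; ring_nf))
        ihd (m := d + 2 * k + 2) (by ring) + ihk (m := d + 2 * k + 2) (d := d + 2) (by ring)
        + 2 * ((d : ℤ) + 1) * card_ballotPrefixes (m := d + 2 * k + 2) (d := d) (k := k + 1)
          (by ring)
        + 2 * ((d : ℤ) + 1) * card_ballotPrefixes (m := d + 2 * k + 2) (d := d + 2) (k := k)
          (by ring)
        + 4 * ((d : ℤ) + 1) * sum_range_succ (fun i => ((d + 2 * k + 2).choose i : ℤ)) k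
        - 4 * ((d : ℤ) + 2) * cast_sum_range_succ_choose_succ (d + 2 * k + 2) k
        - ((d : ℤ) + 2) * ((d : ℤ) + k + 2) * cast_choose_succ_succ (d + 2 * k + 2) k
        + ((d : ℤ) + 2) * ((k : ℤ) + 4) * cast_choose_succ_succ (d + 2 * k + 2) (d + k + 2)
        - succ_mul_cast_choose_succ (d + 2 * k + 2) k
        - succ_mul_cast_choose_succ (d + 2 * k + 2) (d + k + 2)
        + (2 * (d : ℤ) - 2) * hsym

theorem two_mul_totalHeightSum_add_choose (n : ℕ) :
    2 * totalHeightSum (2 * n) 0 + (2 * n + 2).choose (n + 1) = 2 * 4 ^ n := by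
  have hhalf : ∑ i ∈ range (n + 1), ((2 * n + 1).choose i : ℤ) = 4 ^ n := by
    exact_mod_cast Nat.sum_range_choose_halfway n
  have hsym : ((2 * n + 1).choose (n + 1) : ℤ) = (2 * n + 1).choose n := by
    exact_mod_cast Nat.choose_symm_half n
  suffices 2 * (totalHeightSum (2 * n) 0 : ℤ) + (2 * n + 2).choose (n + 1) = 2 * 4 ^ n by
    exact_mod_cast this
  linear_combination (norm := (push_cast; ring_nf))
    two_mul_totalHeightSum (m := 2 * n) (d := 0) (k := n) (by ring)
    - 2 * cast_sum_range_succ_choose_succ (2 * n) n + 2 * hhalf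
    + cast_choose_succ_succ (2 * n + 1) n - hsym + 2 * cast_choose_succ_succ (2 * n) n
    - succ_mul_cast_choose_succ (2 * n) n

end LatticePath

/-- The total area `A n` between all lattice paths from `(0,0)` to `(n,n)`
(East/North steps, encoded by the set `B` of positions of North steps among the `2n` steps)
that stay weakly below the diagonal `y = x`, and the diagonal itself, satisfies
`4 * A n = 2 * 4^n - (2n+2).choose (n+1)`.  Here twice the area between a single path and
the diagonal equals `∑_{i=1}^{2n-1} (i - 2 * #(North steps among the first i steps))`. -/
theorem stmt0 (n : ℕ) :
    2 * (∑ B ∈ (Finset.range (2 * n)).powerset.filter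
          (fun B => B.card = n ∧ ∀ i ≤ 2 * n, 2 * (B.filter (· < i)).card ≤ i),
        ∑ i ∈ Finset.Icc 1 (2 * n - 1), (i - 2 * (B.filter (· < i)).card))
      + Nat.choose (2 * n + 2) (n + 1) = 2 * 4 ^ n := by
  rw [show (range (2 * n)).powerset.filter _ = LatticePath.ballotPrefixes (2 * n) 0 from
    filter_congr fun B _ => and_congr_left' (by omega)]
  change 2 * ∑ B ∈ _, LatticePath.heightSum (2 * n - 1) B + _ = _
  rw [sum_congr rfl fun B hB => LatticePath.heightSum_pred_of_mem hB]
  exact LatticePath.two_mul_totalHeightSum_add_choose n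
end

section
/- The sequence A_n defined by A_0 = 0 and A_{n+1} = 2·Σ_{k=0}^{n} A_k·C_{n-k} + (1/2)·Σ_{k=0}^{n} C_k·C_{n-k} + Σ_{k=0}^{n} k·C_k·C_{n-k} (where C_k is the k-th Catalan number) satisfies A_n = 4^n/2 - (1/4)·binomial(2n+2, n+1) for all n ≥ 0. -/
/-!
Writing `B m` for the central binomial coefficient, the closed form is
`4 ^ n / 2 - B (n + 1) / 4`, and it suffices to check that it satisfies the recurrence.
Convolving with the Catalan numbers, `∑ C k C (n - k) = C (n + 1)` and, by the symmetry
`k ↔ n - k`, `∑ k C k C (n - k) = n C (n + 1) / 2`; since `B k = (k + 1) C k` this gives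
`∑ B k C (n - k) = B (n + 1) / 2`. Finally `B (m + 1) = 4 B m - 2 C m` shows by induction that
`∑ 4 ^ k C (n - k) = (4 ^ (n + 1) - B (n + 1)) / 2`.
-/

open Finset

lemma sum_range_catalan_mul_catalan (n : ℕ) :
    ∑ k ∈ range (n + 1), (catalan k : ℚ) * catalan (n - k) = catalan (n + 1) := by
  rw [catalan_succ, ← Fin.sum_univ_eq_sum_range (fun k => (catalan k : ℚ) * catalan (n - k))]
  push_cast
  rfl

lemma sum_range_mul_catalan_mul_catalan (n : ℕ) :
    ∑ k ∈ range (n + 1), (k : ℚ) * catalan k * catalan (n - k) = n / 2 * catalan (n + 1) := by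
  set S := ∑ k ∈ range (n + 1), (k : ℚ) * catalan k * catalan (n - k)
  have reflect :
      S = ∑ k ∈ range (n + 1), ((n - k : ℕ) : ℚ) * catalan (n - k) * catalan k := by
    rw [← sum_range_reflect]
    refine sum_congr rfl fun k hk => ?_
    rw [Nat.add_sub_cancel, Nat.sub_sub_self (mem_range_succ_iff.mp hk)]
  have double : 2 * S = n * catalan (n + 1) := by
    rw [two_mul]
    nth_rw 2 [reflect]
    rw [← sum_add_distrib, ← sum_range_catalan_mul_catalan, mul_sum]
    refine sum_congr rfl fun k hk => ?_
    rw [Nat.cast_sub (mem_range_succ_iff.mp hk)]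
    ring
  linarith

lemma succ_mul_catalan_eq_centralBinom_cast (n : ℕ) :
    ((n : ℚ) + 1) * catalan n = Nat.centralBinom n := by
  exact_mod_cast succ_mul_catalan_eq_centralBinom n

lemma sum_range_centralBinom_mul_catalan (n : ℕ) :
    ∑ k ∈ range (n + 1), (Nat.centralBinom k : ℚ) * catalan (n - k) =
      Nat.centralBinom (n + 1) / 2 := by
  simp only [← succ_mul_catalan_eq_centralBinom_cast, add_mul, one_mul, sum_add_distrib,
    sum_range_mul_catalan_mul_catalan, sum_range_catalan_mul_catalan]
  push_cast
  ring

lemma sum_range_centralBinom_succ_mul_catalan (n : ℕ) :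
    ∑ k ∈ range (n + 1), (Nat.centralBinom (k + 1) : ℚ) * catalan (n - k) =
      Nat.centralBinom (n + 2) / 2 - catalan (n + 1) := by
  have h := sum_range_centralBinom_mul_catalan (n + 1)
  rw [sum_range_succ'] at h
  simp only [Nat.add_sub_add_right, Nat.centralBinom_zero, Nat.sub_zero] at h
  push_cast at h
  linarith

lemma centralBinom_succ_eq_four_mul_sub (n : ℕ) :
    (Nat.centralBinom (n + 1) : ℚ) = 4 * Nat.centralBinom n - 2 * catalan n := by
  have step :
      ((n : ℚ) + 1) * Nat.centralBinom (n + 1) = 2 * (2 * n + 1) * Nat.centralBinom n := by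
    exact_mod_cast Nat.succ_mul_centralBinom_succ n
  apply mul_left_cancel₀ (by positivity : (n : ℚ) + 1 ≠ 0)
  rw [step, ← succ_mul_catalan_eq_centralBinom_cast]
  ring

lemma sum_range_four_pow_mul_catalan (n : ℕ) :
    ∑ k ∈ range (n + 1), (4 : ℚ) ^ k * catalan (n - k) =
      (4 ^ (n + 1) - Nat.centralBinom (n + 1)) / 2 := by
  induction n with
  | zero => norm_num [Nat.centralBinom]
  | succ n ih =>
    rw [sum_range_succ',
      sum_congr rfl fun k _ => by rw [Nat.add_sub_add_right, pow_succ', mul_assoc],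
      ← mul_sum, ih, centralBinom_succ_eq_four_mul_sub (n + 1)]
    simp only [pow_zero, one_mul, Nat.sub_zero]
    ring

lemma closedForm_satisfies_recurrence (n : ℕ) :
    (4 : ℚ) ^ (n + 1) / 2 - 1 / 4 * Nat.centralBinom (n + 2) =
      2 * ∑ k ∈ range (n + 1), (4 ^ k / 2 - 1 / 4 * (Nat.centralBinom (k + 1) : ℚ)) *
          catalan (n - k)
      + 1 / 2 * ∑ k ∈ range (n + 1), (catalan k : ℚ) * catalan (n - k)
      + ∑ k ∈ range (n + 1), (k : ℚ) * catalan k * catalan (n - k) := by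
  have split : ∑ k ∈ range (n + 1), (4 ^ k / 2 - 1 / 4 * (Nat.centralBinom (k + 1) : ℚ)) *
        catalan (n - k) = 1 / 2 * ∑ k ∈ range (n + 1), (4 : ℚ) ^ k * catalan (n - k) -
        1 / 4 * ∑ k ∈ range (n + 1), (Nat.centralBinom (k + 1) : ℚ) * catalan (n - k) := by
    rw [mul_sum, mul_sum, ← sum_sub_distrib]
    exact sum_congr rfl fun k _ => by ring
  rw [split, sum_range_four_pow_mul_catalan, sum_range_centralBinom_succ_mul_catalan,
    sum_range_catalan_mul_catalan, sum_range_mul_catalan_mul_catalan,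
    ← succ_mul_catalan_eq_centralBinom_cast (n + 1)]
  push_cast
  ring

/-- the sequence `A` defined by `A 0 = 0` and the recurrence
`A (n+1) = 2 ∑ A k C (n-k) + (1/2) ∑ C k C (n-k) + ∑ k C k C (n-k)`
(where `C` is the Catalan number sequence) satisfies
`A n = 4^n / 2 - (1/4) * (2n+2).choose (n+1)`. -/
theorem stmt1 (A : ℕ → ℚ) (h0 : A 0 = 0)
    (hrec : ∀ n : ℕ, A (n + 1) =
        2 * ∑ k ∈ Finset.range (n + 1), A k * (catalan (n - k) : ℚ)
      + (1 / 2) * ∑ k ∈ Finset.range (n + 1), (catalan k : ℚ) * (catalan (n - k) : ℚ)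
      + ∑ k ∈ Finset.range (n + 1), (k : ℚ) * (catalan k : ℚ) * (catalan (n - k) : ℚ)) :
    ∀ n : ℕ, A n = 4 ^ n / 2 - (1 / 4) * (Nat.choose (2 * n + 2) (n + 1) : ℚ) := by
  suffices h : ∀ n, A n = 4 ^ n / 2 - 1 / 4 * (Nat.centralBinom (n + 1) : ℚ) by
    intro n
    rw [h n, Nat.centralBinom, Nat.mul_add_one]
  intro n
  induction n using Nat.strong_induction_on with
  | _ n ih =>
    rcases n with _ | n
    · norm_num [h0, Nat.centralBinom]
    · rw [hrec n, sum_congr rfl fun k hk => by rw [ih k (mem_range.mp hk)]]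
      exact (closedForm_satisfies_recurrence n).symm
end

section
/- Let a(n) denote the total area below all lattice paths from (0,0) to (n,n) (using East and North steps) that stay weakly below y = x, where the area below a path P is the area of the region between P and the x-axis within the square [0,n]×[0,n] lying below the path. Then a(n) = (n²/2)·C_n - (4^n/2 - (1/4)·binomial(2n+2, n+1)), where C_n = binomial(2n,n)/(n+1) is the n-th Catalan number. -/
/-!
Classify the ballot paths with `m + 1` steps and `k + 1` North steps by their last step. If it is
East, removing it leaves a ballot path with `m` steps and `k + 1` North steps, and the last column
contributes `k + 1` to the area; if it is North (possible only when `2 (k + 1) ≤ m + 1`), removing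
it leaves a ballot path with `m` steps and `k` North steps and the same area. Solving these
recurrences by induction on `m` gives the ballot numbers `(m + 1 - 2k) / (m + 1 - k) · C(m, k)`
for the number of paths and a closed form for the total area in terms of `C(m, k)` and the partial
row sum `∑_{j ≤ k} C(m, j)`. For `m = 2n`, `k = n` the symmetry of the row gives
`2 ∑_{j ≤ n} C(2n, j) = 4ⁿ + C(2n, n)`, and `(n + 1) C(2n + 2, n + 1) = 2 (2n + 1) C(2n, n)`
turns the result into the stated form.
-/

open Finset

/-- `B` is the set of positions of the North steps of an East/North path with `m` steps, `k` of
them North, and the path never rises above the diagonal. -/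
def IsBallot (m k : ℕ) (B : Finset ℕ) : Prop :=
  #B = k ∧ ∀ i ≤ m, 2 * #(B.filter (· < i)) ≤ i

instance (m k : ℕ) : DecidablePred (IsBallot m k) := fun _ => instDecidableAnd

def ballotSets (m k : ℕ) : Finset (Finset ℕ) :=
  (range m).powerset.filter (IsBallot m k)

def areaBelow (m : ℕ) (B : Finset ℕ) : ℕ :=
  ∑ i ∈ range m \ B, #(B.filter (· < i))

def ballotCount (m k : ℕ) : ℕ := #(ballotSets m k)

def ballotArea (m k : ℕ) : ℕ := ∑ B ∈ ballotSets m k, areaBelow m B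

section BallotSets

variable {m k : ℕ} {B : Finset ℕ}

lemma filter_lt_eq_self (hB : B ⊆ range m) {i : ℕ} (hi : m ≤ i) : B.filter (· < i) = B :=
  filter_true_of_mem fun _ hx => (mem_range.1 (hB hx)).trans_le hi

lemma filter_lt_insert_eq {i : ℕ} (hi : i ≤ m) :
    (insert m B).filter (· < i) = B.filter (· < i) := by
  rw [filter_insert, if_neg (by omega)]

lemma notMem_of_subset_range (hB : B ⊆ range m) : m ∉ B :=
  fun hm => notMem_range_self (hB hm)

lemma isBallot_succ_iff (hB : B ⊆ range m) : IsBallot (m + 1) k B ↔ IsBallot m k B := by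
  refine and_congr_right fun hcard => ⟨fun h i hi => h i (by omega), fun h i hi => ?_⟩
  obtain hi | rfl := hi.lt_or_eq
  · exact h i (by omega)
  · have := h m le_rfl
    rw [filter_lt_eq_self hB le_rfl] at this
    rw [filter_lt_eq_self hB (Nat.le_succ m)]
    omega

lemma isBallot_succ_insert_iff (hB : B ⊆ range m) :
    IsBallot (m + 1) (k + 1) (insert m B) ↔ 2 * (k + 1) ≤ m + 1 ∧ IsBallot m k B := by
  have hcard : #(insert m B) = #B + 1 := card_insert_of_notMem (notMem_of_subset_range hB)
  have hsub : insert m B ⊆ range (m + 1) :=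
    insert_subset (self_mem_range_succ m) (hB.trans (range_subset_range.2 m.le_succ))
  have htop : (insert m B).filter (· < m + 1) = insert m B := filter_lt_eq_self hsub le_rfl
  constructor
  · rintro ⟨hk, h⟩
    have hmk := h (m + 1) le_rfl
    rw [htop, hk] at hmk
    refine ⟨hmk, by omega, fun i hi => ?_⟩
    rw [← filter_lt_insert_eq hi]
    exact h i (by omega)
  · rintro ⟨hmk, hk, h⟩
    refine ⟨by omega, fun i hi => ?_⟩
    obtain hi | rfl := hi.lt_or_eq
    · rw [filter_lt_insert_eq (Nat.lt_succ_iff.1 hi)]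
      exact h i (Nat.lt_succ_iff.1 hi)
    · rwa [htop, hcard, hk]

lemma ballotSets_eq_empty (h : m < 2 * k) : ballotSets m k = ∅ := by
  refine filter_false_of_mem fun B hB ⟨hk, hB'⟩ => ?_
  have := hB' m le_rfl
  rw [filter_lt_eq_self (mem_powerset.1 hB) le_rfl, hk] at this
  omega

lemma sum_ballotSets_succ_succ {M : Type*} [AddCommMonoid M] (f : Finset ℕ → M) :
    ∑ B ∈ ballotSets (m + 1) (k + 1), f B = ∑ B ∈ ballotSets m (k + 1), f B +
      if 2 * (k + 1) ≤ m + 1 then ∑ B ∈ ballotSets m k, f (insert m B) else 0 := by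
  simp only [ballotSets, sum_filter, range_add_one, sum_powerset_insert notMem_range_self]
  congr 1
  · refine sum_congr rfl fun B hB => ?_
    simp only [isBallot_succ_iff (mem_powerset.1 hB)]
  · split_ifs with h
    · refine sum_congr rfl fun B hB => ?_
      simp only [isBallot_succ_insert_iff (mem_powerset.1 hB), h, true_and]
    · refine sum_eq_zero fun B hB => ?_
      simp only [isBallot_succ_insert_iff (mem_powerset.1 hB), h, false_and, if_false]

lemma areaBelow_succ (hB : B ⊆ range m) : areaBelow (m + 1) B = areaBelow m B + #B := by
  rw [areaBelow, areaBelow, range_add_one, insert_sdiff_of_notMem _ (notMem_of_subset_range hB),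
    sum_insert (by simp), filter_lt_eq_self hB le_rfl, add_comm]

lemma areaBelow_succ_insert : areaBelow (m + 1) (insert m B) = areaBelow m B := by
  rw [areaBelow, areaBelow, range_add_one, insert_sdiff_insert]
  refine sum_congr (sdiff_insert_of_notMem notMem_range_self _) fun i hi => ?_
  exact congrArg card (filter_lt_insert_eq (mem_range.1 (mem_sdiff.1 hi).1).le)

end BallotSets

lemma ballotSets_zero (m : ℕ) : ballotSets m 0 = {∅} := by
  ext B
  simp only [ballotSets, IsBallot, mem_filter, mem_powerset, mem_singleton, card_eq_zero]
  constructor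
  · exact fun h => h.2.1
  · rintro rfl
    simp

lemma ballotCount_succ_succ (m k : ℕ) : ballotCount (m + 1) (k + 1) =
    ballotCount m (k + 1) + if 2 * (k + 1) ≤ m + 1 then ballotCount m k else 0 := by
  simpa only [ballotCount, card_eq_sum_ones] using sum_ballotSets_succ_succ (fun _ => 1)

lemma ballotArea_succ_succ (m k : ℕ) : ballotArea (m + 1) (k + 1) =
    ballotArea m (k + 1) + (k + 1) * ballotCount m (k + 1) +
      if 2 * (k + 1) ≤ m + 1 then ballotArea m k else 0 := by
  have hsucc : ∑ B ∈ ballotSets m (k + 1), areaBelow (m + 1) B =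
      ballotArea m (k + 1) + (k + 1) * ballotCount m (k + 1) := by
    rw [ballotArea, ballotCount, card_eq_sum_ones, mul_sum, mul_one, ← sum_add_distrib]
    refine sum_congr rfl fun B hB => ?_
    obtain ⟨hBm, hcard, -⟩ := mem_filter.1 hB
    rw [areaBelow_succ (mem_powerset.1 hBm), hcard]
  rw [ballotArea, sum_ballotSets_succ_succ, hsucc]
  simp only [areaBelow_succ_insert, ballotArea]

lemma ballotCount_zero (m : ℕ) : ballotCount m 0 = 1 := by simp [ballotCount, ballotSets_zero]

lemma ballotArea_zero (m : ℕ) : ballotArea m 0 = 0 := by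
  simp [ballotArea, ballotSets_zero, areaBelow]

lemma ballotCount_eq_zero {m k : ℕ} (h : m < 2 * k) : ballotCount m k = 0 := by
  simp [ballotCount, ballotSets_eq_empty h]

lemma ballotArea_eq_zero {m k : ℕ} (h : m < 2 * k) : ballotArea m k = 0 := by
  simp [ballotArea, ballotSets_eq_empty h]

lemma cast_choose_succ (m k : ℕ) :
    (m.choose (k + 1) : ℚ) = m.choose k * (m - k) / (k + 1) := by
  rw [eq_div_iff (by positivity)]
  rcases le_or_gt k m with hkm | hmk
  · rw [← Nat.cast_sub hkm]
    exact_mod_cast Nat.choose_succ_right_eq m k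
  · simp [Nat.choose_eq_zero_of_lt hmk, Nat.choose_eq_zero_of_lt (hmk.trans k.lt_succ_self)]

lemma cast_choose_succ_succ (m k : ℕ) :
    ((m + 1).choose (k + 1) : ℚ) = m.choose k + m.choose (k + 1) := by
  exact_mod_cast Nat.choose_succ_succ m k

lemma sum_range_choose_succ (m k : ℕ) : ∑ j ∈ range (k + 1), (m + 1).choose j =
    ∑ j ∈ range (k + 1), m.choose j + ∑ j ∈ range k, m.choose j := by
  induction k with
  | zero => simp
  | succ k ih =>
    rw [sum_range_succ, ih, sum_range_succ _ (k + 1), sum_range_succ _ k, Nat.choose_succ_succ]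
    ring

lemma two_mul_sum_range_choose_two_mul (n : ℕ) :
    2 * ∑ j ∈ range (n + 1), (2 * n).choose j = 4 ^ n + (2 * n).choose n := by
  have h := Nat.sum_range_choose_halfway n
  have hlast := sum_range_succ (fun j => (2 * n).choose j) n
  rw [sum_range_choose_succ] at h
  omega

theorem ballotCount_eq {m k : ℕ} (hk : 2 * k ≤ m + 1) :
    (ballotCount m k : ℚ) = (m + 1 - 2 * k) / (m + 1 - k) * m.choose k := by
  induction m generalizing k with
  | zero =>
    obtain rfl : k = 0 := by omega
    simp [ballotCount_zero]
  | succ m ih =>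
    cases k with
    | zero =>
      rw [ballotCount_zero]
      simp only [Nat.cast_zero, mul_zero, sub_zero, Nat.choose_zero_right, Nat.cast_one, mul_one]
      exact (div_self (by positivity)).symm
    | succ k =>
      by_cases hb : 2 * (k + 1) ≤ m + 1
      · have hkm : (k : ℚ) < m := by exact_mod_cast (show k < m by omega)
        rw [ballotCount_succ_succ, if_pos hb]
        push_cast
        rw [ih hb, ih (by omega), cast_choose_succ_succ, cast_choose_succ]
        push_cast
        rw [show (m : ℚ) + 1 - (k + 1) = m - k by ring,
          show (m : ℚ) + 1 + 1 - (k + 1) = m + 1 - k by ring]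
        have : (m : ℚ) - k ≠ 0 := by linarith
        have : (m : ℚ) + 1 - k ≠ 0 := by linarith
        field_simp
        ring
      · obtain rfl : m = 2 * k := by omega
        rw [ballotCount_eq_zero (by omega)]
        push_cast
        ring

theorem ballotArea_eq {m k : ℕ} (hk : 2 * k ≤ m + 1) :
    (ballotArea m k : ℚ) = (1 + m + m * k / 2 - 3 * k / 2 - k ^ 2) * m.choose k
      + (2 * k - m - 1) * ∑ j ∈ range (k + 1), (m.choose j : ℚ) := by
  induction m generalizing k with
  | zero =>
    obtain rfl : k = 0 := by omega
    simp [ballotArea_zero]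
  | succ m ih =>
    cases k with
    | zero =>
      simp only [ballotArea_zero, zero_add, sum_range_one, Nat.choose_zero_right]
      push_cast
      ring
    | succ k =>
      by_cases hb : 2 * (k + 1) ≤ m + 1
      · have hkm : (k : ℚ) < m := by exact_mod_cast (show k < m by omega)
        rw [ballotArea_succ_succ, if_pos hb]
        push_cast
        have hrow : ∑ j ∈ range (k + 2), ((m + 1).choose j : ℚ) = ∑ j ∈ range (k + 2),
            (m.choose j : ℚ) + ∑ j ∈ range (k + 1), (m.choose j : ℚ) := by
          exact_mod_cast sum_range_choose_succ m (k + 1)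
        rw [ih hb, ih (by omega), ballotCount_eq hb, hrow, sum_range_succ _ (k + 1),
          cast_choose_succ_succ, cast_choose_succ]
        push_cast
        rw [show (m : ℚ) + 1 - (k + 1) = m - k by ring]
        have : (m : ℚ) - k ≠ 0 := by linarith
        have : (m : ℚ) + 1 - k ≠ 0 := by linarith
        field_simp
        ring
      · obtain rfl : m = 2 * k := by omega
        rw [ballotArea_eq_zero (by omega)]
        push_cast
        ring

/-- Let `a n` be the total area below all lattice paths from `(0,0)` to `(n,n)`
staying weakly below `y = x` (paths encoded by the set `B` of positions of North steps;
the area below a path is `∑_{i ∉ B} #(North steps among the first i steps)`).  Then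
`a n = (n²/2)·C_n - (4^n/2 - (1/4)·(2n+2).choose (n+1))`, where `C_n = (2n).choose n / (n+1)`. -/
theorem stmt2 (n : ℕ) :
    ((∑ B ∈ (Finset.range (2 * n)).powerset.filter
          (fun B => B.card = n ∧ ∀ i ≤ 2 * n, 2 * (B.filter (· < i)).card ≤ i),
        ∑ i ∈ Finset.range (2 * n) \ B, (B.filter (· < i)).card : ℕ) : ℚ)
      = (n : ℚ) ^ 2 / 2 * ((Nat.choose (2 * n) n : ℚ) / (n + 1))
        - (4 ^ n / 2 - (1 / 4) * (Nat.choose (2 * n + 2) (n + 1) : ℚ)) := by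
  change (ballotArea (2 * n) n : ℚ) = _
  have hrow : 2 * ∑ j ∈ range (n + 1), ((2 * n).choose j : ℚ) = 4 ^ n + (2 * n).choose n := by
    exact_mod_cast two_mul_sum_range_choose_two_mul n
  have hcentral :
      ((n : ℚ) + 1) * (2 * n + 2).choose (n + 1) = 2 * (2 * n + 1) * (2 * n).choose n := by
    exact_mod_cast Nat.succ_mul_centralBinom_succ n
  rw [ballotArea_eq (by omega)]
  push_cast
  field_simp
  linear_combination (-4 * (n + 1 : ℚ)) * hrow - 2 * hcentral
end

section
/- The partial transversals of a finite set system A = (A_j : j ∈ J) of subsets of a finite set S form the independent sets of a matroid on S. -/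
/-!
By Hall's theorem, `I` is a partial transversal iff every `C ⊆ I` meets at least `#C` of the
sets. Suppose `U`, `V` are partial transversals with `#V < #U` and no `x ∈ U \ V` extends `V`.
Then every such `x` is blocked by a *tight* set `C ⊆ V` (one meeting exactly `#C` of the sets)
that meets every set containing `x`. By submodularity of the neighborhood size, tight subsets of
`V` are closed under union, so a single tight `W ⊆ V` blocks all of `U \ V`. Hall's condition
for `U` applied to `(U \ V) ∪ (U ∩ W)` then gives `#(U \ V) ≤ #(V \ U)`, i.e. `#U ≤ #V`.
-/

open Finset

namespace SetSystem

variable {α J : Type*}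

def IsPartialTransversal (A : J → Finset α) (I : Finset α) : Prop :=
  ∃ f : I → J, Function.Injective f ∧ ∀ x : I, (x : α) ∈ A (f x)

lemma isPartialTransversal_empty {A : J → Finset α} : IsPartialTransversal A ∅ :=
  ⟨isEmptyElim, Function.injective_of_subsingleton _, isEmptyElim⟩

variable [DecidableEq α] [Fintype J] {A : J → Finset α} {C D I U V : Finset α}

def neighbors (A : J → Finset α) (C : Finset α) : Finset J := {j | ∃ x ∈ C, x ∈ A j}

def IsTight (A : J → Finset α) (C : Finset α) : Prop := #(neighbors A C) = #C

@[simp]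
lemma mem_neighbors {j : J} : j ∈ neighbors A C ↔ ∃ x ∈ C, x ∈ A j := by
  simp [neighbors]

@[simp]
lemma neighbors_empty : neighbors A ∅ = ∅ := by
  ext
  simp

lemma neighbors_mono (h : C ⊆ D) : neighbors A C ⊆ neighbors A D := by
  intro j
  simp only [mem_neighbors]
  exact fun ⟨x, hx, hxj⟩ => ⟨x, h hx, hxj⟩

lemma neighbors_union [DecidableEq J] :
    neighbors A (C ∪ D) = neighbors A C ∪ neighbors A D := by
  ext j
  simp only [mem_neighbors, mem_union]
  grind

lemma card_neighbors_union_add_card_neighbors_inter_le :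
    #(neighbors A (C ∪ D)) + #(neighbors A (C ∩ D)) ≤
      #(neighbors A C) + #(neighbors A D) := by
  classical
  calc #(neighbors A (C ∪ D)) + #(neighbors A (C ∩ D))
      ≤ #(neighbors A C ∪ neighbors A D) + #(neighbors A C ∩ neighbors A D) := by
        rw [neighbors_union]
        gcongr
        exact subset_inter (neighbors_mono inter_subset_left) (neighbors_mono inter_subset_right)
    _ = #(neighbors A C) + #(neighbors A D) := card_union_add_card_inter _ _

lemma isPartialTransversal_iff_forall_card_le :
    IsPartialTransversal A I ↔ ∀ C ⊆ I, #C ≤ #(neighbors A C) := by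
  have hall := Fintype.all_card_le_filter_rel_iff_exists_injective
    (fun (x : I) (j : J) => (x : α) ∈ A j)
  have hmap : ∀ s : Finset I, neighbors A (s.map (Function.Embedding.subtype _)) =
      ({j | ∃ x ∈ s, (x : α) ∈ A j} : Finset J) := fun s => by ext; simp
  rw [IsPartialTransversal, ← hall]
  constructor
  · intro h C hC
    have hCmap : (C.subtype (· ∈ I)).map (Function.Embedding.subtype _) = C :=
      subtype_map_of_mem fun _ hx => hC hx
    have := h (C.subtype (· ∈ I))
    rwa [← hmap, hCmap, ← card_map (Function.Embedding.subtype _), hCmap] at this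
  · intro h s
    rw [← hmap, ← card_map (Function.Embedding.subtype _)]
    exact h _ fun _ hx => by obtain ⟨x, -, rfl⟩ := mem_map.1 hx; exact x.2

namespace IsPartialTransversal

lemma card_le_card_neighbors (hI : IsPartialTransversal A I) (hC : C ⊆ I) :
    #C ≤ #(neighbors A C) :=
  isPartialTransversal_iff_forall_card_le.1 hI C hC

lemma subset (hU : IsPartialTransversal A U) (hVU : V ⊆ U) : IsPartialTransversal A V :=
  isPartialTransversal_iff_forall_card_le.2 fun _ hC => hU.card_le_card_neighbors (hC.trans hVU)

lemma isTight_union (hV : IsPartialTransversal A V) (hC : C ⊆ V) (hD : D ⊆ V)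
    (hCt : IsTight A C) (hDt : IsTight A D) : IsTight A (C ∪ D) := by
  have hunion := hV.card_le_card_neighbors (union_subset hC hD)
  have hinter := hV.card_le_card_neighbors ((inter_subset_left (s₂ := D)).trans hC)
  have := card_union_add_card_inter C D
  have := card_neighbors_union_add_card_neighbors_inter_le (A := A) (C := C) (D := D)
  unfold IsTight at *
  omega

lemma exists_greatest_isTight_subset (hV : IsPartialTransversal A V) :
    ∃ W ⊆ V, IsTight A W ∧ ∀ C ⊆ V, IsTight A C → C ⊆ W := by
  classical
  obtain ⟨W, hW, hWmax⟩ := exists_max_image {C ∈ V.powerset | IsTight A C} card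
    ⟨∅, mem_filter.2 ⟨empty_mem_powerset V, by simp [IsTight]⟩⟩
  simp only [mem_filter, mem_powerset, and_imp] at hW hWmax
  refine ⟨W, hW.1, hW.2, fun C hCV hCt => ?_⟩
  have hCW := hWmax _ (union_subset hCV hW.1) (hV.isTight_union hCV hW.1 hCt hW.2)
  calc C ⊆ C ∪ W := subset_union_left
    _ = W := (eq_of_subset_of_card_le subset_union_right hCW).symm

lemma exists_isTight_of_not_isPartialTransversal_insert (hV : IsPartialTransversal A V) {x : α}
    (hx : ¬IsPartialTransversal A (insert x V)) :
    ∃ C ⊆ V, IsTight A C ∧ ∀ j, x ∈ A j → j ∈ neighbors A C := by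
  simp only [isPartialTransversal_iff_forall_card_le, not_forall, not_le] at hx
  obtain ⟨C, hCsub, hCdeficient⟩ := hx
  have hxC : x ∈ C := by
    by_contra hxC
    exact (hV.card_le_card_neighbors ((subset_insert_iff_of_notMem hxC).1 hCsub)).not_gt hCdeficient
  have hWV : C.erase x ⊆ V := by simpa [← subset_insert_iff] using hCsub
  have hWC : neighbors A (C.erase x) ⊆ neighbors A C := neighbors_mono (erase_subset x C)
  have hWcard := hV.card_le_card_neighbors hWV
  have hcard : #(C.erase x) + 1 = #C := card_erase_add_one hxC
  -- `#N(C) < #C = #(C.erase x) + 1 ≤ #N(C.erase x) + 1`, so the inclusion is an equality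
  have hWeq : neighbors A (C.erase x) = neighbors A C :=
    eq_of_subset_of_card_le hWC (by omega)
  have hWt : IsTight A (C.erase x) := le_antisymm (by rw [hWeq]; omega) hWcard
  refine ⟨C.erase x, hWV, hWt, fun j hj => ?_⟩
  rw [hWeq, mem_neighbors]
  exact ⟨x, hxC, hj⟩

theorem exists_insert_of_card_lt (hU : IsPartialTransversal A U) (hV : IsPartialTransversal A V)
    (hcard : #V < #U) : ∃ x ∈ U \ V, IsPartialTransversal A (insert x V) := by
  by_contra! hblocked
  obtain ⟨W, hWV, hWt, hWmax⟩ := hV.exists_greatest_isTight_subset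
  have hblock : ∀ x ∈ U \ V, ∀ j, x ∈ A j → j ∈ neighbors A W := by
    intro x hx j hj
    obtain ⟨C, hCV, hCt, hCx⟩ :=
      hV.exists_isTight_of_not_isPartialTransversal_insert (hblocked x hx)
    exact neighbors_mono (hWmax C hCV hCt) (hCx j hj)
  have hT : neighbors A ((U \ V) ∪ (U ∩ W)) ⊆ neighbors A W := by
    intro j
    simp only [mem_neighbors, mem_union, mem_inter]
    rintro ⟨x, hx | ⟨-, hxW⟩, hxj⟩
    · exact mem_neighbors.1 (hblock x hx j hxj)
    · exact ⟨x, hxW, hxj⟩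
  have hdisj : Disjoint (U \ V) (U ∩ W) :=
    disjoint_left.2 fun x hx hxW => (mem_sdiff.1 hx).2 (hWV (mem_inter.1 hxW).2)
  have hle : #(U \ V) + #(U ∩ W) ≤ #(V \ U) + #(U ∩ W) := calc
    #(U \ V) + #(U ∩ W) = #((U \ V) ∪ (U ∩ W)) := (card_union_of_disjoint hdisj).symm
    _ ≤ #(neighbors A ((U \ V) ∪ (U ∩ W))) :=
      hU.card_le_card_neighbors (union_subset sdiff_subset inter_subset_left)
    _ ≤ #(neighbors A W) := card_le_card hT
    _ = #(W \ U) + #(U ∩ W) := by rw [hWt, inter_comm, card_sdiff_add_card_inter]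
    _ ≤ #(V \ U) + #(U ∩ W) := by gcongr
  exact (card_sdiff_le_card_sdiff_iff.1 (by omega)).not_gt hcard

end IsPartialTransversal

end SetSystem

theorem stmt5_general {α : Type*} [DecidableEq α] {J : Type*} [Fintype J]
    (A : J → Finset α) :
    let PT : Finset α → Prop := fun I =>
      ∃ f : {x // x ∈ I} → J, Function.Injective f ∧ ∀ x : {x // x ∈ I}, (x : α) ∈ A (f x)
    PT ∅ ∧
    (∀ U V : Finset α, PT U → V ⊆ U → PT V) ∧
    (∀ U V : Finset α, PT U → PT V → U.card = V.card + 1 →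
      ∃ x ∈ U \ V, PT (insert x V)) := by
  intro PT
  exact ⟨SetSystem.isPartialTransversal_empty,
    fun _ _ hU hVU => SetSystem.IsPartialTransversal.subset hU hVU,
    fun _ _ hU hV hcard =>
      SetSystem.IsPartialTransversal.exists_insert_of_card_lt hU hV (by omega)⟩

/-- Edmonds–Fulkerson: the partial transversals of a finite set system
`A : J → Finset α` of subsets of a finite set `S` form the independent sets of a matroid
on `S`: the family contains `∅`, is closed under subsets, and satisfies the exchange axiom. -/
theorem stmt5 {α : Type*} [DecidableEq α] (S : Finset α) {J : Type*} [Fintype J]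
    (A : J → Finset α) (hA : ∀ j, A j ⊆ S) :
    let PT : Finset α → Prop := fun I =>
      ∃ f : {x // x ∈ I} → J, Function.Injective f ∧ ∀ x : {x // x ∈ I}, (x : α) ∈ A (f x)
    PT ∅ ∧
    (∀ U V : Finset α, PT U → V ⊆ U → PT V) ∧
    (∀ U V : Finset α, PT U → PT V → U.card = V.card + 1 →
      ∃ x ∈ U \ V, PT (insert x V)) :=
  stmt5_general A
end

section
/- Two vertices e_{B_1} and e_{B_2} of a matroid polytope P(M) are adjacent (joined by an edge) if and only if e_{B_1} - e_{B_2} = e_i - e_j for some indices i and j, i.e., the bases B_1 and B_2 differ by a single element exchange. -/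
/-!
Write `e_B` for the indicator vector of a base `B`. If `B₁ \ B₂ = {e}`, the linear functional
`⟪e_{B₁} + e_{B₂}, ·⟫` takes the value `|B₁ ∩ B| + |B₂ ∩ B|` at `e_B`; as two distinct bases
meet in fewer elements than a base has, its maximum over the vertices is attained exactly at
`e_{B₁}` and `e_{B₂}`, so it exposes the segment between them. Conversely, if `B₁ \ B₂` has two
elements `e` and `e'`, symmetric exchange gives bases `B₃ = B₁ - e + f` and `B₄ = B₂ - f + e`
with `e_{B₁} + e_{B₂} = e_{B₃} + e_{B₄}`. A face containing the common midpoint contains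
`e_{B₃}`, but the only `0/1`-vectors on the segment `[e_{B₁}, e_{B₂}]` are its endpoints,
whereas `f ∈ B₃ \ B₁` and `e' ∈ B₃ \ B₂`.
-/

open Set

section Convex

variable {𝕜 E : Type*} [Field 𝕜] [LinearOrder 𝕜] [IsStrictOrderedRing 𝕜] [AddCommGroup E]
  [Module 𝕜 E]

theorem convexHull_sep_eq_inter_of_forall_le {S : Set E} {L : E →ₗ[𝕜] 𝕜} {c : 𝕜}
    (hS : ∀ x ∈ S, L x ≤ c) :
    convexHull 𝕜 {x ∈ S | L x = c} = convexHull 𝕜 S ∩ {x | L x = c} := by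
  have hT : convexHull 𝕜 {x ∈ S | L x = c} ⊆ {x | L x = c} :=
    convexHull_min (fun x hx => hx.2) (convex_hyperplane L.isLinear c)
  have hU : convexHull 𝕜 {x ∈ S | L x < c} ⊆ {x | L x < c} :=
    convexHull_min (fun x hx => hx.2) (convex_halfSpace_lt L.isLinear c)
  refine subset_antisymm (subset_inter (convexHull_mono (sep_subset _ _)) hT) ?_
  rintro x ⟨hx, hLx⟩
  have hS_eq : S = {x ∈ S | L x = c} ∪ {x ∈ S | L x < c} := by
    ext y
    refine ⟨fun hy => (hS y hy).eq_or_lt.imp (⟨hy, ·⟩) (⟨hy, ·⟩), ?_⟩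
    rintro (hy | hy) <;> exact hy.1
  rcases eq_empty_or_nonempty {x ∈ S | L x = c} with hT₀ | hT₀
  · rw [hS_eq, hT₀, empty_union] at hx
    exact absurd hLx (hU hx).ne
  rcases eq_empty_or_nonempty {x ∈ S | L x < c} with hU₀ | hU₀
  · rwa [hS_eq, hU₀, union_empty] at hx
  rw [hS_eq, convexHull_union hT₀ hU₀, mem_convexJoin] at hx
  obtain ⟨a, ha, b, hb, s, t, hs, ht, hst, rfl⟩ := hx
  have hLa : L a = c := hT ha
  have hLb : L b < c := hU hb
  simp only [mem_ofPred_eq, map_add, map_smul, smul_eq_mul, hLa] at hLx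
  have ht₀ : t = 0 := by
    have h : t * (c - L b) = 0 := by linear_combination c * hst - hLx
    exact (mul_eq_zero.1 h).resolve_right (sub_pos.2 hLb).ne'
  rwa [ht₀, zero_smul, add_zero, show s = 1 by linarith, one_smul]

theorem isExtreme_convexHull_sep_of_forall_le {S : Set E} {L : E →ₗ[𝕜] 𝕜} {c : 𝕜}
    (hS : ∀ x ∈ S, L x ≤ c) :
    IsExtreme 𝕜 (convexHull 𝕜 S) (convexHull 𝕜 {x ∈ S | L x = c}) := by
  have hle : ∀ x ∈ convexHull 𝕜 S, L x ≤ c :=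
    fun x hx => convexHull_min hS (convex_halfSpace_le L.isLinear c) hx
  rw [convexHull_sep_eq_inter_of_forall_le hS]
  refine ⟨inter_subset_left, fun x hx y hy z ⟨_, hLz⟩ ⟨a, b, ha, hb, hab, hz⟩ => ⟨hx, ?_⟩⟩
  simp only [← hz, mem_ofPred_eq, map_add, map_smul, smul_eq_mul] at hLz ⊢
  refine le_antisymm (hle x hx) (not_lt.1 fun hlt => ?_)
  have h : a * (c - L x) + b * (c - L y) = 0 := by linear_combination c * hab - hLz
  linarith [mul_pos ha (sub_pos.2 hlt), mul_nonneg hb.le (sub_nonneg.2 (hle y hy))]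

theorem IsExtreme.left_mem_segment_of_add_eq {A : Set E} {x₁ x₂ y₁ y₂ : E}
    (h : IsExtreme 𝕜 A (segment 𝕜 x₁ x₂)) (hy₁ : y₁ ∈ A) (hy₂ : y₂ ∈ A)
    (hxy : x₁ + x₂ = y₁ + y₂) : y₁ ∈ segment 𝕜 x₁ x₂ := by
  have hmid : (2⁻¹ : 𝕜) • (x₁ + x₂) ∈ segment 𝕜 x₁ x₂ :=
    ⟨2⁻¹, 2⁻¹, by norm_num, by norm_num, by norm_num, (smul_add ..).symm⟩
  exact h.left_mem_of_mem_openSegment hy₁ hy₂ hmid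
    ⟨2⁻¹, 2⁻¹, by norm_num, by norm_num, by norm_num, by rw [hxy, smul_add]⟩

end Convex

section Indicator

variable {α R 𝕜 : Type*}

theorem indicator_one_sub_indicator_one_insert_sdiff [Ring R] [DecidableEq α] {B : Set α}
    {e f : α} (he : e ∈ B) (hf : f ∉ B) :
    B.indicator (1 : α → R) - (insert f B \ {e}).indicator 1 = Pi.single e 1 - Pi.single f 1 := by
  classical
  have hfe : f ≠ e := ne_of_mem_of_not_mem he hf |>.symm
  ext k
  by_cases hke : k = e
  · subst hke; simp [he, hfe.symm]
  by_cases hkf : k = f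
  · subst hkf; simp [hf, hke]
  simp [indicator_apply, hke, hkf]

theorem sdiff_eq_singleton_of_indicator_one_sub_eq [Ring R] [CharZero R] [DecidableEq α]
    {A B : Set α} {i j : α} (hAB : A ≠ B)
    (h : A.indicator (1 : α → R) - B.indicator 1 = Pi.single i 1 - Pi.single j 1) :
    A \ B = {i} := by
  classical
  have hij : i ≠ j := by
    rintro rfl
    rw [sub_self, sub_eq_zero] at h
    exact hAB (indicator_one_inj R h)
  ext k
  have hk := congrFun h k
  clear h
  simp only [Pi.sub_apply, indicator_apply, Pi.single_apply, Pi.one_apply, mem_sdiff,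
    mem_singleton_iff] at hk ⊢
  split_ifs at hk <;> simp_all <;> norm_num at hk

theorem indicator_one_dotProduct_indicator_one [NonAssocSemiring R] [Fintype α] (A B : Set α) :
    A.indicator (1 : α → R) ⬝ᵥ B.indicator 1 = (A ∩ B).ncard := by
  classical
  have h : ∀ x, A.indicator (1 : α → R) x * B.indicator 1 x = (A ∩ B).indicator 1 x :=
    fun x => by rw [inter_indicator_one]; rfl
  simp only [dotProduct, h]
  simp only [indicator_apply, Pi.one_apply, Finset.sum_boole,
    filter_mem_univ_eq_toFinset, ncard_eq_toFinset_card']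

theorem eq_or_eq_of_indicator_one_mem_segment [Field 𝕜] [LinearOrder 𝕜] [IsStrictOrderedRing 𝕜]
    {A B C : Set α} (hAB : A ≠ B)
    (hC : C.indicator (1 : α → 𝕜) ∈ segment 𝕜 (A.indicator 1) (B.indicator 1)) :
    C = A ∨ C = B := by
  wlog hk : (A \ B).Nonempty generalizing A B
  · have hBA : (B \ A).Nonempty :=
      sdiff_nonempty.2 fun hBA => hAB (subset_antisymm (not_not.1 (mt sdiff_nonempty.2 hk)) hBA)
    exact (this hAB.symm (by rwa [segment_symm]) hBA).symm
  obtain ⟨k, hkA, hkB⟩ := hk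
  obtain ⟨a, b, ha, hb, hab, hC⟩ := hC
  have hCk := congrFun hC k
  simp only [Pi.add_apply, Pi.smul_apply, indicator_of_mem hkA, indicator_of_notMem hkB,
    smul_eq_mul, Pi.one_apply, mul_one, mul_zero, add_zero] at hCk
  by_cases hkC : k ∈ C
  · left
    rw [indicator_of_mem hkC, Pi.one_apply] at hCk
    apply indicator_one_inj 𝕜
    rw [← hC, hCk, show b = 0 by linarith, one_smul, zero_smul, add_zero]
  · right
    rw [indicator_of_notMem hkC] at hCk
    apply indicator_one_inj 𝕜
    rw [← hC, hCk, show b = 1 by linarith, one_smul, zero_smul, zero_add]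

end Indicator

namespace Matroid

variable {α : Type*} {M : Matroid α} {B B₁ B₂ : Set α} {e : α}

theorem IsBase.exists_symm_exchange (hB₁ : M.IsBase B₁) (hB₂ : M.IsBase B₂) (he : e ∈ B₁ \ B₂) :
    ∃ f ∈ B₂ \ B₁, M.IsBase (insert f B₁ \ {e}) ∧ M.IsBase (insert e B₂ \ {f}) := by
  have heE := hB₁.subset_ground he.1
  -- the fundamental circuit of `e` in `B₂` and its fundamental cocircuit in `B₁` share `e`,
  -- hence a second element, since a circuit and a cocircuit never meet in exactly one element
  obtain ⟨f, ⟨hfC, hfK⟩, hfe⟩ := ((hB₂.fundCircuit_isCircuit heE he.2).isCocircuit_inter_nontrivial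
    (fundCocircuit_isCocircuit he.1 hB₁) ⟨e, mem_fundCircuit .., mem_fundCocircuit ..⟩).exists_ne e
  have hfB₂ : f ∈ B₂ := by simpa [hfe] using M.fundCircuit_subset_insert e B₂ hfC
  have hfB₁ : f ∉ B₁ :=
    (by simpa [hfe] using M.fundCocircuit_subset_insert_compl e B₁ hfK : f ∈ M.E \ B₁).2
  rw [hB₁.mem_fundCocircuit_iff_mem_fundCircuit,
    hB₁.indep.mem_fundCircuit_iff (by rw [hB₁.closure_eq]; exact hB₂.subset_ground hfB₂) hfB₁]
    at hfK
  rw [hB₂.indep.mem_fundCircuit_iff (by rw [hB₂.closure_eq]; exact heE) he.2] at hfC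
  exact ⟨f, ⟨hfB₂, hfB₁⟩, hB₁.exchange_isBase_of_indep' he.1 hfB₁ hfK,
    hB₂.exchange_isBase_of_indep' hfB₂ he.2 hfC⟩

theorem IsBase.ncard_inter_lt [M.RankFinite] (hB₁ : M.IsBase B₁) (hB₂ : M.IsBase B₂)
    (hne : B₁ ≠ B₂) : (B₁ ∩ B₂).ncard < B₁.ncard :=
  ncard_lt_ncard (inter_ssubset_left_iff.2 fun h => hne (hB₁.eq_of_subset_isBase hB₂ h))
    hB₁.finite

theorem IsBase.ncard_inter_add_ncard_inter_lt [M.RankFinite] (hB₁ : M.IsBase B₁)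
    (hB₂ : M.IsBase B₂) (he : B₁ \ B₂ = {e}) (hB : M.IsBase B) (h₁ : B ≠ B₁) (h₂ : B ≠ B₂) :
    (B₁ ∩ B).ncard + (B₂ ∩ B).ncard < B₁.ncard + (B₂ ∩ B₁).ncard := by
  have hlt₁ := hB₁.ncard_inter_lt hB h₁.symm
  have hlt₂ := hB₂.ncard_inter_lt hB h₂.symm
  have hsplit := ncard_inter_add_ncard_sdiff_eq_ncard B₁ B₂ hB₁.finite
  rw [he, ncard_singleton, inter_comm] at hsplit
  have := hB₂.ncard_eq_ncard_of_isBase hB₁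
  omega

def baseIndicators (𝕜 : Type*) [Zero 𝕜] [One 𝕜] (M : Matroid α) : Set (α → 𝕜) :=
  {x | ∃ B, M.IsBase B ∧ x = B.indicator 1}

def polytope (𝕜 : Type*) [Semiring 𝕜] [PartialOrder 𝕜] (M : Matroid α) : Set (α → 𝕜) :=
  convexHull 𝕜 (M.baseIndicators 𝕜)

variable {𝕜 : Type*} [Field 𝕜] [LinearOrder 𝕜] [IsStrictOrderedRing 𝕜]

theorem exists_sdiff_eq_singleton_of_isExtreme_segment (hB₁ : M.IsBase B₁) (hB₂ : M.IsBase B₂)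
    (hne : B₁ ≠ B₂)
    (h : IsExtreme 𝕜 (M.polytope 𝕜) (segment 𝕜 (B₁.indicator 1) (B₂.indicator 1))) :
    ∃ e, B₁ \ B₂ = {e} := by
  classical
  obtain ⟨e, he⟩ : (B₁ \ B₂).Nonempty :=
    sdiff_nonempty.2 fun hsub => hne (hB₁.eq_of_subset_isBase hB₂ hsub)
  refine ⟨e, eq_singleton_iff_unique_mem.2 ⟨he, fun e' he' => by_contra fun he'e => ?_⟩⟩
  obtain ⟨f, hf, hB₃, hB₄⟩ := hB₁.exists_symm_exchange hB₂ he
  have hsum : B₁.indicator (1 : α → 𝕜) + B₂.indicator 1 =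
      (insert f B₁ \ {e}).indicator 1 + (insert e B₂ \ {f}).indicator 1 := by
    linear_combination indicator_one_sub_indicator_one_insert_sdiff (R := 𝕜) he.1 hf.2 +
      indicator_one_sub_indicator_one_insert_sdiff (R := 𝕜) hf.1 he.2
  have hB₃mem := h.left_mem_segment_of_add_eq (subset_convexHull 𝕜 _ ⟨_, hB₃, rfl⟩)
    (subset_convexHull 𝕜 _ ⟨_, hB₄, rfl⟩) hsum
  have hfe : f ≠ e := ne_of_mem_of_not_mem he.1 hf.2 |>.symm
  rcases eq_or_eq_of_indicator_one_mem_segment hne hB₃mem with hB₃₁ | hB₃₂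
  · exact hf.2 (hB₃₁ ▸ ⟨mem_insert f B₁, hfe⟩)
  · exact he'.2 (hB₃₂ ▸ ⟨mem_insert_of_mem f he'.1, he'e⟩)

theorem isExtreme_segment_of_sdiff_eq_singleton [Fintype α] (hB₁ : M.IsBase B₁)
    (hB₂ : M.IsBase B₂) (he : B₁ \ B₂ = {e}) :
    IsExtreme 𝕜 (M.polytope 𝕜) (segment 𝕜 (B₁.indicator 1) (B₂.indicator 1)) := by
  classical
  set L := dotProductEquiv 𝕜 α (B₁.indicator 1 + B₂.indicator 1)
  have hL : ∀ B : Set α, L (B.indicator 1) = ((B₁ ∩ B).ncard + (B₂ ∩ B).ncard : ℕ) := by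
    simp [L, indicator_one_dotProduct_indicator_one]
  have hL₂ : L (B₂.indicator 1) = L (B₁.indicator 1) := by
    rw [hL, hL, inter_self, inter_self, hB₂.ncard_eq_ncard_of_isBase hB₁, inter_comm, add_comm]
  have hlt : ∀ B, M.IsBase B → B ≠ B₁ → B ≠ B₂ → L (B.indicator 1) < L (B₁.indicator 1) := by
    intro B hB h₁ h₂
    rw [hL, hL, inter_self]
    exact_mod_cast hB₁.ncard_inter_add_ncard_inter_lt hB₂ he hB h₁ h₂
  have hS : ∀ x ∈ M.baseIndicators 𝕜, L x ≤ L (B₁.indicator 1) := by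
    rintro _ ⟨B, hB, rfl⟩
    obtain rfl | rfl | ⟨h₁, h₂⟩ : B = B₁ ∨ B = B₂ ∨ B ≠ B₁ ∧ B ≠ B₂ := by tauto
    exacts [le_rfl, hL₂.le, (hlt B hB h₁ h₂).le]
  have hface : {x ∈ M.baseIndicators 𝕜 | L x = L (B₁.indicator 1)} =
      {B₁.indicator 1, B₂.indicator 1} := by
    ext x
    constructor
    · rintro ⟨⟨B, hB, rfl⟩, hx⟩
      by_contra hne
      exact (hlt B hB (by rintro rfl; simp at hne) (by rintro rfl; simp at hne)).ne hx
    · rintro (rfl | rfl)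
      exacts [⟨⟨B₁, hB₁, rfl⟩, rfl⟩, ⟨⟨B₂, hB₂, rfl⟩, hL₂⟩]
  rw [← convexHull_pair, ← hface]
  exact isExtreme_convexHull_sep_of_forall_le hS

end Matroid

theorem stmt6_general {n : ℕ} (M : Matroid (Fin n))
    (B₁ B₂ : Set (Fin n)) (h1 : M.IsBase B₁) (h2 : M.IsBase B₂) (hne : B₁ ≠ B₂) :
    IsExtreme ℝ
      (convexHull ℝ {x : Fin n → ℝ | ∃ B, M.IsBase B ∧ x = B.indicator (fun _ => (1 : ℝ))})
      (segment ℝ (B₁.indicator fun _ => (1 : ℝ)) (B₂.indicator fun _ => (1 : ℝ)))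
    ↔ ∃ i j : Fin n,
        B₁.indicator (fun _ => (1 : ℝ)) - B₂.indicator (fun _ => (1 : ℝ))
          = Pi.single i 1 - Pi.single j 1 := by
  constructor
  · intro h
    obtain ⟨e, he⟩ := M.exists_sdiff_eq_singleton_of_isExtreme_segment h1 h2 hne h
    have heB₁ : e ∈ B₁ := (he.symm.subset (mem_singleton e)).1
    obtain ⟨f, hf, rfl⟩ := h1.eq_exchange_of_sdiff_eq_singleton h2 he
    exact ⟨e, f, indicator_one_sub_indicator_one_insert_sdiff heB₁ hf.2⟩
  · rintro ⟨i, j, hij⟩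
    exact M.isExtreme_segment_of_sdiff_eq_singleton h1 h2
      (sdiff_eq_singleton_of_indicator_one_sub_eq hne hij)

/-- Edmonds; Gelfand–Goresky–MacPherson–Serganova: in the matroid polytope
`P(M) = conv{e_B : B a base of M} ⊆ ℝⁿ`, the vertices `e_{B₁}` and `e_{B₂}` (for distinct
bases `B₁ ≠ B₂`) are adjacent — i.e. the segment `[e_{B₁}, e_{B₂}]` is a face of `P(M)` —
iff `e_{B₁} - e_{B₂} = e_i - e_j` for some `i, j`. -/
theorem stmt6 {n : ℕ} (M : Matroid (Fin n)) (hE : M.E = Set.univ)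
    (B₁ B₂ : Set (Fin n)) (h1 : M.IsBase B₁) (h2 : M.IsBase B₂) (hne : B₁ ≠ B₂) :
    IsExtreme ℝ
      (convexHull ℝ {x : Fin n → ℝ | ∃ B, M.IsBase B ∧ x = B.indicator (fun _ => (1 : ℝ))})
      (segment ℝ (B₁.indicator fun _ => (1 : ℝ)) (B₂.indicator fun _ => (1 : ℝ)))
    ↔ ∃ i j : Fin n,
        B₁.indicator (fun _ => (1 : ℝ)) - B₂.indicator (fun _ => (1 : ℝ))
          = Pi.single i 1 - Pi.single j 1 :=
  stmt6_general M B₁ B₂ h1 h2 hne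
end

section
/- The dimension of the matroid polytope P(M) of a matroid M on ground set of size n equals n - c(M), where c(M) is the number of connected components of M. -/
/-!
The direction of the affine hull of the base indicators `e_B` is spanned by the differences
`e_B - e_B'`. By basis exchange, such a difference telescopes into steps `e_e - e_f` with `e`
and `f` on a common (fundamental) circuit; conversely, if `i ≠ j` lie on a circuit `C`, extend
`C \ {i}` to a base `B`: then `C` is the fundamental circuit of `i` in `B`, so exchanging `j`
for `i` gives a base `B'` with `e_B' - e_B = e_i - e_j`. Hence the direction is the span of the
`e_i - e_j` with `i ~ j`, which is the kernel of the surjection `ℝⁿ → ℝ^{components}`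
summing the coordinates over each component, and so has dimension `n - c(M)`.
-/

open Set Submodule

section DiffSpan

variable {ι κ : Type*} [DecidableEq ι]

def diffSpan (K : Type*) [Ring K] (r : ι → ι → Prop) : Submodule K (ι → K) :=
  span K {x | ∃ i j, r i j ∧ Pi.single i 1 - Pi.single j 1 = x}

variable {K : Type*}

lemma single_sub_single_mem_diffSpan [Ring K] {r : ι → ι → Prop} {i j : ι}
    (h : Relation.EqvGen r i j) :
    (Pi.single i 1 - Pi.single j 1 : ι → K) ∈ diffSpan K r := by
  induction h with
  | rel i j hij => exact subset_span ⟨i, j, hij, rfl⟩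
  | refl i => simp
  | symm i j _ ih => simpa using neg_mem ih
  | trans i j k _ _ ih₁ ih₂ => simpa using add_mem ih₁ ih₂

lemma diffSpan_eqvGen [Ring K] (r : ι → ι → Prop) :
    diffSpan K (Relation.EqvGen r) = diffSpan K r :=
  le_antisymm (span_le.2 fun _ ⟨_, _, h, hx⟩ => hx ▸ single_sub_single_mem_diffSpan h)
    (span_mono fun _ ⟨i, j, h, hx⟩ => ⟨i, j, .rel i j h, hx⟩)

lemma finrank_diffSpan_eq_of_surjective [DivisionRing K] [Fintype ι] [Fintype κ] [DecidableEq κ]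
    {π : ι → κ} (hπ : Function.Surjective π) :
    Module.finrank K (diffSpan K fun i j => π i = π j) = Fintype.card ι - Fintype.card κ := by
  set W := diffSpan K fun i j => π i = π j
  let φ := Fintype.linearCombination K fun i => (Pi.single (π i) 1 : κ → K)
  let σ := Fintype.linearCombination K fun c => (Pi.single (Function.surjInv hπ c) 1 : ι → K)
  let ψ := Fintype.linearCombination K fun c => W.mkQ (Pi.single (Function.surjInv hπ c) 1)
  have hφσ : φ ∘ₗ σ = LinearMap.id := by
    ext c
    simp [φ, σ, Fintype.linearCombination_apply_single, Function.surjInv_eq hπ]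
  have hψφ : ψ ∘ₗ φ = W.mkQ := by
    ext i
    simp only [φ, ψ, LinearMap.comp_apply, LinearMap.single_apply,
      Fintype.linearCombination_apply_single, one_smul, mkQ_apply, Submodule.Quotient.eq]
    exact subset_span ⟨_, i, Function.surjInv_eq hπ (π i), rfl⟩
  have hker : LinearMap.ker φ = W := by
    refine le_antisymm (fun x hx => ?_) (span_le.2 ?_)
    · rw [← Submodule.Quotient.mk_eq_zero, ← W.mkQ_apply, ← hψφ, LinearMap.comp_apply,
        LinearMap.mem_ker.1 hx, map_zero]
    · rintro _ ⟨i, j, h, rfl⟩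
      simp [φ, Fintype.linearCombination_apply_single, h]
  have hrange : LinearMap.range φ = ⊤ :=
    LinearMap.range_eq_top.2 fun y => ⟨σ y, LinearMap.congr_fun hφσ y⟩
  have hrank := LinearMap.finrank_range_add_finrank_ker φ
  rw [hrange, hker, finrank_top, Module.finrank_fintype_fun_eq_card,
    Module.finrank_fintype_fun_eq_card] at hrank
  omega

lemma finrank_diffSpan [DivisionRing K] [Fintype ι] (r : ι → ι → Prop) :
    Module.finrank K (diffSpan K r) =
      Fintype.card ι - Nat.card (Quotient (Relation.EqvGen.setoid r)) := by
  classical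
  let _ : Fintype (Quotient (Relation.EqvGen.setoid r)) := Fintype.ofFinite _
  have hr : Relation.EqvGen r =
      fun i j => (⟦i⟧ : Quotient (Relation.EqvGen.setoid r)) = ⟦j⟧ := by
    ext i j
    exact (Quotient.eq (r := Relation.EqvGen.setoid r)).symm
  rw [← diffSpan_eqvGen, hr, finrank_diffSpan_eq_of_surjective Quotient.mk_surjective,
    Nat.card_eq_fintype_card]

end DiffSpan

namespace Matroid

variable {α : Type*} {M : Matroid α} {B C : Set α} {e f : α}

def CircuitRel (M : Matroid α) (i j : α) : Prop := ∃ C, M.IsCircuit C ∧ i ∈ C ∧ j ∈ C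

lemma isCircuit_iff_not_indep_forall_ssubset_indep (hC : C ⊆ M.E) :
    M.IsCircuit C ↔ ¬ M.Indep C ∧ ∀ D ⊂ C, M.Indep D := by
  rw [isCircuit_iff_forall_ssubset, not_indep_iff hC]

lemma IsBase.mem_fundCircuit_iff_isBase (hB : M.IsBase B) (hf : f ∈ M.E) (hfB : f ∉ B)
    (he : e ∈ B) : e ∈ M.fundCircuit f B ↔ M.IsBase (insert f B \ {e}) := by
  rw [hB.indep.mem_fundCircuit_iff (by rwa [hB.closure_eq]) hfB]
  exact ⟨hB.exchange_isBase_of_indep' he hfB, IsBase.indep⟩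

lemma IsCircuit.exists_isBase_exchange (hC : M.IsCircuit C) (he : e ∈ C) (hf : f ∈ C)
    (hef : e ≠ f) :
    ∃ B, M.IsBase B ∧ e ∉ B ∧ f ∈ B ∧ M.IsBase (insert e B \ {f}) := by
  obtain ⟨B, hB, hCB⟩ := (hC.sdiff_singleton_indep he).exists_isBase_superset
  have heB : e ∉ B := fun heB =>
    hC.not_indep (hB.indep.subset fun x hx => by
      obtain rfl | hxe := eq_or_ne x e
      exacts [heB, hCB ⟨hx, hxe⟩])
  have hfB : f ∈ B := hCB ⟨hf, hef.symm⟩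
  have hCfund : C = M.fundCircuit e B :=
    hC.eq_fundCircuit_of_subset hB.indep fun x hx => by
      obtain rfl | hxe := eq_or_ne x e
      exacts [mem_insert _ _, mem_insert_of_mem _ (hCB ⟨hx, hxe⟩)]
  refine ⟨B, hB, heB, hfB, (hB.mem_fundCircuit_iff_isBase (hC.subset_ground he) heB hfB).1 ?_⟩
  exact hCfund ▸ hf

lemma IsBase.circuitRel_of_exchange (hB : M.IsBase B) (hf : f ∈ M.E) (hfB : f ∉ B)
    (he : e ∈ B) (hB' : M.IsBase (insert f B \ {e})) : M.CircuitRel f e :=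
  ⟨_, hB.fundCircuit_isCircuit hf hfB, mem_fundCircuit ..,
    (hB.mem_fundCircuit_iff_isBase hf hfB he).2 hB'⟩

lemma indicator_insert_sdiff_sub_indicator {K : Type*} [AddGroupWithOne K] [DecidableEq α]
    (he : e ∈ B) (hf : f ∉ B) :
    (insert f B \ {e}).indicator (fun _ => (1 : K)) - B.indicator (fun _ => 1) =
      Pi.single f 1 - Pi.single e 1 := by
  have hef : e ≠ f := ne_of_mem_of_not_mem he hf
  ext x
  obtain rfl | hxe := eq_or_ne x e
  · simp [he, hef]
  obtain rfl | hxf := eq_or_ne x f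
  · simp [hf, hef.symm]
  by_cases hxB : x ∈ B <;> simp [hxB, hxe, hxf]

variable {K : Type*} [Ring K]

lemma IsBase.indicator_sub_indicator_mem_diffSpan [DecidableEq α] [M.RankFinite]
    {B B' : Set α} (hB : M.IsBase B) (hB' : M.IsBase B') :
    B.indicator (fun _ => (1 : K)) - B'.indicator (fun _ => 1) ∈ diffSpan K M.CircuitRel := by
  by_cases hBB' : B ⊆ B'
  · simp [hB.eq_of_subset_isBase hB' hBB']
  obtain ⟨e, heB, heB'⟩ := not_subset.1 hBB'
  obtain ⟨f, ⟨hfB', hfB⟩, hB₁⟩ := hB.exchange hB' ⟨heB, heB'⟩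
  rw [insert_sdiff_singleton_comm (ne_of_mem_of_not_mem heB hfB).symm] at hB₁
  have hstep : B.indicator (fun _ => (1 : K)) - (insert f B \ {e}).indicator (fun _ => 1) ∈
      diffSpan K M.CircuitRel := by
    rw [← neg_sub, indicator_insert_sdiff_sub_indicator heB hfB]
    exact neg_mem (subset_span
      ⟨f, e, hB.circuitRel_of_exchange (hB'.subset_ground hfB') hfB heB hB₁, rfl⟩)
  have hlt : ((insert f B \ {e}) \ B').ncard < (B \ B').ncard := by
    have : (insert f B \ {e}) \ B' = (B \ B') \ {e} := by
      ext x
      simp only [mem_sdiff, mem_insert_iff, mem_singleton_iff]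
      grind
    rw [this]
    exact ncard_sdiff_singleton_lt_of_mem ⟨heB, heB'⟩ hB.finite.sdiff
  simpa using add_mem hstep (hB₁.indicator_sub_indicator_mem_diffSpan hB')
termination_by (B \ B').ncard

lemma vectorSpan_isBase_indicator [DecidableEq α] [M.RankFinite] :
    vectorSpan K {x | ∃ B, M.IsBase B ∧ x = B.indicator fun _ => (1 : K)} =
      diffSpan K M.CircuitRel := by
  refine le_antisymm ?_ (span_le.2 ?_)
  · rw [vectorSpan_def, span_le]
    rintro _ ⟨_, ⟨B, hB, rfl⟩, _, ⟨B', hB', rfl⟩, rfl⟩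
    exact hB.indicator_sub_indicator_mem_diffSpan hB'
  · rintro _ ⟨i, j, ⟨C, hC, hi, hj⟩, rfl⟩
    obtain rfl | hij := eq_or_ne i j
    · simp
    obtain ⟨B, hB, hiB, hjB, hB'⟩ := hC.exists_isBase_exchange hi hj hij
    rw [← indicator_insert_sdiff_sub_indicator hjB hiB]
    exact vsub_mem_vectorSpan K ⟨_, hB', rfl⟩ ⟨_, hB, rfl⟩

end Matroid

open Matroid in
/-- Feichtner–Sturmfels: the dimension of the matroid polytope of a matroid `M`
on `[n]` equals `n - c(M)`, where `c(M)` is the number of connected components of `M`, i.e.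
the number of classes of the equivalence relation on the ground set generated by
"`i ~ j` iff some circuit contains both `i` and `j`".  (A circuit is a minimal dependent set;
the dimension of a polytope is the rank of the direction of its affine hull.) -/
theorem stmt7 {n : ℕ} (M : Matroid (Fin n)) (hE : M.E = Set.univ) :
    let circuit : Set (Fin n) → Prop := fun C => ¬ M.Indep C ∧ ∀ D ⊂ C, M.Indep D
    let rel : Fin n → Fin n → Prop := fun i j => ∃ C, circuit C ∧ i ∈ C ∧ j ∈ C
    Module.finrank ℝ
        (affineSpan ℝ
          {x : Fin n → ℝ | ∃ B, M.IsBase B ∧ x = B.indicator fun _ => (1 : ℝ)}).direction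
      = n - Nat.card (Quotient (Relation.EqvGen.setoid rel)) := by
  intro circuit rel
  have hrel : rel = M.CircuitRel := by
    ext i j
    simp only [rel, circuit, CircuitRel,
      isCircuit_iff_not_indep_forall_ssubset_indep (hE ▸ subset_univ _)]
  rw [direction_affineSpan, vectorSpan_isBase_indicator, ← hrel, finrank_diffSpan,
    Fintype.card_fin]
end

section
/- For the generalized Catalan matroid polytope P(M[E^m N^r, Q]), the number of edges equals the sum, over all lattice paths P' from (0,0) to (m,r) lying weakly below Q, of the area between P' and the path E^m N^r (equivalently, the number of unit squares below P' within the m×r rectangle). -/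
/-!
Bases of `M[Q]` are identified with their 0/1 indicator vectors. Two bases `B`, `C` with
`|B ∩ C| = r - 1` always span an edge: the functional `x ↦ ∑_{k ∈ B} x_k + ∑_{k ∈ C} x_k` attains
its maximum over the vertices exactly at `B` and `C`. Conversely, let `[B, C]` be an edge, let `j`
be the least element of `B ∆ C`, say `j ∈ B`, and let `i` be the least element of `C \ B`. Then
`B' = B - j + i` and `C' = C - i + j` still lie below `Q` and `e_B + e_C = e_{B'} + e_{C'}`, so the
midpoint of the edge lies on `[B', C']`; extremality forces `C = B'`. Hence the edges are exactly
the segments `[B, B - j + i]` with `j ∈ B`, `i ∉ B`, `j < i`, and for a fixed path `B` these pairs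
`(i, j)` (an East step and an earlier North step) are the unit squares below it.
-/

open Finset
open scoped symmDiff

namespace CatalanMatroid

section ConvexGeometry

variable {E : Type*} [AddCommGroup E] [Module ℝ E]

theorem left_mem_extremePoints_segment (x y : E) : x ∈ (segment ℝ x y).extremePoints ℝ := by
  refine ⟨left_mem_segment ℝ x y, ?_⟩
  rintro _ ⟨a₁, b₁, -, hb₁, hab₁, rfl⟩ _ ⟨a₂, b₂, -, hb₂, hab₂, rfl⟩ ⟨s, t, hs, ht, hst, hx⟩
  have hzero : (s * b₁ + t * b₂) • (y - x) = 0 := by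
    linear_combination (norm := module) hx - (s * hab₁ + t * hab₂ + hst) • x
  rcases smul_eq_zero.1 hzero with h | h
  · obtain rfl : b₁ = 0 := by nlinarith
    obtain rfl : a₁ = 1 := by linarith
    simp
  · obtain rfl : y = x := sub_eq_zero.1 h
    simp [← add_smul, hab₁]

theorem segment_eq_segment_iff {a b c d : E} :
    segment ℝ a b = segment ℝ c d ↔ (a = c ∧ b = d) ∨ (a = d ∧ b = c) := by
  refine ⟨fun h => ?_, ?_⟩
  · have mem_ends : ∀ {x y z w : E}, segment ℝ x y = segment ℝ z w → x = z ∨ x = w := by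
      intro x y z w h
      have hx : x ∈ (convexHull ℝ {z, w}).extremePoints ℝ := by
        rw [convexHull_pair, ← h]
        exact left_mem_extremePoints_segment x y
      simpa using extremePoints_convexHull_subset hx
    have ha := mem_ends h
    have hb := mem_ends (segment_symm ℝ a b ▸ h)
    have hc := mem_ends h.symm
    have hd := mem_ends (segment_symm ℝ c d ▸ h.symm)
    grind
  · rintro (⟨rfl, rfl⟩ | ⟨rfl, rfl⟩)
    · rfl
    · exact segment_symm ℝ _ _

def edges (A : Set E) : Set (Set E) :=
  {e | (∃ v w, v ≠ w ∧ e = segment ℝ v w) ∧ IsExtreme ℝ A e}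

theorem left_mem_of_isExtreme_convexHull_segment {S : Set E} {v w : E}
    (h : IsExtreme ℝ (convexHull ℝ S) (segment ℝ v w)) : v ∈ S :=
  extremePoints_convexHull_subset
    (h.extremePoints_subset_extremePoints (left_mem_extremePoints_segment v w))

theorem isExtreme_setOf_eq_of_forall_le {A : Set E} (f : E →ₗ[ℝ] ℝ) {M : ℝ}
    (hle : ∀ x ∈ A, f x ≤ M) : IsExtreme ℝ A {x ∈ A | f x = M} := by
  refine ⟨Set.sep_subset _ _, ?_⟩
  rintro x₁ hx₁ x₂ hx₂ x ⟨-, hfx⟩ ⟨a, b, ha, hb, hab, rfl⟩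
  have hM : a * f x₁ + b * f x₂ = M := by simpa using hfx
  have hslack : a * (M - f x₁) + b * (M - f x₂) = 0 := by linear_combination M * hab - hM
  have h₂ := mul_nonneg hb.le (sub_nonneg.2 (hle x₂ hx₂))
  exact ⟨hx₁, le_antisymm (hle x₁ hx₁) (by nlinarith)⟩

theorem setOf_mem_convexHull_eq (V : Finset E) (f : E →ₗ[ℝ] ℝ) {M : ℝ}
    (hle : ∀ y ∈ V, f y ≤ M) :
    {x ∈ convexHull ℝ (V : Set E) | f x = M} = convexHull ℝ {y ∈ (V : Set E) | f y = M} := by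
  classical
  apply Set.Subset.antisymm
  · rintro x ⟨hx, hfx⟩
    obtain ⟨w, hw₀, hw₁, rfl⟩ := mem_convexHull'.1 hx
    have hslack : ∑ y ∈ V, w y * (M - f y) = 0 := by
      simp only [map_sum, map_smul, smul_eq_mul] at hfx
      simp [mul_sub, sum_sub_distrib, ← sum_mul, hw₁, hfx]
    have hw : ∀ y ∈ V, w y ≠ 0 → f y = M := fun y hy hwy => by
      have := (sum_eq_zero_iff_of_nonneg fun z hz =>
        mul_nonneg (hw₀ z hz) (sub_nonneg.2 (hle z hz))).1 hslack y hy
      have := (mul_eq_zero.1 this).resolve_left hwy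
      linarith
    have hfilter : {y ∈ (V : Set E) | f y = M} = ↑(V.filter (f · = M)) := by ext; simp
    rw [hfilter]
    refine mem_convexHull'.2 ⟨w, fun y hy => hw₀ y (mem_filter.1 hy).1, ?_, ?_⟩
    · rwa [sum_filter_of_ne hw]
    · exact sum_filter_of_ne fun y hy hwy => hw y hy fun h => hwy (by simp [h])
  · refine convexHull_min (fun y hy => ⟨subset_convexHull ℝ _ hy.1, hy.2⟩) ?_
    exact (convex_convexHull ℝ _).inter (convex_hyperplane f.isLinear M)

theorem isExtreme_convexHull_setOf_eq (V : Finset E) (f : E →ₗ[ℝ] ℝ) {M : ℝ}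
    (hle : ∀ y ∈ V, f y ≤ M) :
    IsExtreme ℝ (convexHull ℝ (V : Set E)) (convexHull ℝ {y ∈ (V : Set E) | f y = M}) := by
  rw [← setOf_mem_convexHull_eq V f hle]
  exact isExtreme_setOf_eq_of_forall_le f fun x hx =>
    convexHull_min hle (convex_halfSpace_le f.isLinear M) hx

end ConvexGeometry

section IndicatorVectors

variable {α : Type*} [DecidableEq α]

def indicatorVec (B : Finset α) : α → ℝ := fun i => if i ∈ B then 1 else 0

theorem indicatorVec_injective : Function.Injective (indicatorVec (α := α)) := by
  intro B C h
  ext x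
  have := congrFun h x
  by_cases hB : x ∈ B <;> by_cases hC : x ∈ C <;> simp_all [indicatorVec]

theorem eq_or_eq_of_indicatorVec_mem_segment {B C D : Finset α} {j : α} (hjB : j ∈ B)
    (hjC : j ∉ C) (h : indicatorVec D ∈ segment ℝ (indicatorVec B) (indicatorVec C)) :
    D = B ∨ D = C := by
  obtain ⟨a, b, -, -, hab, hD⟩ := h
  have hj := congrFun hD j
  simp only [Pi.add_apply, Pi.smul_apply, indicatorVec, if_pos hjB, if_neg hjC, smul_eq_mul,
    mul_one, mul_zero, add_zero] at hj
  by_cases hjD : j ∈ D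
  · obtain rfl : b = 0 := by simp [hjD] at hj; linarith
    left
    apply indicatorVec_injective
    simp [← hD, (by linarith : a = 1)]
  · obtain rfl : a = 0 := by simpa [hjD] using hj
    right
    apply indicatorVec_injective
    simp [← hD, (by linarith : b = 1)]

theorem indicatorVec_add_indicatorVec_exchange {B C : Finset α} {i j : α} (hjB : j ∈ B)
    (hjC : j ∉ C) (hiC : i ∈ C) (hiB : i ∉ B) :
    indicatorVec B + indicatorVec C
      = indicatorVec (insert i (B.erase j)) + indicatorVec (insert j (C.erase i)) := by
  funext k
  by_cases hki : k = i
  · subst hki; simp [indicatorVec, hiB, hiC, (ne_of_mem_of_not_mem hjB hiB).symm]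
  by_cases hkj : k = j
  · subst hkj; simp [indicatorVec, hjB, hjC, hki]
  · simp [indicatorVec, hki, hkj]

def coordSum (B : Finset α) : (α → ℝ) →ₗ[ℝ] ℝ := ∑ k ∈ B, LinearMap.proj k

theorem coordSum_indicatorVec (B D : Finset α) : coordSum B (indicatorVec D) = #(B ∩ D) := by
  simp [coordSum, indicatorVec]

theorem card_inter_lt_of_ne {B D : Finset α} (hBD : #B = #D) (hne : D ≠ B) : #(B ∩ D) < #D :=
  card_lt_card <| inter_subset_right.ssubset_of_ne fun h =>
    hne (eq_of_subset_of_card_le (inter_eq_right.1 h) hBD.le)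

theorem isExtreme_segment_of_card_inter {r : ℕ} (𝓑 : Finset (Finset α))
    (h𝓑 : ∀ D ∈ 𝓑, #D = r) {B C : Finset α} (hB : B ∈ 𝓑) (hC : C ∈ 𝓑)
    (hBC : #(B ∩ C) + 1 = r) :
    IsExtreme ℝ (convexHull ℝ (indicatorVec '' ↑𝓑))
      (segment ℝ (indicatorVec B) (indicatorVec C)) := by
  set f := coordSum B + coordSum C
  have hf : ∀ D, f (indicatorVec D) = ((#(B ∩ D) + #(C ∩ D) : ℕ) : ℝ) := by
    simp [f, coordSum_indicatorVec]
  have hmax : ∀ D ∈ 𝓑, #(B ∩ D) + #(C ∩ D) ≤ r + #(B ∩ C) ∧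
      (#(B ∩ D) + #(C ∩ D) = r + #(B ∩ C) ↔ D = B ∨ D = C) := by
    intro D hD
    by_cases hDB : D = B
    · subst hDB; simp [h𝓑 _ hD, inter_comm]
    by_cases hDC : D = C
    · subst hDC; simp [h𝓑 _ hD, add_comm]
    have h₁ := card_inter_lt_of_ne ((h𝓑 B hB).trans (h𝓑 D hD).symm) hDB
    have h₂ := card_inter_lt_of_ne ((h𝓑 C hC).trans (h𝓑 D hD).symm) hDC
    rw [h𝓑 D hD] at h₁ h₂
    exact ⟨by omega, by simp only [hDB, hDC, or_self, iff_false]; omega⟩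
  have hlevel : {y ∈ indicatorVec '' ↑𝓑 | f y = ((r + #(B ∩ C) : ℕ) : ℝ)}
      = {indicatorVec B, indicatorVec C} := by
    ext y
    constructor
    · rintro ⟨⟨D, hD, rfl⟩, hfD⟩
      rw [hf, Nat.cast_inj] at hfD
      rcases (hmax D hD).2.1 hfD with rfl | rfl <;> simp
    · rintro (rfl | rfl)
      · exact ⟨⟨B, hB, rfl⟩, by rw [hf, (hmax B hB).2.2 (Or.inl rfl)]⟩
      · exact ⟨⟨C, hC, rfl⟩, by rw [hf, (hmax C hC).2.2 (Or.inr rfl)]⟩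
  classical
  rw [← convexHull_pair, ← hlevel, ← coe_image]
  refine isExtreme_convexHull_setOf_eq _ f fun y hy => ?_
  obtain ⟨D, hD, rfl⟩ := mem_image.1 hy
  rw [hf, Nat.cast_le]
  exact (hmax D hD).1

theorem card_inter_insert_erase_add_one {B : Finset α} {i j : α} (hj : j ∈ B) (hi : i ∉ B) :
    #(B ∩ insert i (B.erase j)) + 1 = #B := by
  rw [inter_insert_of_notMem hi, inter_eq_right.2 (erase_subset j B), card_erase_add_one hj]

theorem eq_insert_erase_of_isExtreme_segment {A : Set (α → ℝ)} {B C : Finset α} {i j : α}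
    (hext : IsExtreme ℝ A (segment ℝ (indicatorVec B) (indicatorVec C)))
    (hjB : j ∈ B) (hjC : j ∉ C) (hiC : i ∈ C) (hiB : i ∉ B)
    (hB' : indicatorVec (insert i (B.erase j)) ∈ A)
    (hC' : indicatorVec (insert j (C.erase i)) ∈ A) :
    C = insert i (B.erase j) := by
  have hmid : (1 / 2 : ℝ) • indicatorVec B + (1 / 2 : ℝ) • indicatorVec C
      ∈ segment ℝ (indicatorVec B) (indicatorVec C) :=
    ⟨1 / 2, 1 / 2, by norm_num, by norm_num, by norm_num, rfl⟩
  have hopen : (1 / 2 : ℝ) • indicatorVec B + (1 / 2 : ℝ) • indicatorVec C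
      ∈ openSegment ℝ (indicatorVec (insert i (B.erase j))) (indicatorVec (insert j (C.erase i))) :=
    ⟨1 / 2, 1 / 2, by norm_num, by norm_num, by norm_num, by
      rw [← smul_add, ← smul_add, indicatorVec_add_indicatorVec_exchange hjB hjC hiC hiB]⟩
  rcases eq_or_eq_of_indicatorVec_mem_segment hjB hjC
      (hext.left_mem_of_mem_openSegment hB' hC' hmid hopen) with h | h
  · exact absurd (h ▸ mem_insert_self i _) hiB
  · exact h.symm

theorem eq_of_mem_of_notMem_insert_erase {B : Finset α} {i j x : α} (hx : x ∈ B)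
    (hx' : x ∉ insert i (B.erase j)) : x = j := by
  by_contra h
  exact hx' (mem_insert_of_mem (mem_erase.2 ⟨h, hx⟩))

theorem eq_of_mem_insert_erase_of_notMem {B : Finset α} {i j x : α}
    (hx : x ∈ insert i (B.erase j)) (hx' : x ∉ B) : x = i :=
  (mem_insert.1 hx).resolve_right fun h => hx' (mem_of_mem_erase h)

theorem card_filter_insert_erase_add {B : Finset α} {i j : α} (p : α → Prop) [DecidablePred p]
    (hj : j ∈ B) (hi : i ∉ B) :
    #{x ∈ insert i (B.erase j) | p x} + (if p j then 1 else 0)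
      = #{x ∈ B | p x} + (if p i then 1 else 0) := by
  simp only [card_filter]
  rw [sum_insert fun h => hi (mem_of_mem_erase h), ← sum_erase_add B _ hj]
  ring

theorem card_insert_erase_eq {B : Finset α} {i j : α} (hj : j ∈ B) (hi : i ∉ B) :
    #(insert i (B.erase j)) = #B := by
  rw [card_insert_of_notMem fun h => hi (mem_of_mem_erase h), card_erase_add_one hj]

end IndicatorVectors

section LatticePaths

variable {n : ℕ}

def IsBelow (B Q : Finset (Fin n)) : Prop :=
  ∀ k ≤ n, #(B.filter fun j : Fin n => (j : ℕ) < k) ≤ #(Q.filter fun j : Fin n => (j : ℕ) < k)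

theorem IsBelow.insert_erase_of_lt {B Q : Finset (Fin n)} {i j : Fin n} (hB : IsBelow B Q)
    (hj : j ∈ B) (hi : i ∉ B) (hji : j < i) : IsBelow (insert i (B.erase j)) Q := by
  intro k hk
  have h := card_filter_insert_erase_add (fun x : Fin n => (x : ℕ) < k) hj hi
  have := hB k hk
  have : (j : ℕ) < i := hji
  split_ifs at h <;> omega

theorem IsBelow.insert_erase_of_forall_le {B C Q : Finset (Fin n)} {i j : Fin n}
    (hB : IsBelow B Q) (hC : IsBelow C Q) (hjB : j ∈ B) (hjC : j ∉ C) (hiC : i ∈ C)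
    (hji : j < i) (hmin : ∀ x ∈ C \ B, i ≤ x) :
    IsBelow (insert j (C.erase i)) Q := by
  intro k hk
  have h := card_filter_insert_erase_add (fun x : Fin n => (x : ℕ) < k) hiC hjC
  have := hC k hk
  have : (j : ℕ) < i := hji
  by_cases hjk : (j : ℕ) < k
  swap
  · split_ifs at h <;> omega
  by_cases hik : (i : ℕ) < k
  · split_ifs at h; omega
  -- For `j < k ≤ i`, minimality of `i` puts every element of `C` below `k` into `B`.
  have hsub : insert j (C.filter fun x : Fin n => (x : ℕ) < k)
      ⊆ B.filter fun x : Fin n => (x : ℕ) < k := by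
    refine insert_subset (mem_filter.2 ⟨hjB, hjk⟩) fun x hx => ?_
    obtain ⟨hxC, hxk⟩ := mem_filter.1 hx
    refine mem_filter.2 ⟨by_contra fun hxB => hik ?_, hxk⟩
    exact lt_of_le_of_lt (hmin x (mem_sdiff.2 ⟨hxC, hxB⟩)) hxk
  have := card_le_card hsub
  rw [card_insert_of_notMem fun h => hjC (mem_filter.1 h).1] at this
  have := hB k hk
  simp only [hik, hjk, if_true, if_false] at h
  omega

def catalanBases (Q : Finset (Fin n)) (r : ℕ) : Finset (Finset (Fin n)) :=
  {B | #B = r ∧ ∀ k ≤ n, #(B.filter fun j : Fin n => (j : ℕ) < k)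
    ≤ #(Q.filter fun j : Fin n => (j : ℕ) < k)}

theorem mem_catalanBases {Q B : Finset (Fin n)} {r : ℕ} :
    B ∈ catalanBases Q r ↔ #B = r ∧ IsBelow B Q := by
  simp [catalanBases, IsBelow]

theorem insert_erase_mem_catalanBases {Q B : Finset (Fin n)} {r : ℕ} {i j : Fin n}
    (hB : B ∈ catalanBases Q r) (hj : j ∈ B) (hi : i ∉ B) (hji : j < i) :
    insert i (B.erase j) ∈ catalanBases Q r := by
  rw [mem_catalanBases] at hB ⊢
  exact ⟨(card_insert_erase_eq hj hi).trans hB.1, hB.2.insert_erase_of_lt hj hi hji⟩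

def catalanPolytope (Q : Finset (Fin n)) (r : ℕ) : Set (Fin n → ℝ) :=
  convexHull ℝ (indicatorVec '' ↑(catalanBases Q r))

theorem indicatorVec_mem_catalanPolytope {Q B : Finset (Fin n)} {r : ℕ}
    (hB : B ∈ catalanBases Q r) : indicatorVec B ∈ catalanPolytope Q r :=
  subset_convexHull ℝ _ (Set.mem_image_of_mem _ hB)

theorem exists_exchange_of_isExtreme_segment {Q B C : Finset (Fin n)} {r : ℕ} {j : Fin n}
    (hB : B ∈ catalanBases Q r) (hC : C ∈ catalanBases Q r) (hBC : B ≠ C)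
    (hext : IsExtreme ℝ (catalanPolytope Q r) (segment ℝ (indicatorVec B) (indicatorVec C)))
    (hjB : j ∈ B) (hjC : j ∉ C) (hjmin : ∀ x ∈ B ∆ C, j ≤ x) :
    ∃ i ∉ B, j < i ∧ C = insert i (B.erase j) := by
  obtain ⟨hBr, hBQ⟩ := mem_catalanBases.1 hB
  obtain ⟨hCr, hCQ⟩ := mem_catalanBases.1 hC
  have hCB : (C \ B).Nonempty := sdiff_nonempty.2 fun h =>
    hBC (eq_of_subset_of_card_le h (hBr.trans hCr.symm).le).symm
  obtain ⟨i, hi, himin⟩ : ∃ i ∈ C \ B, ∀ x ∈ C \ B, i ≤ x :=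
    ⟨_, min'_mem _ hCB, fun x hx => min'_le _ x hx⟩
  obtain ⟨hiC, hiB⟩ := mem_sdiff.1 hi
  have hji : j < i := (hjmin i (mem_symmDiff.2 (Or.inr ⟨hiC, hiB⟩))).lt_of_ne
    (ne_of_mem_of_not_mem hjB hiB)
  have hC' : insert j (C.erase i) ∈ catalanBases Q r := mem_catalanBases.2
    ⟨(card_insert_erase_eq hiC hjC).trans hCr,
      hBQ.insert_erase_of_forall_le hCQ hjB hjC hiC hji himin⟩
  exact ⟨i, hiB, hji, eq_insert_erase_of_isExtreme_segment hext hjB hjC hiC hiB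
    (indicatorVec_mem_catalanPolytope (insert_erase_mem_catalanBases hB hjB hiB hji))
    (indicatorVec_mem_catalanPolytope hC')⟩

-- `⟨B, i, j⟩` is the unit square below the path `B` in the column of its East step `i` and the
-- row of its earlier North step `j`.
def cells (Q : Finset (Fin n)) (r : ℕ) : Finset (Σ _ : Finset (Fin n), Σ _ : Fin n, Fin n) :=
  (catalanBases Q r).sigma fun B => (univ \ B).sigma fun i => B.filter (· < i)

def exchangeSegment (t : Σ _ : Finset (Fin n), Σ _ : Fin n, Fin n) : Set (Fin n → ℝ) :=
  segment ℝ (indicatorVec t.1) (indicatorVec (insert t.2.1 (t.1.erase t.2.2)))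

theorem mem_cells {Q B : Finset (Fin n)} {r : ℕ} {i j : Fin n} :
    ⟨B, i, j⟩ ∈ cells Q r ↔ B ∈ catalanBases Q r ∧ i ∉ B ∧ j ∈ B ∧ j < i := by
  simp [cells]

theorem card_cells (Q : Finset (Fin n)) (r : ℕ) :
    #(cells Q r) = ∑ B ∈ catalanBases Q r, ∑ i ∈ univ \ B,
      #(B.filter fun j : Fin n => (j : ℕ) < (i : ℕ)) := by
  simp [cells, card_sigma]

theorem exchangeSegment_mem_edges {Q B : Finset (Fin n)} {r : ℕ} {i j : Fin n}
    (ht : ⟨B, i, j⟩ ∈ cells Q r) : exchangeSegment ⟨B, i, j⟩ ∈ edges (catalanPolytope Q r) := by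
  obtain ⟨hB, hi, hj, hji⟩ := mem_cells.1 ht
  refine ⟨⟨_, _, fun h => hi ?_, rfl⟩, ?_⟩
  · rw [show B = insert i (B.erase j) from indicatorVec_injective h]
    exact mem_insert_self i _
  · exact isExtreme_segment_of_card_inter _ (fun D hD => (mem_catalanBases.1 hD).1) hB
      (insert_erase_mem_catalanBases hB hj hi hji)
      ((card_inter_insert_erase_add_one hj hi).trans (mem_catalanBases.1 hB).1)

theorem exists_mem_cells_of_mem_edges {Q : Finset (Fin n)} {r : ℕ} {e : Set (Fin n → ℝ)}
    (he : e ∈ edges (catalanPolytope Q r)) : ∃ t ∈ cells Q r, exchangeSegment t = e := by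
  obtain ⟨⟨v, w, hvw, rfl⟩, hext⟩ := he
  obtain ⟨B, hB, rfl⟩ := left_mem_of_isExtreme_convexHull_segment hext
  obtain ⟨C, hC, rfl⟩ :=
    left_mem_of_isExtreme_convexHull_segment (segment_symm ℝ (indicatorVec B) w ▸ hext)
  have hBC : B ≠ C := fun h => hvw (h ▸ rfl)
  obtain ⟨j, hj, hjmin⟩ : ∃ j ∈ B ∆ C, ∀ x ∈ B ∆ C, j ≤ x :=
    ⟨_, min'_mem _ (symmDiff_nonempty.2 hBC), fun x hx => min'_le _ x hx⟩
  rcases mem_symmDiff.1 hj with ⟨hjB, hjC⟩ | ⟨hjC, hjB⟩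
  · obtain ⟨i, hiB, hji, rfl⟩ := exists_exchange_of_isExtreme_segment hB hC hBC hext hjB hjC hjmin
    exact ⟨⟨B, i, j⟩, mem_cells.2 ⟨hB, hiB, hjB, hji⟩, rfl⟩
  · rw [segment_symm] at hext
    obtain ⟨i, hiC, hji, rfl⟩ := exists_exchange_of_isExtreme_segment hC hB hBC.symm hext hjC hjB
      (symmDiff_comm B C ▸ hjmin)
    exact ⟨⟨C, i, j⟩, mem_cells.2 ⟨hC, hiC, hjC, hji⟩, segment_symm ℝ _ _⟩

theorem injOn_exchangeSegment (Q : Finset (Fin n)) (r : ℕ) :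
    Set.InjOn exchangeSegment (cells Q r : Set (Σ _ : Finset (Fin n), Σ _ : Fin n, Fin n)) := by
  rintro ⟨B, i, j⟩ ht ⟨B', i', j'⟩ ht' h
  obtain ⟨-, hi, hj, hji⟩ := mem_cells.1 ht
  obtain ⟨-, hi', hj', hji'⟩ := mem_cells.1 ht'
  have hj_notMem : j ∉ insert i (B.erase j) := by simp [hji.ne]
  rcases segment_eq_segment_iff.1 h with ⟨h₁, h₂⟩ | ⟨h₁, h₂⟩
  · obtain rfl := indicatorVec_injective h₁
    replace h₂ := indicatorVec_injective h₂
    obtain rfl : i = i' := eq_of_mem_insert_erase_of_notMem (h₂ ▸ mem_insert_self i _) hi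
    obtain rfl : j = j' := eq_of_mem_of_notMem_insert_erase hj (h₂ ▸ hj_notMem)
    rfl
  · replace h₁ : B = insert i' (B'.erase j') := indicatorVec_injective h₁
    replace h₂ : insert i (B.erase j) = B' := indicatorVec_injective h₂
    have hi'B : i' ∈ B := h₁ ▸ mem_insert_self i' _
    have hj'B : j' ∉ B := by rw [h₁]; simp [hji'.ne]
    have hi'j : i' = j := eq_of_mem_of_notMem_insert_erase hi'B (h₂ ▸ hi')
    have hj'i : j' = i := eq_of_mem_insert_erase_of_notMem (h₂ ▸ hj') hj'B
    exact absurd (hi'j ▸ hj'i ▸ hji') (lt_asymm hji)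

theorem ncard_edges_catalanPolytope (Q : Finset (Fin n)) (r : ℕ) :
    (edges (catalanPolytope Q r)).ncard = #(cells Q r) := by
  have h : edges (catalanPolytope Q r) = exchangeSegment '' ↑(cells Q r) :=
    Set.Subset.antisymm (fun _ he => exists_mem_cells_of_mem_edges he)
      (Set.image_subset_iff.2 fun ⟨_, _, _⟩ ht => exchangeSegment_mem_edges ht)
  rw [h, (injOn_exchangeSegment Q r).ncard_image, Set.ncard_coe_finset]

end LatticePaths

end CatalanMatroid

open CatalanMatroid in
theorem stmt8_general (m r : ℕ) (Qs : Finset (Fin (m + r))) :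
    Nat.card {e : Set (Fin (m + r) → ℝ) //
        (∃ v w : Fin (m + r) → ℝ, v ≠ w ∧ e = segment ℝ v w) ∧
        IsExtreme ℝ
          (convexHull ℝ {x : Fin (m + r) → ℝ |
            ∃ B : Finset (Fin (m + r)), B.card = r ∧
              (∀ i ≤ m + r, (B.filter (fun j : Fin (m + r) => (j : ℕ) < i)).card
                  ≤ (Qs.filter (fun j : Fin (m + r) => (j : ℕ) < i)).card) ∧
              x = fun i => if i ∈ B then 1 else 0}) e}
      = ∑ B ∈ Finset.univ.filter (fun B : Finset (Fin (m + r)) => B.card = r ∧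
            ∀ i ≤ m + r, (B.filter (fun j : Fin (m + r) => (j : ℕ) < i)).card
              ≤ (Qs.filter (fun j : Fin (m + r) => (j : ℕ) < i)).card),
          ∑ i ∈ Finset.univ \ B, (B.filter (fun j : Fin (m + r) => (j : ℕ) < (i : ℕ))).card := by
  have hvertices : {x : Fin (m + r) → ℝ | ∃ B : Finset (Fin (m + r)), B.card = r ∧
      (∀ i ≤ m + r, (B.filter (fun j : Fin (m + r) => (j : ℕ) < i)).card
        ≤ (Qs.filter (fun j : Fin (m + r) => (j : ℕ) < i)).card) ∧
      x = fun i => if i ∈ B then 1 else 0} = indicatorVec '' ↑(catalanBases Qs r) := by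
    ext x
    simp only [catalanBases, coe_filter, mem_univ, true_and, Set.mem_image, Set.mem_ofPred_eq,
      and_assoc]
    exact exists_congr fun B => and_congr_right fun _ => and_congr_right fun _ => eq_comm
  rw [hvertices]
  exact (ncard_edges_catalanPolytope Qs r).trans (card_cells Qs r)

/-- for the generalized Catalan matroid `M[Eᵐ Nʳ, Q]` (bases = `r`-subsets `B`
of the `m+r` step positions whose prefix North-counts never exceed those of `Q`, the path
with North steps at the positions in `Qs`), the number of edges of the matroid polytope
(faces that are nondegenerate segments) equals the sum over all such paths `B` of the area
below the path, i.e. `∑_{i ∉ B} #{j ∈ B : j < i}`. -/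
theorem stmt8 (m r : ℕ) (Qs : Finset (Fin (m + r))) (hQ : Qs.card = r) :
    Nat.card {e : Set (Fin (m + r) → ℝ) //
        (∃ v w : Fin (m + r) → ℝ, v ≠ w ∧ e = segment ℝ v w) ∧
        IsExtreme ℝ
          (convexHull ℝ {x : Fin (m + r) → ℝ |
            ∃ B : Finset (Fin (m + r)), B.card = r ∧
              (∀ i ≤ m + r, (B.filter (fun j : Fin (m + r) => (j : ℕ) < i)).card
                  ≤ (Qs.filter (fun j : Fin (m + r) => (j : ℕ) < i)).card) ∧
              x = fun i => if i ∈ B then 1 else 0}) e}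
      = ∑ B ∈ Finset.univ.filter (fun B : Finset (Fin (m + r)) => B.card = r ∧
            ∀ i ≤ m + r, (B.filter (fun j : Fin (m + r) => (j : ℕ) < i)).card
              ≤ (Qs.filter (fun j : Fin (m + r) => (j : ℕ) < i)).card),
          ∑ i ∈ Finset.univ \ B, (B.filter (fun j : Fin (m + r) => (j : ℕ) < (i : ℕ))).card :=
  stmt8_general m r Qs
end

section
/- Let P, Q be lattice paths from (0,0) to (m,r) with P never above Q, and let p_i, q_i denote the number of North steps among the first i steps of P and Q respectively. Then the lattice path matroid polytope P(M[P,Q]) ⊂ ℝ^{m+r} equals the set of points (x_1,...,x_{m+r}) satisfying 0 ≤ x_i ≤ 1 for all i, and p_i ≤ x_1 + ... + x_i ≤ q_i for all 1 ≤ i ≤ m+r (with x_1 + ... + x_{m+r} = r). -/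
/-!
Let `x` lie in the polytope and let `S k = x₀ + ⋯ + x_{k-1}`. For `θ ∈ [0, 1)` the rounded prefix
sums `⌊S k + θ⌋` start at `0`, increase by `0` or `1` at each step and, since `p k ≤ S k ≤ q k`
with `p k, q k` integers, still lie between `p k` and `q k`; so their increments form the indicator
vector of a basis. As `∫₀¹ ⌊s + θ⌋ dθ = s`, the point `x` is the average over `θ` of these basis
vectors and hence lies in their (closed) convex hull. The reverse inclusion holds because the
inequalities cut out a convex set containing every basis vector.
-/

open Finset MeasureTheory

section

open Set

theorem integrableOn_floor_add (s : ℝ) :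
    IntegrableOn (fun θ => (⌊s + θ⌋ : ℝ)) (Ico 0 1) := by
  refine (MonotoneOn.integrableOn_isCompact isCompact_Icc ?_).mono_set Ico_subset_Icc_self
  intro a _ b _ hab
  show (⌊s + a⌋ : ℝ) ≤ ⌊s + b⌋
  exact_mod_cast Int.floor_mono (by linarith)

theorem setIntegral_floor_add (s : ℝ) : ∫ θ in Ico (0 : ℝ) 1, (⌊s + θ⌋ : ℝ) = s := by
  have hfract := Int.floor_add_fract s
  have hc0 : 0 ≤ 1 - Int.fract s := by linarith [Int.fract_lt_one s]
  have hc1 : 1 - Int.fract s ≤ 1 := by linarith [Int.fract_nonneg s]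
  have h₁ : EqOn (fun θ => (⌊s + θ⌋ : ℝ)) (fun _ => (⌊s⌋ : ℝ)) (Ico 0 (1 - Int.fract s)) := by
    intro θ ⟨h0, h1⟩
    have : ⌊s + θ⌋ = ⌊s⌋ := by
      rw [Int.floor_eq_iff]
      constructor <;> linarith [Int.fract_nonneg s]
    simp [this]
  have h₂ : EqOn (fun θ => (⌊s + θ⌋ : ℝ)) (fun _ => (⌊s⌋ + 1 : ℝ)) (Ico (1 - Int.fract s) 1) := by
    intro θ ⟨h0, h1⟩
    have : ⌊s + θ⌋ = ⌊s⌋ + 1 := by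
      rw [Int.floor_eq_iff]
      push_cast
      constructor <;> linarith [Int.fract_lt_one s]
    simp [this]
  rw [← Ico_union_Ico_eq_Ico hc0 hc1, setIntegral_union Ico_disjoint_Ico_same measurableSet_Ico
      ((integrableOn_const (by simp)).congr_fun h₁.symm measurableSet_Ico)
      ((integrableOn_const (by simp)).congr_fun h₂.symm measurableSet_Ico),
    setIntegral_congr_fun measurableSet_Ico h₁, setIntegral_congr_fun measurableSet_Ico h₂,
    setIntegral_const, setIntegral_const, Real.volume_real_Ico, Real.volume_real_Ico, sub_zero,
    max_eq_left hc0, max_eq_left (sub_nonneg.2 hc1), smul_eq_mul, smul_eq_mul]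
  linarith

end

namespace LatticePathPolytope

variable {n : ℕ}

noncomputable def prefixSum (x : Fin n → ℝ) (k : ℕ) : ℝ :=
  ∑ j ∈ univ.filter (fun j : Fin n => (j : ℕ) < k), x j

@[simp]
theorem prefixSum_zero (x : Fin n → ℝ) : prefixSum x 0 = 0 := by
  simp [prefixSum]

theorem prefixSum_succ (x : Fin n → ℝ) (i : Fin n) :
    prefixSum x (i + 1) = prefixSum x i + x i := by
  have : univ.filter (fun j : Fin n => (j : ℕ) < i + 1)
      = insert i (univ.filter (fun j : Fin n => (j : ℕ) < i)) := by
    ext j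
    simp only [Finset.mem_filter, Finset.mem_univ, true_and, Finset.mem_insert, Fin.ext_iff]
    omega
  rw [prefixSum, this, sum_insert (by simp), add_comm, prefixSum]

theorem prefixSum_indicator (B : Finset (Fin n)) (k : ℕ) :
    prefixSum (fun i => if i ∈ B then (1 : ℝ) else 0) k
      = (B.filter (fun j : Fin n => (j : ℕ) < k)).card := by
  rw [prefixSum, sum_boole, filter_filter]
  congr 2
  ext j
  simp [and_comm]

theorem isLinearMap_prefixSum (k : ℕ) : IsLinearMap ℝ fun x : Fin n → ℝ => prefixSum x k :=
  ⟨fun _ _ => sum_add_distrib, fun _ _ => (mul_sum ..).symm⟩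

def pathPolytope (n : ℕ) (p q : ℕ → ℕ) : Set (Fin n → ℝ) :=
  {x | (∀ i, 0 ≤ x i ∧ x i ≤ 1) ∧ ∀ k ≤ n, (p k : ℝ) ≤ prefixSum x k ∧ prefixSum x k ≤ q k}

def basisVectors (n r : ℕ) (p q : ℕ → ℕ) : Set (Fin n → ℝ) :=
  {x | ∃ B : Finset (Fin n), B.card = r ∧
    (∀ i ≤ n, p i ≤ (B.filter (fun j : Fin n => (j : ℕ) < i)).card ∧
      (B.filter (fun j : Fin n => (j : ℕ) < i)).card ≤ q i) ∧
    x = fun i => if i ∈ B then 1 else 0}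

variable {r : ℕ} {p q : ℕ → ℕ}

theorem convex_pathPolytope : Convex ℝ (pathPolytope n p q) := by
  have hcoord (i : Fin n) : IsLinearMap ℝ fun x : Fin n → ℝ => x i := (LinearMap.proj i).isLinear
  have : pathPolytope n p q = (⋂ i, {x | 0 ≤ x i} ∩ {x | x i ≤ 1}) ∩
      ⋂ k, ⋂ (_ : k ≤ n), {x | (p k : ℝ) ≤ prefixSum x k} ∩ {x | prefixSum x k ≤ q k} := by
    ext
    simp [pathPolytope, forall_and]
  rw [this]
  exact (convex_iInter fun i =>
      (convex_halfSpace_ge (hcoord i) 0).inter (convex_halfSpace_le (hcoord i) 1)).inter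
    (convex_iInter fun k => convex_iInter fun _ =>
      (convex_halfSpace_ge (isLinearMap_prefixSum k) _).inter
        (convex_halfSpace_le (isLinearMap_prefixSum k) _))

theorem basisVectors_subset_pathPolytope : basisVectors n r p q ⊆ pathPolytope n p q := by
  rintro _ ⟨B, -, hB, rfl⟩
  refine ⟨fun i => ?_, fun k hk => ?_⟩
  · by_cases h : i ∈ B <;> simp [h]
  · rw [prefixSum_indicator]
    exact ⟨mod_cast (hB k hk).1, mod_cast (hB k hk).2⟩

theorem basisVectors_finite : (basisVectors n r p q).Finite :=
  (Set.finite_range fun B : Finset (Fin n) => fun i => if i ∈ B then (1 : ℝ) else 0).subset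
    fun _ ⟨B, _, _, hx⟩ => ⟨B, hx.symm⟩

theorem mem_basisVectors_of_mem_pathPolytope (hpn : p n = r) (hqn : q n = r) {x : Fin n → ℝ}
    (hx : x ∈ pathPolytope n p q) (hx01 : ∀ i, x i = 0 ∨ x i = 1) :
    x ∈ basisVectors n r p q := by
  classical
  set B := univ.filter (fun i => x i = 1)
  have hxB : x = fun i => if i ∈ B then 1 else 0 := by
    funext i
    rcases hx01 i with h | h <;> simp [B, h]
  have hcount : ∀ k ≤ n, (p k : ℝ) ≤ (B.filter (fun j : Fin n => (j : ℕ) < k)).card ∧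
      ((B.filter (fun j : Fin n => (j : ℕ) < k)).card : ℝ) ≤ q k := by
    intro k hk
    rw [← prefixSum_indicator, ← hxB]
    exact hx.2 k hk
  have hfilter : B.filter (fun j : Fin n => (j : ℕ) < n) = B := filter_true_of_mem fun j _ => j.isLt
  refine ⟨B, ?_, fun k hk => ⟨mod_cast (hcount k hk).1, mod_cast (hcount k hk).2⟩, hxB⟩
  have hcard := hcount n le_rfl
  rw [hfilter, hpn, hqn] at hcard
  exact_mod_cast le_antisymm hcard.2 hcard.1

noncomputable def roundPrefixSums (θ : ℝ) (x : Fin n → ℝ) : Fin n → ℝ :=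
  fun i => ⌊prefixSum x (i + 1) + θ⌋ - ⌊prefixSum x i + θ⌋

theorem prefixSum_roundPrefixSums (θ : ℝ) (x : Fin n → ℝ) {k : ℕ} (hk : k ≤ n) :
    prefixSum (roundPrefixSums θ x) k = ⌊prefixSum x k + θ⌋ - ⌊θ⌋ := by
  induction k with
  | zero => simp
  | succ k ih =>
    have := prefixSum_succ (roundPrefixSums θ x) ⟨k, hk⟩
    simp only at this
    rw [this, ih (by omega), roundPrefixSums]
    ring

theorem roundPrefixSums_eq_zero_or_one (θ : ℝ) {x : Fin n → ℝ} (hx : ∀ i, 0 ≤ x i ∧ x i ≤ 1)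
    (i : Fin n) : roundPrefixSums θ x i = 0 ∨ roundPrefixSums θ x i = 1 := by
  have hlo : ⌊prefixSum x i + θ⌋ ≤ ⌊prefixSum x (i + 1) + θ⌋ :=
    Int.floor_mono (by rw [prefixSum_succ]; linarith [(hx i).1])
  have hhi : ⌊prefixSum x (i + 1) + θ⌋ ≤ ⌊prefixSum x i + θ⌋ + 1 := by
    rw [← Int.floor_add_one]
    exact Int.floor_mono (by rw [prefixSum_succ]; linarith [(hx i).2])
  rcases (by omega : ⌊prefixSum x (i + 1) + θ⌋ = ⌊prefixSum x i + θ⌋ ∨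
    ⌊prefixSum x (i + 1) + θ⌋ = ⌊prefixSum x i + θ⌋ + 1) with h | h <;>
  simp [roundPrefixSums, h]

theorem roundPrefixSums_mem_pathPolytope {θ : ℝ} (hθ : θ ∈ Set.Ico 0 1) {x : Fin n → ℝ}
    (hx : x ∈ pathPolytope n p q) : roundPrefixSums θ x ∈ pathPolytope n p q := by
  have hθ0 : ⌊θ⌋ = 0 := Int.floor_eq_zero_iff.2 hθ
  refine ⟨fun i => ?_, fun k hk => ?_⟩
  · rcases roundPrefixSums_eq_zero_or_one θ hx.1 i with h | h <;> simp [h]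
  · rw [prefixSum_roundPrefixSums θ x hk, hθ0, Int.cast_zero, sub_zero]
    obtain ⟨hp, hq⟩ := hx.2 k hk
    constructor
    · exact_mod_cast Int.le_floor.2 (by push_cast; linarith [hθ.1])
    · have : ⌊prefixSum x k + θ⌋ < (q k : ℤ) + 1 := Int.floor_lt.2 (by push_cast; linarith [hθ.2])
      exact_mod_cast Int.lt_add_one_iff.1 this

theorem integrableOn_roundPrefixSums_apply (x : Fin n → ℝ) (i : Fin n) :
    IntegrableOn (fun θ => roundPrefixSums θ x i) (Set.Ico 0 1) :=
  (integrableOn_floor_add _).sub (integrableOn_floor_add _)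

theorem setIntegral_roundPrefixSums (x : Fin n → ℝ) :
    ∫ θ in Set.Ico (0 : ℝ) 1, roundPrefixSums θ x = x := by
  funext i
  rw [eval_integral fun i => integrableOn_roundPrefixSums_apply x i]
  simp only [roundPrefixSums]
  rw [integral_sub (integrableOn_floor_add _) (integrableOn_floor_add _), setIntegral_floor_add,
    setIntegral_floor_add, prefixSum_succ]
  ring

theorem pathPolytope_subset_convexHull_basisVectors (hpn : p n = r) (hqn : q n = r) :
    pathPolytope n p q ⊆ convexHull ℝ (basisVectors n r p q) := by
  intro x hx
  have : IsProbabilityMeasure (volume.restrict (Set.Ico (0 : ℝ) 1)) := ⟨by simp⟩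
  rw [← setIntegral_roundPrefixSums x]
  refine (convex_convexHull ℝ _).integral_mem (basisVectors_finite.isClosed_convexHull ℝ)
    (ae_restrict_of_forall_mem measurableSet_Ico fun θ hθ => subset_convexHull ℝ _ ?_)
    (Integrable.of_eval (integrableOn_roundPrefixSums_apply x))
  exact mem_basisVectors_of_mem_pathPolytope hpn hqn (roundPrefixSums_mem_pathPolytope hθ hx)
    (roundPrefixSums_eq_zero_or_one θ hx.1)

theorem convexHull_basisVectors (hpn : p n = r) (hqn : q n = r) :
    convexHull ℝ (basisVectors n r p q) = pathPolytope n p q :=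
  (convexHull_min basisVectors_subset_pathPolytope convex_pathPolytope).antisymm
    (pathPolytope_subset_convexHull_basisVectors hpn hqn)

end LatticePathPolytope

theorem stmt10_general (m r : ℕ) (p q : ℕ → ℕ)
    (hpend : p (m + r) = r) (hqend : q (m + r) = r) :
    convexHull ℝ {x : Fin (m + r) → ℝ | ∃ B : Finset (Fin (m + r)), B.card = r ∧
        (∀ i ≤ m + r, p i ≤ (B.filter (fun j : Fin (m + r) => (j : ℕ) < i)).card ∧
          (B.filter (fun j : Fin (m + r) => (j : ℕ) < i)).card ≤ q i) ∧
        x = fun i => if i ∈ B then 1 else 0}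
      = {x : Fin (m + r) → ℝ | (∀ i, 0 ≤ x i ∧ x i ≤ 1) ∧
          ∀ k ≤ m + r,
            (p k : ℝ) ≤ ∑ j ∈ Finset.univ.filter (fun j : Fin (m + r) => (j : ℕ) < k), x j ∧
            ∑ j ∈ Finset.univ.filter (fun j : Fin (m + r) => (j : ℕ) < k), x j ≤ (q k : ℝ)} :=
  LatticePathPolytope.convexHull_basisVectors hpend hqend

/-- let `P, Q` be lattice paths from `(0,0)` to `(m,r)` with `P` never above
`Q`, described by their prefix North-step counts `p i`, `q i`.  The lattice path matroid
polytope `P(M[P,Q])` — the convex hull of the indicator vectors of the bases, i.e. of the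
`r`-subsets `B` with `p i ≤ #(B ∩ [0,i)) ≤ q i` for all `i` — equals the set of points
`x ∈ ℝ^{m+r}` with `0 ≤ x i ≤ 1` and `p k ≤ x₁ + ⋯ + x_k ≤ q k` for all `k ≤ m + r`
(in particular `x₁ + ⋯ + x_{m+r} = r`). -/
theorem stmt10 (m r : ℕ) (p q : ℕ → ℕ)
    (hp0 : p 0 = 0) (hq0 : q 0 = 0)
    (hpstep : ∀ i, p (i + 1) = p i ∨ p (i + 1) = p i + 1)
    (hqstep : ∀ i, q (i + 1) = q i ∨ q (i + 1) = q i + 1)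
    (hpend : p (m + r) = r) (hqend : q (m + r) = r)
    (hpq : ∀ i, p i ≤ q i) :
    convexHull ℝ {x : Fin (m + r) → ℝ | ∃ B : Finset (Fin (m + r)), B.card = r ∧
        (∀ i ≤ m + r, p i ≤ (B.filter (fun j : Fin (m + r) => (j : ℕ) < i)).card ∧
          (B.filter (fun j : Fin (m + r) => (j : ℕ) < i)).card ≤ q i) ∧
        x = fun i => if i ∈ B then 1 else 0}
      = {x : Fin (m + r) → ℝ | (∀ i, 0 ≤ x i ∧ x i ≤ 1) ∧
          ∀ k ≤ m + r,
            (p k : ℝ) ≤ ∑ j ∈ Finset.univ.filter (fun j : Fin (m + r) => (j : ℕ) < k), x j ∧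
            ∑ j ∈ Finset.univ.filter (fun j : Fin (m + r) => (j : ℕ) < k), x j ≤ (q k : ℝ)} :=
  stmt10_general m r p q hpend hqend
end

section
/- Let M[P,Q] be a lattice path matroid presented as the transversal matroid on {1,...,m+r} with presentation N_i = [s_i, t_i]. If there exists an integer x and index j with s_j < x < t_j and s_{j+1} < x+1 < t_{j+1}, then P(M[P,Q]) admits a nontrivial hyperplane split into two matroid polytopes P(M_1) and P(M_2), where M_1 and M_2 are again lattice path matroids, B(M_1) = {B basis of M : |B ∩ {1,...,x}| ≤ j} and B(M_2) = {B basis of M : |B ∩ {x+1,...,m+r}| ≤ r - j}. -/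
/-!
On the indicator vector of a set `B`, the linear form `prefixSum x` (the sum of the coordinates
`0, …, x`) counts the elements of `B` that are `≤ x`. So `P(M₁)` and `P(M₂)` are the two halves
of `P(M)` cut by the hyperplane `prefixSum x = j`, as soon as `P(M) ∩ {prefixSum x ≤ j}` is known
to be the hull of the bases with at most `j` elements `≤ x` (and symmetrically). The geometric
claims then hold for any convex set cut by a hyperplane that separates two of its points; here
the bases `{s 1, …, s r}` and `{t 1, …, t r}` lie strictly on either side.

The description of the halves comes from an exchange property. Sort the multiset union of two
bases `B`, `B'` and deal its elements alternately into `C` and `C'`. Then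
`1_B + 1_B' = 1_C + 1_C'`, and below every threshold `C` and `C'` have the ceiling and the floor
of the average count of `B` and `B'`. By the Hall-type description of the bases (fewer than `k`
elements below `s k`, at least `k` elements up to `t k`), `C` and `C'` are bases. Hence, among
the convex combinations of bases representing a point of `P(M) ∩ {prefixSum x ≤ j}`, one that
minimises the weighted excess over the level `j` puts no weight above it.

The restricted families are again lattice path matroids: for `M₁` raise the lower ends `s k`,
`k > j`, to `x + k - j`; for `M₂` lower the upper ends `t k`, `k ≤ j`, to `x + k - j`.
-/

open Finset

/-- An interval presentation `N_k = [s k, t k]`, `k = 1, …, r`, of a lattice path matroid on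
the ground set `{1, …, m+r}`: the intervals are nonempty, contained in `{1, …, m+r}`, and
both endpoint sequences are strictly increasing. -/
def IsIntervalPres (m r : ℕ) (s t : ℕ → ℕ) : Prop :=
  (∀ k, 1 ≤ k → k ≤ r → 1 ≤ s k ∧ t k ≤ m + r ∧ s k ≤ t k) ∧
  (∀ k, 1 ≤ k → k < r → s k < s (k + 1) ∧ t k < t (k + 1))

/-- The bases of the transversal matroid on `{1, …, m+r}` with presentation
`(N_k = [s k, t k] : 1 ≤ k ≤ r)`: the partial transversals of size `r` (= the rank). -/
def transBases (m r : ℕ) (s t : ℕ → ℕ) : Set (Finset ℕ) :=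
  {B | B ⊆ Finset.Icc 1 (m + r) ∧ B.card = r ∧
    ∃ f : ℕ → ℕ, Set.InjOn f ↑B ∧
      ∀ b ∈ B, f b ∈ Finset.Icc 1 r ∧ s (f b) ≤ b ∧ b ≤ t (f b)}

/-- The polytope of a family `𝔅` of subsets of `{1,…,m+r}`: the convex hull of the
indicator vectors. -/
def basesPoly (𝔅 : Set (Finset ℕ)) : Set (ℕ → ℝ) :=
  convexHull ℝ {v | ∃ B ∈ 𝔅, v = fun i => if i ∈ B then (1 : ℝ) else 0}

section Counting

theorem card_filter_lt_add_one (B : Finset ℕ) (y : ℕ) :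
    #{b ∈ B | b < y + 1} = #{b ∈ B | b < y} + if y ∈ B then 1 else 0 := by
  have : {b ∈ B | b < y + 1} = {b ∈ B | b < y} ∪ {b ∈ B | b = y} := by
    ext b
    simp only [mem_filter, mem_union, ← and_or_left, Nat.lt_add_one_iff_lt_or_eq]
  rw [this, card_union_of_disjoint (disjoint_filter.2 fun _ _ h h' => by omega), filter_eq']
  split_ifs <;> simp

theorem card_filter_le_lt_of_lt {B : Finset ℕ} {a b : ℕ} (hab : a < b) (hb : b ∈ B) :
    #{x ∈ B | x ≤ a} < #{x ∈ B | x ≤ b} := by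
  refine card_lt_card ((ssubset_iff_of_subset fun x hx => ?_).2 ⟨b, ?_, ?_⟩)
  · simp only [mem_filter] at hx ⊢
    exact ⟨hx.1, hx.2.trans hab.le⟩
  · simp [hb]
  · simp only [mem_filter, not_and, not_le]
    exact fun _ => hab

theorem filter_lt_add_one_eq_self {B : Finset ℕ} {n : ℕ} (hB : B ⊆ Icc 1 n) :
    {b ∈ B | b < n + 1} = B :=
  filter_true_of_mem fun _ hb => Nat.lt_add_one_iff.2 (mem_Icc.1 (hB hb)).2

theorem card_filter_le_add_card_filter_add_one_le (B : Finset ℕ) (x : ℕ) :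
    #{b ∈ B | b ≤ x} + #{b ∈ B | x + 1 ≤ b} = #B := by
  rw [← card_filter_add_card_filter_not (s := B) (· ≤ x)]
  congr 2
  ext b
  simp only [mem_filter, not_le, Nat.add_one_le_iff]

end Counting

section HalfSpace

variable {𝕜 E : Type*} [Field 𝕜] [LinearOrder 𝕜] [IsStrictOrderedRing 𝕜]
  [AddCommGroup E] [Module 𝕜 E]

theorem direction_affineSpan_sep_le {Q : Set E} (hQ : Convex 𝕜 Q) (L : E →ₗ[𝕜] 𝕜) {c : 𝕜}
    {q : E} (hq : q ∈ Q) (hqc : L q < c) :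
    (affineSpan 𝕜 {x ∈ Q | L x ≤ c}).direction = (affineSpan 𝕜 Q).direction := by
  have hq' : q ∈ {x ∈ Q | L x ≤ c} := ⟨hq, hqc.le⟩
  refine le_antisymm (AffineSubspace.direction_le (affineSpan_mono 𝕜 (Set.sep_subset _ _))) ?_
  rw [direction_affineSpan, direction_affineSpan, vectorSpan_eq_span_vsub_set_right 𝕜 hq,
    vectorSpan_eq_span_vsub_set_right 𝕜 hq']
  refine Submodule.span_le.2 ?_
  rintro _ ⟨y, hy, rfl⟩
  obtain ⟨θ, hθ, hθ1, hθc⟩ : ∃ θ : 𝕜, 0 < θ ∧ θ ≤ 1 ∧ L (q + θ • (y - q)) ≤ c := by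
    rcases le_or_gt (L y) c with h | h
    · exact ⟨1, one_pos, le_rfl, by simpa using h⟩
    · refine ⟨(c - L q) / (L y - L q), div_pos (by linarith) (by linarith),
        (div_le_one (by linarith)).2 (by linarith), ?_⟩
      rw [map_add, map_smul, map_sub, smul_eq_mul,
        div_mul_cancel₀ _ (by linarith : L y - L q ≠ 0)]
      linarith
  have hz : q + θ • (y - q) ∈ {x ∈ Q | L x ≤ c} :=
    ⟨hQ.add_smul_sub_mem hq hy ⟨hθ.le, hθ1⟩, hθc⟩
  have := Submodule.smul_mem _ θ⁻¹ (Submodule.subset_span ⟨_, hz, rfl⟩ :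
    (q + θ • (y - q)) -ᵥ q ∈ Submodule.span 𝕜 ((· -ᵥ q) '' {x ∈ Q | L x ≤ c}))
  simpa [smul_smul, inv_mul_cancel₀ hθ.ne'] using this

theorem isExtreme_sep_le_inter_sep_ge (Q : Set E) (L : E →ₗ[𝕜] 𝕜) (c : 𝕜) :
    IsExtreme 𝕜 {x ∈ Q | L x ≤ c} ({x ∈ Q | L x ≤ c} ∩ {x ∈ Q | c ≤ L x}) := by
  refine ⟨Set.inter_subset_left, ?_⟩
  rintro x₁ ⟨hx₁, hLx₁⟩ x₂ ⟨-, hLx₂⟩ z ⟨-, -, hLz⟩ ⟨a, b, ha, hb, hab, rfl⟩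
  simp only [map_add, map_smul, smul_eq_mul] at hLz
  have hc : a * c + b * c = c := by rw [← add_mul, hab, one_mul]
  refine ⟨⟨hx₁, hLx₁⟩, hx₁, ?_⟩
  by_contra! h
  linarith [mul_lt_mul_of_pos_left h ha, mul_le_mul_of_nonneg_left hLx₂ hb.le]

theorem hyperplane_split {Q : Set E} (hQ : Convex 𝕜 Q) (L : E →ₗ[𝕜] 𝕜) {c : 𝕜} {q₁ q₂ : E}
    (hq₁ : q₁ ∈ Q) (hq₂ : q₂ ∈ Q) (hq₁c : L q₁ < c) (hq₂c : c < L q₂) :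
    Q = {x ∈ Q | L x ≤ c} ∪ {x ∈ Q | c ≤ L x} ∧
    {x ∈ Q | L x ≤ c} ≠ Q ∧ {x ∈ Q | c ≤ L x} ≠ Q ∧
    (affineSpan 𝕜 {x ∈ Q | L x ≤ c}).direction = (affineSpan 𝕜 Q).direction ∧
    (affineSpan 𝕜 {x ∈ Q | c ≤ L x}).direction = (affineSpan 𝕜 Q).direction ∧
    IsExtreme 𝕜 {x ∈ Q | L x ≤ c} ({x ∈ Q | L x ≤ c} ∩ {x ∈ Q | c ≤ L x}) ∧
    IsExtreme 𝕜 {x ∈ Q | c ≤ L x} ({x ∈ Q | L x ≤ c} ∩ {x ∈ Q | c ≤ L x}) := by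
  have hge : {x ∈ Q | c ≤ L x} = {x ∈ Q | (-L) x ≤ -c} := by
    simp only [LinearMap.neg_apply, neg_le_neg_iff]
  have hle : {x ∈ Q | L x ≤ c} = {x ∈ Q | -c ≤ (-L) x} := by
    simp only [LinearMap.neg_apply, neg_le_neg_iff]
  refine ⟨?_, fun h => ?_, fun h => ?_, direction_affineSpan_sep_le hQ L hq₁ hq₁c, ?_,
    isExtreme_sep_le_inter_sep_ge Q L c, ?_⟩
  · ext x
    exact ⟨fun hx => (le_total (L x) c).imp (⟨hx, ·⟩) (⟨hx, ·⟩), fun h => h.elim (·.1) (·.1)⟩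
  · exact absurd hq₂c (not_lt.2 (h.ge hq₂).2)
  · exact absurd hq₁c (not_lt.2 (h.ge hq₁).2)
  · rw [hge]
    exact direction_affineSpan_sep_le hQ (-L) hq₂ (by simpa using hq₂c)
  · rw [Set.inter_comm, hge, hle]
    exact isExtreme_sep_le_inter_sep_ge Q (-L) (-c)

end HalfSpace

section StdSimplex

variable {ι E : Type*} [Fintype ι] [AddCommGroup E] [Module ℝ E]

theorem isClosed_setOf_linearCombination_eq (v : ι → E) (p : E) :
    IsClosed {w : ι → ℝ | Fintype.linearCombination ℝ v w = p} := by
  rcases Set.eq_empty_or_nonempty {w : ι → ℝ | Fintype.linearCombination ℝ v w = p} with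
    h | ⟨w₀, hw₀ : Fintype.linearCombination ℝ v w₀ = p⟩
  · exact h ▸ isClosed_empty
  have : {w | Fintype.linearCombination ℝ v w = p} =
      (· - w₀) ⁻¹' (LinearMap.ker (Fintype.linearCombination ℝ v)) := by
    ext w
    simp [sub_eq_zero, hw₀]
  rw [this]
  exact (LinearMap.ker _).closed_of_finiteDimensional.preimage (continuous_sub_right w₀)

theorem linearCombination_mem_convexHull {v : ι → E} {w : ι → ℝ} (hw : w ∈ stdSimplex ℝ ι)
    {S : Set E} (hS : ∀ i, 0 < w i → v i ∈ S) :
    Fintype.linearCombination ℝ v w ∈ convexHull ℝ S := by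
  classical
  have hpos : ∀ i ∈ univ, w i ≠ 0 → 0 < w i := fun i _ h => (hw.1 i).lt_of_ne' h
  rw [Fintype.linearCombination_apply,
    ← sum_filter_of_ne fun i hi h => hpos i hi fun h0 => h (by simp [h0])]
  refine (convex_convexHull ℝ S).sum_mem (fun i _ => hw.1 i) ?_
    fun i hi => subset_convexHull ℝ S (hS i (mem_filter.1 hi).2)
  rw [sum_filter_of_ne hpos, hw.2]

theorem exists_pos_lt_of_linearCombination_le {v : ι → E} {w : ι → ℝ} (hw : w ∈ stdSimplex ℝ ι)
    (L : E →ₗ[ℝ] ℝ) {c : ℝ} (hc : L (Fintype.linearCombination ℝ v w) ≤ c) {a : ι}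
    (ha : 0 < w a) (hac : c < L (v a)) : ∃ b, 0 < w b ∧ L (v b) < c := by
  by_contra! h
  have hsum : 0 < ∑ b, w b * (L (v b) - c) :=
    sum_pos' (fun b _ => (hw.1 b).eq_or_lt.elim (fun h0 => by simp [← h0])
      fun hpos => mul_nonneg hpos.le (sub_nonneg.2 (h b hpos)))
      ⟨a, mem_univ _, mul_pos ha (sub_pos.2 hac)⟩
  simp only [mul_sub, sum_sub_distrib, ← sum_mul, hw.2, one_mul] at hsum
  simp only [Fintype.linearCombination_apply, map_sum, map_smul, smul_eq_mul] at hc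
  linarith

theorem linearCombination_exchange [DecidableEq ι] {M : Type*} [AddCommGroup M] [Module ℝ M]
    (u : ι → M) (w : ι → ℝ) (μ : ℝ) (a b a' b' : ι) :
    Fintype.linearCombination ℝ u
        (w + μ • (Pi.single a' 1 + Pi.single b' 1 - Pi.single a 1 - Pi.single b 1)) =
      Fintype.linearCombination ℝ u w + μ • (u a' + u b' - u a - u b) := by
  simp [map_add, map_sub, map_smul]

theorem exists_stdSimplex_exchange [DecidableEq ι] {v : ι → E} {e w : ι → ℝ}
    (hw : w ∈ stdSimplex ℝ ι) {a b a' b' : ι} (hab : a ≠ b) (ha : 0 < w a) (hb : 0 < w b)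
    (hv : v a + v b = v a' + v b') (he : e a' + e b' < e a + e b) :
    ∃ w' ∈ stdSimplex ℝ ι, Fintype.linearCombination ℝ v w' = Fintype.linearCombination ℝ v w ∧
      Fintype.linearCombination ℝ e w' < Fintype.linearCombination ℝ e w := by
  set μ := min (w a) (w b)
  have hμ : 0 < μ := lt_min ha hb
  refine ⟨w + μ • (Pi.single a' 1 + Pi.single b' 1 - Pi.single a 1 - Pi.single b 1), ⟨?_, ?_⟩,
    ?_, ?_⟩
  · intro i
    have hw0 := hw.1 i
    have hμa : μ ≤ w a := min_le_left _ _
    have hμb : μ ≤ w b := min_le_right _ _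
    simp only [Pi.add_apply, Pi.smul_apply, Pi.sub_apply, Pi.single_apply, smul_eq_mul]
    split_ifs <;> subst_vars <;> first | exact absurd rfl hab | linarith
  · have := linearCombination_exchange (fun _ => (1 : ℝ)) w μ a b a' b'
    simp only [Fintype.linearCombination_apply, smul_eq_mul, mul_one] at this
    rw [this, hw.2]
    ring
  · rw [linearCombination_exchange, sub_sub, hv, sub_self, smul_zero, add_zero]
  · rw [linearCombination_exchange, smul_eq_mul]
    linarith [mul_neg_of_pos_of_neg hμ (by linarith : e a' + e b' - e a - e b < 0)]

end StdSimplex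

theorem max_sub_add_max_sub_lt {u v u' v' c : ℝ} (hv : v < c) (hu : c < u) (hu' : u' < u)
    (hv' : v' < u) (hsum : u' + v' = u + v) :
    max (u' - c) 0 + max (v' - c) 0 < max (u - c) 0 + max (v - c) 0 := by
  rw [max_eq_left (sub_nonneg.2 hu.le), max_eq_right (sub_nonpos.2 hv.le)]
  rcases le_total (u' - c) 0 with h₁ | h₁ <;> rcases le_total (v' - c) 0 with h₂ | h₂ <;>
    simp only [max_eq_left, max_eq_right, h₁, h₂] <;> linarith

section Exchange

variable {E : Type*} [AddCommGroup E] [Module ℝ E]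

def ExchangeAt (L : E →ₗ[ℝ] ℝ) (c : ℝ) (V : Set E) : Prop :=
  ∀ a ∈ V, ∀ b ∈ V, L b < c → c < L a → ∃ a' ∈ V, ∃ b' ∈ V,
    a + b = a' + b' ∧ L a' ∈ Set.Ioo (L b) (L a) ∧ L b' ∈ Set.Ioo (L b) (L a)

variable {L : E →ₗ[ℝ] ℝ} {c : ℝ} {V : Set E}

theorem ExchangeAt.neg (h : ExchangeAt L c V) : ExchangeAt (-L) (-c) V := by
  intro a ha b hb hbc hca
  simp only [LinearMap.neg_apply, neg_lt_neg_iff] at hbc hca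
  obtain ⟨a', ha', b', hb', hsum, ⟨h₁, h₂⟩, h₃, h₄⟩ := h b hb a ha hca hbc
  refine ⟨a', ha', b', hb', by rw [add_comm, hsum], ?_, ?_⟩ <;>
    simp only [LinearMap.neg_apply, Set.mem_Ioo, neg_lt_neg_iff] <;> constructor <;> assumption

theorem ExchangeAt.convexHull_sep_le (hex : ExchangeAt L c V) (hV : V.Finite) :
    convexHull ℝ {a ∈ V | L a ≤ c} = {p ∈ convexHull ℝ V | L p ≤ c} := by
  classical
  refine subset_antisymm (convexHull_min (fun a ha => ⟨subset_convexHull ℝ V ha.1, ha.2⟩)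
    ((convex_convexHull ℝ V).inter (convex_halfSpace_le L.isLinear c))) ?_
  rintro p ⟨hp, hpc⟩
  let _ := hV.fintype
  let A := Fintype.linearCombination ℝ ((↑) : V → E)
  let e : V → ℝ := fun a => max (L a - c) 0
  have hT : IsCompact {w ∈ stdSimplex ℝ V | A w = p} :=
    (isCompact_stdSimplex ℝ V).inter_right (isClosed_setOf_linearCombination_eq _ p)
  obtain ⟨w₀, hw₀⟩ : {w ∈ stdSimplex ℝ V | A w = p}.Nonempty := by
    rw [hV.convexHull_eq_image] at hp
    obtain ⟨w, hw, rfl⟩ := hp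
    exact ⟨w, hw, by simp [A, Fintype.linearCombination_apply]⟩
  obtain ⟨w, ⟨hw, hwp⟩, hmin⟩ := hT.exists_isMinOn ⟨w₀, hw₀⟩
    (LinearMap.continuous_of_finiteDimensional (Fintype.linearCombination ℝ e)).continuousOn
  rw [← hwp]
  refine linearCombination_mem_convexHull hw fun a hwa => ⟨a.2, ?_⟩
  -- otherwise an exchange would lower the total excess `∑ a, w a * e a` of the minimizer `w`
  by_contra! hac
  obtain ⟨b, hwb, hbc⟩ := exists_pos_lt_of_linearCombination_le hw L (hwp ▸ hpc) hwa hac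
  obtain ⟨a', ha', b', hb', hsum, ⟨-, ha'a⟩, -, hb'a⟩ := hex a a.2 b b.2 hbc hac
  have he : e ⟨a', ha'⟩ + e ⟨b', hb'⟩ < e a + e b :=
    max_sub_add_max_sub_lt hbc hac ha'a hb'a (by rw [← map_add, ← map_add, hsum])
  obtain ⟨w', hw', hw'p, hlt⟩ := exists_stdSimplex_exchange (v := ((↑) : V → E)) hw
    (fun h => (hbc.trans hac).ne (by rw [h])) hwa hwb hsum he
  exact (hmin ⟨hw', hw'p.trans hwp⟩).not_gt hlt

theorem ExchangeAt.convexHull_sep_ge (hex : ExchangeAt L c V) (hV : V.Finite) :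
    convexHull ℝ {a ∈ V | c ≤ L a} = {p ∈ convexHull ℝ V | c ≤ L p} := by
  simpa only [LinearMap.neg_apply, neg_le_neg_iff] using hex.neg.convexHull_sep_le hV

end Exchange

def indVec (B : Finset ℕ) : ℕ → ℝ := fun i => if i ∈ B then 1 else 0

def prefixSum (x : ℕ) : (ℕ → ℝ) →ₗ[ℝ] ℝ := ∑ i ∈ range (x + 1), LinearMap.proj i

theorem prefixSum_indVec (x : ℕ) (B : Finset ℕ) : prefixSum x (indVec B) = #{b ∈ B | b ≤ x} := by
  simp only [prefixSum, LinearMap.coe_sum, LinearMap.coe_proj, Finset.sum_apply, Function.eval,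
    indVec, sum_boole, Nat.cast_inj]
  congr 1
  ext b
  simp only [mem_filter, mem_range, Nat.lt_add_one_iff, and_comm]

theorem basesPoly_eq_convexHull_image (𝔅 : Set (Finset ℕ)) :
    basesPoly 𝔅 = convexHull ℝ (indVec '' 𝔅) := by
  simp only [basesPoly, Set.image, eq_comm (a := indVec _)]
  rfl

theorem image_indVec_sep {𝔅 : Set (Finset ℕ)} {x : ℕ} {P : Finset ℕ → Prop} {Q : ℝ → Prop}
    (hPQ : ∀ B, P B ↔ Q #{b ∈ B | b ≤ x}) :
    indVec '' {B ∈ 𝔅 | P B} = {v ∈ indVec '' 𝔅 | Q (prefixSum x v)} := by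
  ext v
  constructor
  · rintro ⟨B, ⟨hB, hP⟩, rfl⟩
    exact ⟨⟨B, hB, rfl⟩, by rwa [prefixSum_indVec, ← hPQ]⟩
  · rintro ⟨⟨B, hB, rfl⟩, hQ⟩
    exact ⟨B, ⟨hB, by rwa [prefixSum_indVec, ← hPQ] at hQ⟩, rfl⟩

/-- The elements in the positions `≡ p (mod 2)` of the sorted multiset union of `B` and `B'`:
an element `y` of only one of them sits at position `#{b ∈ B | b < y} + #{b ∈ B' | b < y}`, and
an element of both fills two consecutive positions. -/
def interleave (B B' : Finset ℕ) (p : ℕ) : Finset ℕ :=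
  {y ∈ B ∪ B' | y ∈ B ∧ y ∈ B' ∨ (#{b ∈ B | b < y} + #{b ∈ B' | b < y}) % 2 = p}

theorem card_filter_lt_interleave (B B' : Finset ℕ) {p : ℕ} (hp : p ≤ 1) (y : ℕ) :
    #{c ∈ interleave B B' p | c < y} = (#{b ∈ B | b < y} + #{b ∈ B' | b < y} + 1 - p) / 2 := by
  induction y with
  | zero =>
    simp only [not_lt_zero, filter_false, card_empty, add_zero]
    omega
  | succ y ih =>
    simp only [card_filter_lt_add_one, ih]
    by_cases hB : y ∈ B <;> by_cases hB' : y ∈ B' <;>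
      simp only [interleave, mem_filter, mem_union, hB, hB', or_self, and_self, or_true, or_false,
        true_or, false_or, and_true, and_false, true_and, false_and, ↓reduceIte, add_zero] <;>
      (try split_ifs) <;> omega

theorem indVec_interleave (B B' : Finset ℕ) :
    indVec (interleave B B' 0) + indVec (interleave B B' 1) = indVec B + indVec B' := by
  ext y
  by_cases hB : y ∈ B <;> by_cases hB' : y ∈ B' <;>
    simp only [interleave, Pi.add_apply, indVec, mem_filter, mem_union, hB, hB', or_self,
      and_self, or_true, or_false, true_or, false_or, and_true, and_false, true_and, false_and,
      ↓reduceIte, add_zero, zero_add] <;>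
    split_ifs <;> first | omega | norm_num

theorem transBases_finite {m r : ℕ} {s t : ℕ → ℕ} : (transBases m r s t).Finite :=
  (Icc 1 (m + r)).powerset.finite_toSet.subset fun _ hB => mem_powerset.2 hB.1

theorem transBases_mono {m r : ℕ} {s t s' t' : ℕ → ℕ} (hs : ∀ k ∈ Icc 1 r, s k ≤ s' k)
    (ht : ∀ k ∈ Icc 1 r, t' k ≤ t k) : transBases m r s' t' ⊆ transBases m r s t := by
  rintro B ⟨hB, hcard, f, hf, hfB⟩
  refine ⟨hB, hcard, f, hf, fun b hb => ?_⟩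
  obtain ⟨hfb, hsb, hbt⟩ := hfB b hb
  exact ⟨hfb, (hs _ hfb).trans hsb, hbt.trans (ht _ hfb)⟩

theorem transBases_sep_card_filter_add_one_le {m r : ℕ} {s t : ℕ → ℕ} (x : ℕ) {j : ℕ}
    (hjr : j ≤ r) :
    {B ∈ transBases m r s t | #{b ∈ B | x + 1 ≤ b} ≤ r - j} =
      {B ∈ transBases m r s t | j ≤ #{b ∈ B | b ≤ x}} := by
  ext B
  have := card_filter_le_add_card_filter_add_one_le B x
  constructor <;> rintro ⟨hB, h⟩ <;> refine ⟨hB, ?_⟩ <;> have := hB.2.1 <;> omega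

/-- The `k`-th smallest element of a basis with at most `j` elements `≤ x` is at least
`x + k - j`. -/
def liftLowerEnds (s : ℕ → ℕ) (x j : ℕ) : ℕ → ℕ :=
  fun k => if k ≤ j then s k else max (s k) (x + k - j)

/-- The `k`-th smallest element of a basis with at least `j` elements `≤ x` is at most
`x + k - j`. -/
def capUpperEnds (t : ℕ → ℕ) (x j : ℕ) : ℕ → ℕ :=
  fun k => if k ≤ j then min (t k) (x + k - j) else t k

theorem mem_transBases_of_card_filter {m r : ℕ} {s t : ℕ → ℕ} {B : Finset ℕ}
    (hB : B ⊆ Icc 1 (m + r)) (hcard : #B = r)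
    (hcount : ∀ k ∈ Icc 1 r, #{b ∈ B | b < s k} < k ∧ k ≤ #{b ∈ B | b ≤ t k}) :
    B ∈ transBases m r s t := by
  refine ⟨hB, hcard, fun b => #{x ∈ B | x ≤ b}, fun b hb b' hb' h => ?_, fun b hb => ?_⟩
  · by_contra hne
    rcases Nat.lt_or_gt_of_ne hne with hlt | hlt
    · exact (card_filter_le_lt_of_lt hlt hb').ne h
    · exact (card_filter_le_lt_of_lt hlt hb).ne' h
  have hpos : 0 < #{x ∈ B | x ≤ b} := card_pos.2 ⟨b, by simp [hb]⟩
  have hle : #{x ∈ B | x ≤ b} ≤ r := hcard ▸ card_filter_le _ _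
  have hk := hcount _ (mem_Icc.2 ⟨hpos, hle⟩)
  refine ⟨mem_Icc.2 ⟨hpos, hle⟩, ?_, ?_⟩
  · by_contra! h
    have := card_le_card fun x (hx : x ∈ {x ∈ B | x ≤ b}) =>
      mem_filter.2 ⟨(mem_filter.1 hx).1, (mem_filter.1 hx).2.trans_lt h⟩
    omega
  · by_contra! h
    have := card_filter_le_lt_of_lt h hb
    omega

namespace IsIntervalPres

variable {m r : ℕ} {s t : ℕ → ℕ}

theorem add_le (hst : IsIntervalPres m r s t) {k l : ℕ} (hk : 1 ≤ k) (hkl : k ≤ l) (hl : l ≤ r) :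
    s k + l ≤ s l + k ∧ t k + l ≤ t l + k := by
  induction l, hkl using Nat.le_induction with
  | base => omega
  | succ l hkl ih =>
    have := ih (by omega)
    have := hst.2 l (by omega) (by omega)
    omega

theorem card_filter_of_mem_transBases (hst : IsIntervalPres m r s t) {B : Finset ℕ}
    (hB : B ∈ transBases m r s t) {k : ℕ} (hk : k ∈ Icc 1 r) :
    #{b ∈ B | b < s k} < k ∧ k ≤ #{b ∈ B | b ≤ t k} := by
  obtain ⟨-, hcard, f, hf, hfB⟩ := hB
  rw [mem_Icc] at hk
  have hlow : #{b ∈ B | b < s k} ≤ #(Ico 1 k) := by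
    refine card_le_card_of_injOn f (fun b hb => ?_) (hf.mono (coe_subset.2 (filter_subset _ _)))
    simp only [mem_coe, mem_filter, mem_Ico] at hb ⊢
    obtain ⟨hfb, hsb, -⟩ := hfB b hb.1
    rw [mem_Icc] at hfb
    by_contra h
    have := (hst.add_le hk.1 (not_lt.1 (fun h' => h ⟨hfb.1, h'⟩)) hfb.2).1
    omega
  have hhigh : #{b ∈ B | ¬b ≤ t k} ≤ #(Ioc k r) := by
    refine card_le_card_of_injOn f (fun b hb => ?_) (hf.mono (coe_subset.2 (filter_subset _ _)))
    simp only [mem_coe, mem_filter, mem_Ioc] at hb ⊢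
    obtain ⟨hfb, -, hbt⟩ := hfB b hb.1
    rw [mem_Icc] at hfb
    by_contra h
    have := (hst.add_le hfb.1 (not_lt.1 (fun h' => h ⟨h', hfb.2⟩)) hk.2).2
    omega
  have := card_filter_add_card_filter_not (s := B) (· ≤ t k)
  rw [Nat.card_Ico] at hlow
  rw [Nat.card_Ioc] at hhigh
  omega

theorem image_mem_transBases (hst : IsIntervalPres m r s t) {σ : ℕ → ℕ}
    (hσ : Set.InjOn σ (Icc 1 r)) (hσst : ∀ k ∈ Icc 1 r, s k ≤ σ k ∧ σ k ≤ t k) :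
    (Icc 1 r).image σ ∈ transBases m r s t := by
  refine ⟨fun b hb => ?_, by rw [card_image_of_injOn hσ, Nat.card_Icc, Nat.add_sub_cancel],
    Function.invFunOn σ (Icc 1 r), ?_, fun b hb => ?_⟩
  · obtain ⟨k, hk, rfl⟩ := mem_image.1 hb
    have := hσst k hk
    have := hst.1 k (mem_Icc.1 hk).1 (mem_Icc.1 hk).2
    simp only [mem_Icc]
    omega
  · rw [coe_image]
    exact Function.invFunOn_injOn_image σ _
  · obtain ⟨k, hk, rfl⟩ := mem_image.1 hb
    rw [hσ.leftInvOn_invFunOn (mem_coe.2 hk)]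
    exact ⟨hk, hσst k hk⟩

theorem strictMonoOn (hst : IsIntervalPres m r s t) :
    StrictMonoOn s (Icc 1 r) ∧ StrictMonoOn t (Icc 1 r) := by
  refine ⟨fun k hk l hl hkl => ?_, fun k hk l hl hkl => ?_⟩ <;>
  · have := hst.add_le (mem_Icc.1 hk).1 hkl.le (mem_Icc.1 hl).2
    omega

theorem exists_mem_transBases_lt_card_filter_le (hst : IsIntervalPres m r s t) {j x : ℕ}
    (hjr : j < r) (hx : s (j + 1) ≤ x) :
    ∃ B ∈ transBases m r s t, j < #{b ∈ B | b ≤ x} := by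
  refine ⟨_, hst.image_mem_transBases hst.strictMonoOn.1.injOn
    fun k hk => ⟨le_rfl, (hst.1 k (mem_Icc.1 hk).1 (mem_Icc.1 hk).2).2.2⟩, ?_⟩
  calc j < #((Icc 1 (j + 1)).image s) := by
        rw [card_image_of_injOn
          (hst.strictMonoOn.1.injOn.mono (coe_subset.2 (Icc_subset_Icc le_rfl hjr)))]
        simp
    _ ≤ _ := card_le_card fun b hb => by
        obtain ⟨k, hk, rfl⟩ := mem_image.1 hb
        rw [mem_Icc] at hk
        have := (hst.add_le hk.1 hk.2 (by omega)).1
        simp only [mem_filter, mem_image, mem_Icc]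
        exact ⟨⟨k, ⟨hk.1, by omega⟩, rfl⟩, by omega⟩

theorem exists_mem_transBases_card_filter_le_lt (hst : IsIntervalPres m r s t) {j x : ℕ}
    (hj : 1 ≤ j) (hx : x < t j) :
    ∃ B ∈ transBases m r s t, #{b ∈ B | b ≤ x} < j := by
  refine ⟨_, hst.image_mem_transBases hst.strictMonoOn.2.injOn
    fun k hk => ⟨(hst.1 k (mem_Icc.1 hk).1 (mem_Icc.1 hk).2).2.2, le_rfl⟩, ?_⟩
  calc #{b ∈ (Icc 1 r).image t | b ≤ x} ≤ #((Ico 1 j).image t) := card_le_card fun b hb => by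
        obtain ⟨hb, hbx⟩ := mem_filter.1 hb
        obtain ⟨k, hk, rfl⟩ := mem_image.1 hb
        rw [mem_Icc] at hk
        refine mem_image.2 ⟨k, mem_Ico.2 ⟨hk.1, ?_⟩, rfl⟩
        by_contra! hjk
        have := (hst.add_le hj hjk hk.2).2
        omega
    _ ≤ #(Ico 1 j) := card_image_le
    _ < j := by
      rw [Nat.card_Ico]
      omega

theorem interleave_mem_transBases (hst : IsIntervalPres m r s t) {B B' : Finset ℕ}
    (hB : B ∈ transBases m r s t) (hB' : B' ∈ transBases m r s t) {p : ℕ} (hp : p ≤ 1) :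
    interleave B B' p ∈ transBases m r s t := by
  have hsub : interleave B B' p ⊆ Icc 1 (m + r) :=
    (filter_subset _ _).trans (union_subset hB.1 hB'.1)
  refine mem_transBases_of_card_filter hsub ?_ fun k hk => ?_
  · have := card_filter_lt_interleave B B' hp (m + r + 1)
    rw [filter_lt_add_one_eq_self hsub, filter_lt_add_one_eq_self hB.1,
      filter_lt_add_one_eq_self hB'.1, hB.2.1, hB'.2.1] at this
    omega
  · have h₁ := card_filter_lt_interleave B B' hp (s k)
    have h₂ := card_filter_lt_interleave B B' hp (t k + 1)
    simp only [Nat.lt_add_one_iff] at h₂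
    have := hst.card_filter_of_mem_transBases hB hk
    have := hst.card_filter_of_mem_transBases hB' hk
    omega

theorem exchangeAt_transBases (hst : IsIntervalPres m r s t) (x j : ℕ) :
    ExchangeAt (prefixSum x) j (indVec '' transBases m r s t) := by
  rintro _ ⟨B, hB, rfl⟩ _ ⟨B', hB', rfl⟩ hB'j hjB
  simp only [prefixSum_indVec, Nat.cast_lt] at hB'j hjB ⊢
  have h₀ := card_filter_lt_interleave B B' (p := 0) zero_le_one (x + 1)
  have h₁ := card_filter_lt_interleave B B' (p := 1) le_rfl (x + 1)
  simp only [Nat.lt_add_one_iff] at h₀ h₁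
  refine ⟨_, ⟨_, hst.interleave_mem_transBases hB hB' zero_le_one, rfl⟩,
    _, ⟨_, hst.interleave_mem_transBases hB hB' le_rfl, rfl⟩, (indVec_interleave B B').symm,
    ?_, ?_⟩ <;>
  simp only [Set.mem_Ioo, prefixSum_indVec, Nat.cast_lt] <;> omega

theorem basesPoly_sep_le (hst : IsIntervalPres m r s t) (x j : ℕ) :
    basesPoly {B ∈ transBases m r s t | #{b ∈ B | b ≤ x} ≤ j} =
      {p ∈ basesPoly (transBases m r s t) | prefixSum x p ≤ j} := by
  rw [basesPoly_eq_convexHull_image, basesPoly_eq_convexHull_image,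
    ← (hst.exchangeAt_transBases x j).convexHull_sep_le (transBases_finite.image _)]
  exact congrArg _ (image_indVec_sep (Q := (· ≤ (j : ℝ))) fun _ => Nat.cast_le.symm)

theorem basesPoly_sep_ge (hst : IsIntervalPres m r s t) (x j : ℕ) :
    basesPoly {B ∈ transBases m r s t | j ≤ #{b ∈ B | b ≤ x}} =
      {p ∈ basesPoly (transBases m r s t) | j ≤ prefixSum x p} := by
  rw [basesPoly_eq_convexHull_image, basesPoly_eq_convexHull_image,
    ← (hst.exchangeAt_transBases x j).convexHull_sep_ge (transBases_finite.image _)]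
  exact congrArg _ (image_indVec_sep (Q := ((j : ℝ) ≤ ·)) fun _ => Nat.cast_le.symm)

theorem isIntervalPres_liftLowerEnds (hst : IsIntervalPres m r s t) {x j : ℕ}
    (hx : x + 1 < t (j + 1)) : IsIntervalPres m r (liftLowerEnds s x j) t := by
  refine ⟨fun k hk hkr => ?_, fun k hk hkr => ?_⟩
  · have := hst.1 k hk hkr
    by_cases hkj : k ≤ j
    · simpa only [liftLowerEnds, if_pos hkj] using this
    · have := (hst.add_le (k := j + 1) (by omega) (by omega) hkr).2
      simp only [liftLowerEnds, if_neg hkj]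
      omega
  · have := hst.2 k hk hkr
    simp only [liftLowerEnds]
    split_ifs <;> omega

theorem sep_card_filter_le_eq_transBases_liftLowerEnds (hst : IsIntervalPres m r s t)
    {x j : ℕ} (hjr : j < r) (hx : x + 1 < t (j + 1)) :
    {B ∈ transBases m r s t | #{b ∈ B | b ≤ x} ≤ j} = transBases m r (liftLowerEnds s x j) t := by
  have hst₁ := hst.isIntervalPres_liftLowerEnds hx
  refine Set.Subset.antisymm ?_ fun B hB =>
    ⟨transBases_mono (fun k _ => ?_) (fun _ _ => le_rfl) hB, ?_⟩
  · rintro B ⟨hB, hBx⟩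
    refine mem_transBases_of_card_filter hB.1 hB.2.1 fun k hk =>
      ⟨?_, (hst.card_filter_of_mem_transBases hB hk).2⟩
    have hk := (hst.card_filter_of_mem_transBases hB hk).1
    have hgap : #{b ∈ B | b < x + k - j} ≤ #{b ∈ B | b ≤ x} + #(Ioo x (x + k - j)) :=
      (card_le_card fun b hb => ?_).trans (card_union_le _ _)
    · rw [Nat.card_Ioo] at hgap
      by_cases hkj : k ≤ j
      · simpa only [liftLowerEnds, if_pos hkj] using hk
      · simp only [liftLowerEnds, if_neg hkj]
        rcases le_total (s k) (x + k - j) with h | h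
        · rw [max_eq_right h]
          omega
        · rwa [max_eq_left h]
    · rw [mem_filter] at hb
      rcases le_or_gt b x with h | h
      · exact mem_union_left _ (mem_filter.2 ⟨hb.1, h⟩)
      · exact mem_union_right _ (mem_Ioo.2 ⟨h, hb.2⟩)
  · simp only [liftLowerEnds]
    split_ifs <;> omega
  · have := (hst₁.card_filter_of_mem_transBases hB (k := j + 1) (mem_Icc.2 ⟨by omega, hjr⟩)).1
    have hle := card_le_card (s := {b ∈ B | b ≤ x})
      (t := {b ∈ B | b < liftLowerEnds s x j (j + 1)}) fun b hb => by
        simp only [mem_filter, liftLowerEnds, if_neg (by omega : ¬j + 1 ≤ j), lt_max_iff]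
          at hb ⊢
        exact ⟨hb.1, Or.inr (by omega)⟩
    omega

theorem isIntervalPres_capUpperEnds (hst : IsIntervalPres m r s t) {x j : ℕ} (hjr : j ≤ r)
    (hx : s j ≤ x) : IsIntervalPres m r s (capUpperEnds t x j) := by
  refine ⟨fun k hk hkr => ?_, fun k hk hkr => ?_⟩ <;> have := hst.1 k hk (by omega)
  · by_cases hkj : k ≤ j
    · have := (hst.add_le hk hkj hjr).1
      simp only [capUpperEnds, if_pos hkj]
      omega
    · simpa only [capUpperEnds, if_neg hkj] using this
  · have := hst.2 k hk hkr
    by_cases hkj : k ≤ j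
    · have := (hst.add_le hk hkj hjr).1
      simp only [capUpperEnds]
      split_ifs <;> omega
    · simp only [capUpperEnds]
      split_ifs <;> omega

theorem sep_le_card_filter_eq_transBases_capUpperEnds (hst : IsIntervalPres m r s t)
    {x j : ℕ} (hj : 1 ≤ j) (hjr : j ≤ r) (hx : s j ≤ x) :
    {B ∈ transBases m r s t | j ≤ #{b ∈ B | b ≤ x}} = transBases m r s (capUpperEnds t x j) := by
  have hst₂ := hst.isIntervalPres_capUpperEnds hjr hx
  refine Set.Subset.antisymm ?_ fun B hB =>
    ⟨transBases_mono (fun _ _ => le_rfl) (fun k _ => ?_) hB, ?_⟩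
  · rintro B ⟨hB, hBx⟩
    refine mem_transBases_of_card_filter hB.1 hB.2.1 fun k hk =>
      ⟨(hst.card_filter_of_mem_transBases hB hk).1, ?_⟩
    have hkt := (hst.card_filter_of_mem_transBases hB hk).2
    by_cases hkj : k ≤ j
    · have := (hst.add_le (mem_Icc.1 hk).1 hkj hjr).1
      have hgap : #{b ∈ B | b ≤ x} ≤ #{b ∈ B | b ≤ x + k - j} + #(Ioc (x + k - j) x) :=
        (card_le_card fun b hb => ?_).trans (card_union_le _ _)
      · rw [Nat.card_Ioc] at hgap
        simp only [capUpperEnds, if_pos hkj]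
        rcases le_total (t k) (x + k - j) with h | h
        · rwa [min_eq_left h]
        · rw [min_eq_right h]
          omega
      · rw [mem_filter] at hb
        rcases le_or_gt b (x + k - j) with h | h
        · exact mem_union_left _ (mem_filter.2 ⟨hb.1, h⟩)
        · exact mem_union_right _ (mem_Ioc.2 ⟨h, hb.2⟩)
    · simpa only [capUpperEnds, if_neg hkj] using hkt
  · simp only [capUpperEnds]
    split_ifs <;> omega
  · refine (hst₂.card_filter_of_mem_transBases hB (mem_Icc.2 ⟨hj, hjr⟩)).2.trans
      (card_le_card fun b hb => ?_)
    simp only [mem_filter, capUpperEnds, if_pos le_rfl, le_min_iff] at hb ⊢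
    exact ⟨hb.1, by omega⟩

end IsIntervalPres

/-- Alfonsín–Chatelain split for lattice path matroids: let `M[P,Q]` be the
lattice path matroid on `{1,…,m+r}` with interval presentation `N_k = [s k, t k]`.  If
`s j < x < t j` and `s (j+1) < x+1 < t (j+1)` for some `1 ≤ j ≤ r-1`, then with
`𝔅₁ = {B basis : |B ∩ {1,…,x}| ≤ j}` and `𝔅₂ = {B basis : |B ∩ {x+1,…,m+r}| ≤ r-j}`,
the polytope `P(M[P,Q])` is the union of the two full-dimensional matroid polytopes
`P(M₁)`, `P(M₂)`, neither equal to it, intersecting in a common face — a nontrivial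
hyperplane split — and `M₁`, `M₂` are again lattice path matroids. -/
theorem stmt15 (m r : ℕ) (s t : ℕ → ℕ) (hst : IsIntervalPres m r s t)
    (x j : ℕ) (hj1 : 1 ≤ j) (hj2 : j ≤ r - 1)
    (h1 : s j < x) (h2 : x < t j) (h3 : s (j + 1) < x + 1) (h4 : x + 1 < t (j + 1)) :
    let 𝔅 : Set (Finset ℕ) := transBases m r s t
    let 𝔅₁ : Set (Finset ℕ) := {B ∈ 𝔅 | (B.filter (· ≤ x)).card ≤ j}
    let 𝔅₂ : Set (Finset ℕ) := {B ∈ 𝔅 | (B.filter (fun b => x + 1 ≤ b)).card ≤ r - j}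
    basesPoly 𝔅 = basesPoly 𝔅₁ ∪ basesPoly 𝔅₂ ∧
    basesPoly 𝔅₁ ≠ basesPoly 𝔅 ∧ basesPoly 𝔅₂ ≠ basesPoly 𝔅 ∧
    Module.finrank ℝ (affineSpan ℝ (basesPoly 𝔅₁)).direction
      = Module.finrank ℝ (affineSpan ℝ (basesPoly 𝔅)).direction ∧
    Module.finrank ℝ (affineSpan ℝ (basesPoly 𝔅₂)).direction
      = Module.finrank ℝ (affineSpan ℝ (basesPoly 𝔅)).direction ∧
    IsExtreme ℝ (basesPoly 𝔅₁) (basesPoly 𝔅₁ ∩ basesPoly 𝔅₂) ∧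
    IsExtreme ℝ (basesPoly 𝔅₂) (basesPoly 𝔅₁ ∩ basesPoly 𝔅₂) ∧
    (∃ s₁ t₁, IsIntervalPres m r s₁ t₁ ∧ 𝔅₁ = transBases m r s₁ t₁) ∧
    (∃ s₂ t₂, IsIntervalPres m r s₂ t₂ ∧ 𝔅₂ = transBases m r s₂ t₂) := by
  intro 𝔅 𝔅₁ 𝔅₂
  have hjr : j < r := by omega
  obtain ⟨B₁, hB₁, hB₁x⟩ := hst.exists_mem_transBases_card_filter_le_lt hj1 h2
  obtain ⟨B₂, hB₂, hB₂x⟩ :=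
    hst.exists_mem_transBases_lt_card_filter_le hjr (by omega : s (j + 1) ≤ x)
  have hP₁ : basesPoly 𝔅₁ = {p ∈ basesPoly 𝔅 | prefixSum x p ≤ j} := hst.basesPoly_sep_le x j
  have hP₂ : basesPoly 𝔅₂ = {p ∈ basesPoly 𝔅 | j ≤ prefixSum x p} := by
    rw [← hst.basesPoly_sep_ge]
    exact congrArg basesPoly (transBases_sep_card_filter_add_one_le x hjr.le)
  obtain ⟨hunion, hne₁, hne₂, hdir₁, hdir₂, hext₁, hext₂⟩ :=
    hyperplane_split (Q := basesPoly 𝔅) (convex_convexHull ℝ _) (prefixSum x) (c := j)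
      (q₁ := indVec B₁) (q₂ := indVec B₂)
      (subset_convexHull ℝ _ ⟨B₁, hB₁, rfl⟩) (subset_convexHull ℝ _ ⟨B₂, hB₂, rfl⟩)
      (by rw [prefixSum_indVec]; exact_mod_cast hB₁x)
      (by rw [prefixSum_indVec]; exact_mod_cast hB₂x)
  rw [hP₁, hP₂]
  exact ⟨hunion, hne₁, hne₂, by rw [hdir₁], by rw [hdir₂], hext₁, hext₂,
    ⟨_, _, hst.isIntervalPres_liftLowerEnds h4,
      hst.sep_card_filter_le_eq_transBases_liftLowerEnds hjr h4⟩,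
    ⟨_, _, hst.isIntervalPres_capUpperEnds hjr.le h1.le,
      (transBases_sep_card_filter_add_one_le x hjr.le).trans
        (hst.sep_le_card_filter_eq_transBases_capUpperEnds hj1 hjr.le h1.le)⟩⟩
end

section
/- The normalized volume of the border strip matroid polytope P(S(p)) equals f_{S(p)}, the number of standard Young tableaux of border strip shape S(p); equivalently, it equals the number of permutations w of {1,...,n-1} such that w^{-1} has descent at position i exactly when the (i+1)-st box of the border strip lies above the i-th box (i.e., step i+1 of p is a specified step type). -/
/-!
Stanley's map `x ↦ (frac (x₁ + ⋯ + x_{k+1}))_k` is, on the polytope, the affine map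
`x ↦ (x₁ + ⋯ + x_{k+1} - d_{k+1})_k`, whose linear part is unitriangular and hence volume
preserving. It carries the polytope onto the region of the unit cube `[0,1]^m` (`m = n - 1`)
where consecutive coordinates decrease at the north steps of `p` and increase at the others. Up
to a null set the cube is the disjoint union of the `m!` congruent order simplices
`{t_{σ 0} < ⋯ < t_{σ (m-1)}}`, and that region is the union of those whose `σ⁻¹` has the
prescribed descent set; so `m!` times its volume counts these permutations.
-/

open Finset MeasureTheory

namespace BorderStrip

variable {m : ℕ}

def unitCube (m : ℕ) : Set (Fin m → ℝ) := Set.univ.pi fun _ => Set.Icc 0 1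

def orderCell (σ : Equiv.Perm (Fin m)) : Set (Fin m → ℝ) :=
  {t | t ∈ unitCube m ∧ StrictMono (t ∘ σ)}

lemma volume_unitCube : volume (unitCube m) = 1 := by
  rw [unitCube, volume_pi_pi]
  simp

lemma measurableSet_orderCell (σ : Equiv.Perm (Fin m)) : MeasurableSet (orderCell σ) :=
  (MeasurableSet.univ_pi fun _ => measurableSet_Icc).inter
    (Measurable.setOf (by simp only [Function.comp_apply]; fun_prop))

lemma volume_setOf_not_injective : volume {t : Fin m → ℝ | ¬ Function.Injective t} = 0 := by
  have hcover : {t : Fin m → ℝ | ¬ Function.Injective t} =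
      ⋃ (i : Fin m) (j : Fin m) (_ : i ≠ j), (LinearMap.ker
        ((LinearMap.proj i : (Fin m → ℝ) →ₗ[ℝ] ℝ) - LinearMap.proj j) : Set (Fin m → ℝ)) := by
    ext t
    simp [Function.Injective, sub_eq_zero, and_comm]
  rw [hcover]
  refine measure_iUnion_null fun i => measure_iUnion_null fun j => measure_iUnion_null fun hij => ?_
  refine Measure.addHaar_submodule _ _ fun htop => ?_
  have := htop ▸ Submodule.mem_top (x := Pi.single i (1 : ℝ))
  simp [hij.symm] at this

variable {σ : Equiv.Perm (Fin m)} {t : Fin m → ℝ}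

lemma injective_of_mem_orderCell (ht : t ∈ orderCell σ) : Function.Injective t := by
  simpa using ht.2.injective.comp σ.symm.injective

lemma le_iff_of_mem_orderCell (ht : t ∈ orderCell σ) (a b : Fin m) :
    t a ≤ t b ↔ σ⁻¹ a ≤ σ⁻¹ b := by
  simpa using ht.2.le_iff_le (a := σ⁻¹ a) (b := σ⁻¹ b)

lemma exists_mem_orderCell (ht : t ∈ unitCube m) (hinj : Function.Injective t) :
    ∃ σ, t ∈ orderCell σ :=
  ⟨Tuple.sort t, ht,
    (Tuple.monotone_sort t).strictMono_of_injective (hinj.comp (Equiv.injective _))⟩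

lemma pairwise_disjoint_orderCell :
    Pairwise (Function.onFun Disjoint (orderCell : Equiv.Perm (Fin m) → Set (Fin m → ℝ))) := by
  intro σ τ hne
  refine Set.disjoint_left.2 fun t hσ hτ => hne (Equiv.ext fun i => ?_)
  exact injective_of_mem_orderCell hσ
    (congrFun (Tuple.unique_monotone hσ.2.monotone hτ.2.monotone) i)

lemma volume_orderCell (σ : Equiv.Perm (Fin m)) :
    volume (orderCell σ) = volume (orderCell (1 : Equiv.Perm (Fin m))) := by
  set e := MeasurableEquiv.piCongrLeft (fun _ : Fin m => ℝ) σ.symm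
  have he : ∀ t, e t = t ∘ σ := fun t => funext fun i => by
    simpa using MeasurableEquiv.piCongrLeft_apply_apply (β := fun _ : Fin m => ℝ) σ.symm t (σ i)
  have hpre : e ⁻¹' orderCell 1 = orderCell σ := by
    ext t
    simp only [Set.mem_preimage, he, orderCell, unitCube, Set.mem_ofPred_eq, Set.mem_univ_pi]
    exact and_congr_left fun _ => ⟨fun h i => by simpa using h (σ.symm i), fun h i => h (σ i)⟩
  rw [← hpre]
  exact (volume_measurePreserving_piCongrLeft _ σ.symm).measure_preimage
    (measurableSet_orderCell 1).nullMeasurableSet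

theorem volume_eq_card_mul_volume_orderCell {R : Set (Fin m → ℝ)}
    {P : Equiv.Perm (Fin m) → Prop} (hR : R ⊆ unitCube m)
    (hP : ∀ σ, ∀ t ∈ orderCell σ, t ∈ R ↔ P σ) :
    volume R = Nat.card {σ // P σ} * volume (orderCell (1 : Equiv.Perm (Fin m))) := by
  classical
  have hcells : R \ {t | ¬ Function.Injective t} = ⋃ σ : {σ // P σ}, orderCell σ.1 := by
    ext t
    simp only [Set.mem_sdiff, Set.mem_ofPred_eq, not_not, Set.mem_iUnion, Subtype.exists,
      exists_prop]
    constructor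
    · rintro ⟨htR, hinj⟩
      obtain ⟨σ, hσ⟩ := exists_mem_orderCell (hR htR) hinj
      exact ⟨σ, (hP σ t hσ).1 htR, hσ⟩
    · rintro ⟨σ, hPσ, hσ⟩
      exact ⟨(hP σ t hσ).2 hPσ, injective_of_mem_orderCell hσ⟩
  rw [← measure_sdiff_null volume_setOf_not_injective, hcells,
    measure_iUnion (pairwise_disjoint_orderCell.comp_of_injective Subtype.val_injective)
      fun σ => measurableSet_orderCell σ.1, tsum_fintype,
    Finset.sum_congr rfl fun σ _ => volume_orderCell σ.1, Finset.sum_const, Finset.card_univ,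
    nsmul_eq_mul, Nat.card_eq_fintype_card]

theorem factorial_mul_volume_orderCell_one :
    (m.factorial : ENNReal) * volume (orderCell (1 : Equiv.Perm (Fin m))) = 1 := by
  have h := volume_eq_card_mul_volume_orderCell (R := unitCube m) (P := fun _ => True) subset_rfl
    fun σ t ht => iff_true_intro ht.1
  rwa [volume_unitCube, Nat.card_congr (Equiv.subtypeUnivEquiv fun _ => trivial),
    Nat.card_perm, Nat.card_fin, eq_comm] at h

theorem factorial_mul_volume_eq_card {R : Set (Fin m → ℝ)}
    {P : Equiv.Perm (Fin m) → Prop} (hR : R ⊆ unitCube m)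
    (hP : ∀ σ, ∀ t ∈ orderCell σ, t ∈ R ↔ P σ) :
    (m.factorial : ENNReal) * volume R = Nat.card {σ // P σ} := by
  rw [volume_eq_card_mul_volume_orderCell hR hP, mul_left_comm,
    factorial_mul_volume_orderCell_one, mul_one]

def descentRegion (m : ℕ) (desc : ℕ → Prop) : Set (Fin m → ℝ) :=
  {t | t ∈ unitCube m ∧ ∀ (i : Fin m) (h : (i : ℕ) + 1 < m),
    (desc i → t ⟨i + 1, h⟩ ≤ t i) ∧ (¬ desc i → t i ≤ t ⟨i + 1, h⟩)}

lemma measurableSet_descentRegion (desc : ℕ → Prop) :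
    MeasurableSet (descentRegion m desc) :=
  (MeasurableSet.univ_pi fun _ => measurableSet_Icc).inter (Measurable.setOf (by fun_prop))

def HasInverseDescents (desc : ℕ → Prop) (w : Equiv.Perm (Fin m)) : Prop :=
  ∀ (i : Fin m) (h : (i : ℕ) + 1 < m), w⁻¹ ⟨i + 1, h⟩ < w⁻¹ i ↔ desc i

lemma imp_le_and_not_imp_le_iff {α : Type*} [LinearOrder α] {a b : α} (hab : a ≠ b) (p : Prop) :
    ((p → b ≤ a) ∧ (¬ p → a ≤ b)) ↔ (b < a ↔ p) := by
  by_cases hp : p <;> simp [hp, hab, hab.symm, le_iff_lt_or_eq, not_lt]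

lemma mem_descentRegion_iff {desc : ℕ → Prop} (ht : t ∈ orderCell σ) :
    t ∈ descentRegion m desc ↔ HasInverseDescents desc σ := by
  simp only [descentRegion, HasInverseDescents, Set.mem_ofPred_eq, le_iff_of_mem_orderCell ht,
    and_iff_right ht.1]
  refine forall₂_congr fun i h => imp_le_and_not_imp_le_iff ?_ _
  exact σ⁻¹.injective.ne (by simp [Fin.ext_iff])

theorem factorial_mul_volume_descentRegion (desc : ℕ → Prop) :
    (m.factorial : ENNReal) * volume (descentRegion m desc) =
      Nat.card {w : Equiv.Perm (Fin m) // HasInverseDescents desc w} :=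
  factorial_mul_volume_eq_card (fun _ ht => ht.1) fun _ _ ht => mem_descentRegion_iff ht

def partialSum (x : Fin m → ℝ) (i : ℕ) : ℝ :=
  ∑ j ∈ univ.filter (fun j : Fin m => (j : ℕ) < i), x j

lemma partialSum_zero (x : Fin m → ℝ) : partialSum x 0 = 0 := by
  simp [partialSum]

lemma partialSum_succ (x : Fin m → ℝ) (k : Fin m) :
    partialSum x (k + 1) = partialSum x k + x k := by
  have : univ.filter (fun j : Fin m => (j : ℕ) < k + 1) =
      insert k (univ.filter fun j : Fin m => (j : ℕ) < k) := by
    ext j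
    simp only [mem_filter, mem_univ, true_and, mem_insert, Fin.ext_iff]
    omega
  rw [partialSum, this, sum_insert (by simp), add_comm]
  rfl

theorem measurePreserving_mulVec {ι : Type*} [Fintype ι] [DecidableEq ι] {M : Matrix ι ι ℝ}
    (hM : |M.det| = 1) : MeasurePreserving M.mulVec volume volume := by
  refine ⟨(Matrix.toLin' M).continuous_on_pi.measurable, ?_⟩
  change Measure.map (Matrix.toLin' M) volume = volume
  rw [Real.map_matrix_volume_pi_eq_smul_volume_pi, abs_inv, hM, inv_one, ENNReal.ofReal_one,
    one_smul]
  exact fun h => by simp [h] at hM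

def partialSumMatrix (m : ℕ) : Matrix (Fin m) (Fin m) ℝ :=
  Matrix.of fun k j => if j ≤ k then 1 else 0

lemma det_partialSumMatrix : (partialSumMatrix m).det = 1 := by
  rw [Matrix.det_of_isLowerTriangular _ fun i j (hij : i < j) => by simp [partialSumMatrix, hij]]
  simp [partialSumMatrix]

lemma partialSumMatrix_mulVec (x : Fin m → ℝ) (k : Fin m) :
    (partialSumMatrix m).mulVec x k = partialSum x (k + 1) := by
  simp only [partialSumMatrix, Matrix.mulVec, dotProduct, Matrix.of_apply, ite_mul, one_mul,
    zero_mul, partialSum, ← sum_filter, Fin.le_iff_val_le_val, Nat.lt_succ_iff]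

def stanleyMap (d : ℕ → ℕ) (x : Fin m → ℝ) : Fin m → ℝ :=
  fun k => partialSum x (k + 1) - d (k + 1)

lemma measurePreserving_stanleyMap (d : ℕ → ℕ) :
    MeasurePreserving (stanleyMap (m := m) d) volume volume := by
  have h : stanleyMap (m := m) d =
      (· - fun k : Fin m => (d (k + 1) : ℝ)) ∘ (partialSumMatrix m).mulVec :=
    funext fun x => funext fun k => by simp [stanleyMap, partialSumMatrix_mulVec]
  rw [h]
  exact (measurePreserving_sub_right volume _).comp
    (measurePreserving_mulVec (by rw [det_partialSumMatrix, abs_one]))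

def borderStripPolytope (m : ℕ) (d : ℕ → ℕ) : Set (Fin m → ℝ) :=
  {x | (∀ i, 0 ≤ x i ∧ x i ≤ 1) ∧
    ∀ i, 1 ≤ i → i ≤ m → (d i : ℝ) ≤ partialSum x i ∧ partialSum x i ≤ d i + 1}

section Polytope

variable {d : ℕ → ℕ} {x : Fin m → ℝ}

lemma stanleyMap_mem_unitCube_iff : stanleyMap d x ∈ unitCube m ↔
    ∀ i, 1 ≤ i → i ≤ m → (d i : ℝ) ≤ partialSum x i ∧ partialSum x i ≤ d i + 1 := by
  simp only [unitCube, Set.mem_univ_pi, Set.mem_Icc, stanleyMap, sub_nonneg,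
    sub_le_iff_le_add']
  refine ⟨fun h i hi him => ?_, fun h k => h (k + 1) (by omega) k.isLt⟩
  obtain ⟨k, rfl⟩ : ∃ k, i = k + 1 := ⟨i - 1, by omega⟩
  exact h ⟨k, by omega⟩

lemma apply_zero_eq_stanleyMap (hd1 : d 1 = 0) (h : 0 < m) :
    x ⟨0, h⟩ = stanleyMap d x ⟨0, h⟩ := by
  simp [stanleyMap, partialSum_succ x ⟨0, h⟩, partialSum_zero, hd1]

lemma apply_succ_eq_stanleyMap (k : Fin m) (h : (k : ℕ) + 1 < m) :
    x ⟨k + 1, h⟩ = stanleyMap d x ⟨k + 1, h⟩ - stanleyMap d x k + (d (k + 2) - d (k + 1)) := by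
  simp only [stanleyMap, partialSum_succ x ⟨k + 1, h⟩]
  ring

lemma apply_succ_mem_Icc_iff (hdstep : ∀ i, d (i + 1) = d i ∨ d (i + 1) = d i + 1)
    (hx : stanleyMap d x ∈ unitCube m) (k : Fin m) (h : (k : ℕ) + 1 < m) :
    (0 ≤ x ⟨k + 1, h⟩ ∧ x ⟨k + 1, h⟩ ≤ 1) ↔
      (d (k + 2) = d (k + 1) + 1 → stanleyMap d x ⟨k + 1, h⟩ ≤ stanleyMap d x k) ∧
      (¬ d (k + 2) = d (k + 1) + 1 → stanleyMap d x k ≤ stanleyMap d x ⟨k + 1, h⟩) := by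
  have hk := hx k trivial
  have hk₁ := hx ⟨k + 1, h⟩ trivial
  simp only [Set.mem_Icc] at hk hk₁
  rw [apply_succ_eq_stanleyMap (d := d) (x := x) k h]
  obtain hstep | hstep : d (k + 2) = d (k + 1) ∨ d (k + 2) = d (k + 1) + 1 := hdstep (k + 1)
  · have hflat : ¬ d (k + 2) = d (k + 1) + 1 := by omega
    simp only [hflat, IsEmpty.forall_iff, not_false_eq_true, forall_const, true_and]
    rw [hstep, sub_self, add_zero]
    exact ⟨fun hmem => by linarith [hmem.1], fun hle => ⟨by linarith, by linarith⟩⟩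
  · simp only [hstep, Nat.cast_add, Nat.cast_one, add_sub_cancel_left, forall_const,
      not_true_eq_false, IsEmpty.forall_iff, and_true]
    exact ⟨fun hmem => by linarith [hmem.2], fun hle => ⟨by linarith, by linarith⟩⟩

theorem stanleyMap_preimage_descentRegion (hd1 : d 1 = 0)
    (hdstep : ∀ i, d (i + 1) = d i ∨ d (i + 1) = d i + 1) :
    stanleyMap d ⁻¹' descentRegion m (fun i => d (i + 2) = d (i + 1) + 1) =
      borderStripPolytope m d := by
  ext x
  simp only [Set.mem_preimage, descentRegion, borderStripPolytope, Set.mem_ofPred_eq]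
  rw [← stanleyMap_mem_unitCube_iff]
  refine ⟨fun ⟨hx, hpat⟩ => ⟨fun ⟨i, hi⟩ => ?_, hx⟩, fun ⟨hx01, hx⟩ => ⟨hx, fun k h => ?_⟩⟩
  · cases i with
    | zero => rw [apply_zero_eq_stanleyMap (x := x) hd1 hi]; exact hx ⟨0, hi⟩ trivial
    | succ k => exact (apply_succ_mem_Icc_iff hdstep hx ⟨k, by omega⟩ hi).2 (hpat _ hi)
  · exact (apply_succ_mem_Icc_iff hdstep hx k h).1 (hx01 _)

theorem factorial_mul_volume_borderStripPolytope (hd1 : d 1 = 0)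
    (hdstep : ∀ i, d (i + 1) = d i ∨ d (i + 1) = d i + 1) :
    (m.factorial : ENNReal) * volume (borderStripPolytope m d) =
      Nat.card {w : Equiv.Perm (Fin m) //
        HasInverseDescents (fun i => d (i + 2) = d (i + 1) + 1) w} := by
  rw [← stanleyMap_preimage_descentRegion hd1 hdstep,
    (measurePreserving_stanleyMap d).measure_preimage
      (measurableSet_descentRegion _).nullMeasurableSet,
    factorial_mul_volume_descentRegion]

end Polytope

end BorderStrip

theorem stmt17_general (n : ℕ) (d : ℕ → ℕ) (hd1 : d 1 = 0)
    (hdstep : ∀ i, d (i + 1) = d i ∨ d (i + 1) = d i + 1) :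
    ((n - 1).factorial : ENNReal) *
      volume {x : Fin (n - 1) → ℝ | (∀ i, 0 ≤ x i ∧ x i ≤ 1) ∧
        ∀ i, 1 ≤ i → i ≤ n - 1 →
          (d i : ℝ) ≤ ∑ j ∈ Finset.univ.filter (fun j : Fin (n - 1) => (j : ℕ) < i), x j ∧
          ∑ j ∈ Finset.univ.filter (fun j : Fin (n - 1) => (j : ℕ) < i), x j ≤ (d i : ℝ) + 1}
    = (Nat.card {w : Equiv.Perm (Fin (n - 1)) //
        ∀ (i : Fin (n - 1)) (h : (i : ℕ) + 1 < n - 1),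
          (w⁻¹ ⟨(i : ℕ) + 1, h⟩ < w⁻¹ i ↔ d ((i : ℕ) + 2) = d ((i : ℕ) + 1) + 1)} : ENNReal) :=
  BorderStrip.factorial_mul_volume_borderStripPolytope hd1 hdstep

/-- the normalized volume (unit simplex has volume 1, i.e. Lebesgue volume
times `(n-1)!`) of the border strip matroid polytope `P(S(p))` — realized, after projecting
out the last coordinate, as `{x ∈ [0,1]^{n-1} : d i ≤ x₁ + ⋯ + x_i ≤ d i + 1}` where
`d i` records the number of North steps among the first `i` boxes of the border strip —
equals `f_{S(p)}`, the number of standard Young tableaux of shape `S(p)`; equivalently, the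
number of permutations `w` of `{1,…,n-1}` such that `w⁻¹` has a descent at position `i`
exactly when the `(i+1)`-st box of the strip lies above the `i`-th box
(i.e. `d (i+1) = d i + 1`). -/
theorem stmt17 (n : ℕ) (hn : 2 ≤ n) (d : ℕ → ℕ) (hd1 : d 1 = 0)
    (hdstep : ∀ i, d (i + 1) = d i ∨ d (i + 1) = d i + 1) :
    ((n - 1).factorial : ENNReal) *
      volume {x : Fin (n - 1) → ℝ | (∀ i, 0 ≤ x i ∧ x i ≤ 1) ∧
        ∀ i, 1 ≤ i → i ≤ n - 1 →
          (d i : ℝ) ≤ ∑ j ∈ Finset.univ.filter (fun j : Fin (n - 1) => (j : ℕ) < i), x j ∧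
          ∑ j ∈ Finset.univ.filter (fun j : Fin (n - 1) => (j : ℕ) < i), x j ≤ (d i : ℝ) + 1}
    = (Nat.card {w : Equiv.Perm (Fin (n - 1)) //
        ∀ (i : Fin (n - 1)) (h : (i : ℕ) + 1 < n - 1),
          (w⁻¹ ⟨(i : ℕ) + 1, h⟩ < w⁻¹ i ↔ d ((i : ℕ) + 2) = d ((i : ℕ) + 1) + 1)} : ENNReal) :=
  stmt17_general n d hd1 hdstep
end
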